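/- arXiv:1202.5276 — 5 statements merged into one kernel-verified Lean document; each statement's English description precedes it below -/
import Mathlib

section
/- For every integer m ≥ 1 define c_t(m) = t^{m-1} m^{m-2} e^{-mt} / m! for t ≥ 0. Then c_0(m) = 1 if m = 1 and c_0(m) = 0 otherwise, and for every m ≥ 1 and every t ∈ [0,1), the function t ↦ c_t(m) is differentiable with ∂_t c_t(m) = (1/2) Σ_{m'=1}^{m-1} m'(m-m') c_t(m') c_t(m-m') − m c_t(m). (McLeod's solution of the pre-gelation Smoluchowski equation with multiplicative kernel.) -/
open Finset

lemma altsum : ∀ (j n : ℕ), j < n → ∀ x : ℝ,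
    ∑ k ∈ range (n+1), (-1:ℝ)^k * (n.choose k) * (x + k)^j = 0 := by
  intro j
  induction j using Nat.strong_induction_on with
  | _ j IH =>
    intro n hj x
    match j, hj with
    | 0, hj =>
      have h := Int.alternating_sum_range_choose_of_ne (by omega : n ≠ 0)
      have h2 : ((∑ i ∈ range (n+1), (-1:ℤ)^i * (n.choose i) : ℤ) : ℝ) = 0 := by rw [h]; simp
      push_cast at h2
      simpa using h2
    | (j+1), hj =>
      obtain ⟨m, rfl⟩ : ∃ m, n = m + 1 := ⟨n - 1, by omega⟩
      have split : ∀ k : ℕ, (-1:ℝ)^k * ((m+1).choose k) * (x + k)^(j+1)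
          = x * ((-1:ℝ)^k * ((m+1).choose k) * (x + k)^j)
            + (-1:ℝ)^k * ((m+1).choose k) * k * (x + k)^j := by
        intro k; ring
      rw [Finset.sum_congr rfl (fun k _ => split k), Finset.sum_add_distrib,
        ← Finset.mul_sum, IH j (by omega) (m+1) (by omega) x, mul_zero, zero_add]
      rw [Finset.sum_range_succ' (fun k => (-1:ℝ)^k * ((m+1).choose k) * k * (x + k)^j)]
      have term : ∀ k : ℕ, (-1:ℝ)^(k+1) * ((m+1).choose (k+1)) * ((k+1:ℕ):ℝ) * (x + ((k+1:ℕ):ℝ))^j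
          = -((m+1) * ((-1:ℝ)^k * (m.choose k) * ((x+1) + k)^j)) := by
        intro k
        have h1 : ((m+1).choose (k+1) : ℝ) * (k+1) = (m+1) * (m.choose k) := by
          have h0 : ((m+1) * m.choose k : ℕ) = ((m+1).choose (k+1) * (k+1) : ℕ) :=
            Nat.add_one_mul_choose_eq m k
          exact_mod_cast h0.symm
        push_cast
        have hb : x + ((k:ℝ)+1) = (x+1) + k := by ring
        rw [pow_succ, hb]
        linear_combination (-(-1:ℝ)^k * ((x+1) + k)^j) * h1
      rw [Finset.sum_congr rfl (fun k _ => term k)]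
      simp [← Finset.mul_sum, IH j (by omega) m (by omega) (x+1)]

lemma abelA : ∀ (n : ℕ) (x y : ℝ),
    ∑ k ∈ range (n+1), (n.choose k : ℝ) * (if k = 0 then 1 else x*(x+(k:ℝ))^(k-1))
      * (y + ((n-k : ℕ):ℝ))^(n-k) = (x+y+(n:ℝ))^n := by
  intro n
  induction n with
  | zero => intro x y; simp
  | succ n IH =>
    intro x y
    set xt : ℕ → ℝ := fun k => if k = 0 then 1 else x*(x+(k:ℝ))^(k-1) with hxt
    set F : ℝ → ℝ := fun z => (∑ k ∈ range (n+1+1), (((n+1).choose k : ℝ)) * xt k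
      * (z + ((n+1-k : ℕ):ℝ))^(n+1-k)) - (x+z+((n+1:ℕ):ℝ))^(n+1) with hF
    have hder : ∀ z, HasDerivAt F 0 z := by
      intro z
      have h1 : ∀ k ∈ range (n+1+1),
          HasDerivAt (fun w => (((n+1).choose k : ℝ)) * xt k * (w + ((n+1-k : ℕ):ℝ))^(n+1-k))
            ((((n+1).choose k : ℝ)) * xt k * (((n+1-k:ℕ):ℝ) * (z + ((n+1-k : ℕ):ℝ))^(n+1-k-1) * 1)) z :=
        fun k _ => (((hasDerivAt_id z).add_const _).pow _).const_mul _
      have h2 : HasDerivAt (fun w => (x+w+((n+1:ℕ):ℝ))^(n+1))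
          ((((n+1:ℕ)):ℝ) * (x+z+((n+1:ℕ):ℝ))^(n+1-1) * 1) z :=
        (((hasDerivAt_id z).const_add x).add_const _).pow _
      have h3 := (HasDerivAt.fun_sum h1).fun_sub h2
      have e0 : (∑ k ∈ range (n+1+1), (((n+1).choose k : ℝ)) * xt k
            * (((n+1-k:ℕ):ℝ) * (z + ((n+1-k : ℕ):ℝ))^(n+1-k-1) * 1))
          - ((((n+1:ℕ)):ℝ) * (x+z+((n+1:ℕ):ℝ))^(n+1-1) * 1) = 0 := by
        rw [Finset.sum_range_succ]
        have elast : (((n+1).choose (n+1) : ℝ)) * xt (n+1)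
            * (((n+1-(n+1):ℕ):ℝ) * (z + ((n+1-(n+1) : ℕ):ℝ))^(n+1-(n+1)-1) * 1) = 0 := by
          simp
        rw [elast, add_zero]
        have estep : ∀ k ∈ range (n+1), (((n+1).choose k : ℝ)) * xt k
            * (((n+1-k:ℕ):ℝ) * (z + ((n+1-k : ℕ):ℝ))^(n+1-k-1) * 1)
            = ((n+1:ℕ):ℝ) * ((n.choose k : ℝ) * xt k * ((z+1) + ((n-k : ℕ):ℝ))^(n-k)) := by
          intro k hk
          have hkn : k ≤ n := Nat.lt_succ_iff.mp (Finset.mem_range.mp hk)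
          have hcn : ((n+1).choose k * ((n-k)+1) : ℕ) = ((n+1) * n.choose k : ℕ) := by
            rw [show n-k+1 = n+1-k from by omega, ← Nat.choose_mul_succ_eq, Nat.mul_comm]
          have hc : ((n+1).choose k : ℝ) * (((n-k:ℕ):ℝ)+1) = ((n+1:ℕ):ℝ) * (n.choose k : ℝ) := by
            exact_mod_cast congrArg (fun t : ℕ => (t:ℝ)) hcn
          rw [show n+1-k-1 = n-k from by omega, show n+1-k = (n-k)+1 from by omega,
            Nat.cast_add, Nat.cast_one,
            show z + (((n-k:ℕ):ℝ)+1) = (z+1) + ((n-k:ℕ):ℝ) from by ring]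
          linear_combination (xt k * ((z+1) + ((n-k:ℕ):ℝ))^(n-k)) * hc
        rw [Finset.sum_congr rfl estep, ← Finset.mul_sum]
        have IH' : ∑ k ∈ range (n+1), (n.choose k : ℝ) * xt k * ((z+1) + ((n-k : ℕ):ℝ))^(n-k)
            = (x+(z+1)+(n:ℝ))^n := IH x (z+1)
        rw [IH', show n+1-1 = n from rfl,
          show x+(z+1)+(n:ℝ) = x+z+((n+1:ℕ):ℝ) from by push_cast; ring]
        ring
      rw [e0] at h3
      exact h3
    have hconst : F y = F (-x - ((n+1:ℕ):ℝ)) :=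
      is_const_of_deriv_eq_zero (fun z => (hder z).differentiableAt)
        (fun z => (hder z).deriv) y _
    have hval : F (-x - ((n+1:ℕ):ℝ)) = 0 := by
      simp only [hF]
      have h2 : (x + (-x - ((n+1:ℕ):ℝ)) + ((n+1:ℕ):ℝ)) ^ (n+1) = 0 := by
        rw [show x + (-x - ((n+1:ℕ):ℝ)) + ((n+1:ℕ):ℝ) = 0 from by ring]
        simp
      rw [h2, sub_zero]
      have hterm : ∀ k ∈ range (n+1+1),
          (((n+1).choose k : ℝ)) * xt k * ((-x - ((n+1:ℕ):ℝ)) + ((n+1-k:ℕ):ℝ))^(n+1-k)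
          = ((-1:ℝ)^(n+1) * x) * ((-1:ℝ)^k * (((n+1).choose k : ℝ)) * (x + (k:ℝ))^n) := by
        intro k hk
        have hkn : k ≤ n+1 := Nat.lt_succ_iff.mp (Finset.mem_range.mp hk)
        have hbase : (-x - ((n+1:ℕ):ℝ)) + ((n+1-k:ℕ):ℝ) = -(x + (k:ℝ)) := by
          rw [Nat.cast_sub hkn]; push_cast; ring
        rw [hbase, neg_pow]
        have hsign : (-1:ℝ)^(n+1) * (-1:ℝ)^k = (-1:ℝ)^(n+1-k) := by
          rw [← pow_add, show n+1+k = (n+1-k) + 2*k from by omega, pow_add, pow_mul]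
          norm_num
        match k with
        | 0 =>
          simp only [hxt, if_pos rfl, Nat.cast_zero, add_zero, Nat.sub_zero, pow_zero, mul_one]
          rw [pow_succ]
          ring
        | (j+1) =>
          have hxtk : xt (j+1) = x*(x+((j+1:ℕ):ℝ))^(j+1-1) := rfl
          rw [hxtk, ← hsign]
          have hp : (x+((j+1:ℕ):ℝ))^(j+1-1) * (x+((j+1:ℕ):ℝ))^(n+1-(j+1)) = (x+((j+1:ℕ):ℝ))^n := by
            rw [← pow_add]
            congr 1
            omega
          linear_combination ((-1:ℝ)^(n+1) * (-1:ℝ)^(j+1) * ((n+1).choose (j+1) : ℝ) * x) * hp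
      rw [Finset.sum_congr rfl hterm, ← Finset.mul_sum, altsum n (n+1) (by omega) x, mul_zero]
    have hfin := hconst.trans hval
    simp only [hF] at hfin
    exact sub_eq_zero.mp hfin

lemma keyB (m : ℕ) (x : ℝ) :
    x^2 * ∑ i ∈ range m, ((m+1).choose (i+1) : ℝ) * (x+((i+1:ℕ):ℝ))^i * (x+((m-i:ℕ):ℝ))^(m-i-1)
    = 2*x*(2*x+((m+1:ℕ):ℝ))^m - 2*x*(x+((m+1:ℕ):ℝ))^m := by
  have hA := abelA (m+1) x x
  have hB := abelA m x (x+1)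
  rw [Finset.sum_range_succ] at hA
  rw [Finset.sum_range_succ'] at hA
  rw [Finset.sum_range_succ'] at hB
  have estep : ∀ i ∈ range m,
      (((m+1).choose (i+1) : ℝ)) * (if i+1 = 0 then 1 else x*(x+((i+1:ℕ):ℝ))^(i+1-1))
        * (x + ((m+1-(i+1) : ℕ):ℝ))^(m+1-(i+1))
      = x^2 * (((m+1).choose (i+1) : ℝ) * (x+((i+1:ℕ):ℝ))^i * (x+((m-i:ℕ):ℝ))^(m-i-1))
        + ((m+1:ℕ):ℝ) * ((m.choose (i+1) : ℝ) * (if i+1 = 0 then 1 else x*(x+((i+1:ℕ):ℝ))^(i+1-1))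
            * ((x+1) + ((m-(i+1) : ℕ):ℝ))^(m-(i+1))) := by
    intro i hi
    have him : i < m := Finset.mem_range.mp hi
    have hcn : ((m+1).choose (i+1) * (m-i) : ℕ) = ((m+1) * m.choose (i+1) : ℕ) := by
      rw [show m-i = m+1-(i+1) from by omega, ← Nat.choose_mul_succ_eq, Nat.mul_comm]
    have hc : ((m+1).choose (i+1) : ℝ) * ((m-i:ℕ):ℝ) = ((m+1:ℕ):ℝ) * (m.choose (i+1) : ℝ) := by
      exact_mod_cast congrArg (fun t : ℕ => (t:ℝ)) hcn
    rw [if_neg (Nat.succ_ne_zero i), show i+1-1 = i from rfl,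
      show m+1-(i+1) = m-i from by omega, show m-(i+1) = m-i-1 from by omega,
      show (x+1) + ((m-i-1 : ℕ):ℝ) = x + ((m-i:ℕ):ℝ) from by
        rw [Nat.cast_sub (by omega : 1 ≤ m-i), Nat.cast_sub (by omega : i ≤ m)]
        push_cast; ring,
      show (x + ((m-i:ℕ):ℝ))^(m-i) = (x + ((m-i:ℕ):ℝ))^(m-i-1) * (x + ((m-i:ℕ):ℝ)) from by
        rw [← pow_succ]; congr 1; omega]
    linear_combination (x * (x+((i+1:ℕ):ℝ))^i * (x+((m-i:ℕ):ℝ))^(m-i-1)) * hc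
  rw [Finset.sum_congr rfl estep, Finset.sum_add_distrib, ← Finset.mul_sum, ← Finset.mul_sum] at hA
  -- simplify the k=0 and k=m+1 boundary terms in hA, and the k=0 term in hB
  simp only [Nat.choose_zero_right, Nat.cast_one, one_mul, if_pos rfl, Nat.sub_zero,
    Nat.choose_self, Nat.sub_self, Nat.cast_zero, add_zero, pow_zero, mul_one,
    if_neg (Nat.succ_ne_zero m), if_true] at hA hB
  rw [show (x+1) + ((m:ℕ):ℝ) = x + ((m+1:ℕ):ℝ) from by push_cast; ring,
    show x+(x+1)+(m:ℝ) = 2*x+((m+1:ℕ):ℝ) from by push_cast; ring] at hB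
  rw [show x+x+((m+1:ℕ):ℝ) = 2*x+((m+1:ℕ):ℝ) from by ring,
    pow_succ (x + ((m+1:ℕ):ℝ)) m, pow_succ (2*x + ((m+1:ℕ):ℝ)) m,
    show m+1-1 = m from rfl] at hA
  linear_combination hA - ((m+1:ℕ):ℝ) * hB

lemma keyId (m : ℕ) :
    ∑ i ∈ range m, ((m+1).choose (i+1) : ℝ) * ((i+1:ℕ):ℝ)^i * ((m-i:ℕ):ℝ)^(m-i-1)
      = 2 * (m:ℝ) * ((m+1:ℕ):ℝ)^(m-1) := by
  set c : ℝ := ((m+1:ℕ):ℝ) with hcdef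
  set g : ℝ → ℝ := fun x => ∑ i ∈ range m,
    ((m+1).choose (i+1) : ℝ) * (x+((i+1:ℕ):ℝ))^i * (x+((m-i:ℕ):ℝ))^(m-i-1) with hg
  have hGH : (fun x => x * g x) = fun x => 2*(2*x+c)^m - 2*(x+c)^m := by
    funext x
    rcases eq_or_ne x 0 with rfl | hx
    · norm_num
    · have h2 : x * (x * g x) = x * (2*(2*x+c)^m - 2*(x+c)^m) := by
        simp only [hg, hcdef]
        linear_combination keyB m x
      exact mul_left_cancel₀ hx h2
  have hd : DifferentiableAt ℝ g 0 := by
    apply DifferentiableAt.fun_sum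
    intro i _
    exact ((differentiableAt_const _).mul ((differentiableAt_id.add_const _).pow _)).mul
      ((differentiableAt_id.add_const _).pow _)
  have hG : HasDerivAt (fun x => x * g x) (1 * g 0 + 0 * deriv g 0) 0 :=
    (hasDerivAt_id 0).mul hd.hasDerivAt
  have hH : HasDerivAt (fun x => 2*(2*x+c)^m - 2*(x+c)^m)
      (((m:ℝ) * (2*0+c)^(m-1) * (2*1)) * 2 - ((m:ℝ) * (0+c)^(m-1) * 1) * 2) 0 := by
    have h1 : HasDerivAt (fun x : ℝ => (2*x+c)^m) ((m:ℝ) * (2*0+c)^(m-1) * (2*1)) 0 :=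
      (((hasDerivAt_id 0).const_mul 2).add_const c).pow m
    have h2 : HasDerivAt (fun x : ℝ => (x+c)^m) ((m:ℝ) * (0+c)^(m-1) * 1) 0 :=
      ((hasDerivAt_id 0).add_const c).pow m
    have := ((h1.const_mul 2).fun_sub (h2.const_mul 2))
    simpa [mul_comm] using this
  rw [hGH] at hG
  have hu := hG.unique hH
  have hg0 : g 0 = ∑ i ∈ range m,
      ((m+1).choose (i+1) : ℝ) * ((i+1:ℕ):ℝ)^i * ((m-i:ℕ):ℝ)^(m-i-1) := by
    rw [hg]
    exact Finset.sum_congr rfl fun i _ => by norm_num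
  rw [hg0] at hu
  rw [show (2*(0:ℝ)+c) = c from by ring, show ((0:ℝ)+c) = c from by ring] at hu
  linarith [hu]

lemma keyId' (n : ℕ) (hn : 2 ≤ n) :
    ∑ k ∈ Finset.Ioo 0 n, (n.choose k : ℝ) * (k:ℝ)^(k-1) * ((n-k:ℕ):ℝ)^(n-k-1)
      = 2 * ((n:ℝ)-1) * (n:ℝ)^(n-2) := by
  obtain ⟨m, rfl⟩ : ∃ m, n = m + 1 := ⟨n - 1, by omega⟩
  rw [← Finset.Ico_add_one_left_eq_Ioo, Finset.sum_Ico_eq_sum_range, zero_add]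
  have : ∀ i ∈ range (m+1-1), ((m+1).choose (1+i) : ℝ) * ((1+i:ℕ):ℝ)^(1+i-1)
      * ((m+1-(1+i):ℕ):ℝ)^(m+1-(1+i)-1)
      = ((m+1).choose (i+1) : ℝ) * ((i+1:ℕ):ℝ)^i * ((m-i:ℕ):ℝ)^(m-i-1) := by
    intro i _
    rw [show 1+i = i+1 from by omega, show i+1-1 = i from by omega,
      show m+1-(i+1) = m-i from by omega]
  rw [show m+1-1 = m from rfl] at this ⊢
  rw [Finset.sum_congr rfl this, keyId]
  rw [show ((m+1:ℕ):ℝ) - 1 = (m:ℝ) from by push_cast; ring, show m+1-2 = m-1 from by omega]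

lemma powsucc (k : ℕ) (hk : 1 ≤ k) : (k:ℝ)^(k-2) * (k:ℝ) = (k:ℝ)^(k-1) := by
  match k, hk with
  | 1, _ => norm_num
  | (j+2), _ =>
    rw [← pow_succ]
    congr 1

/-- **McLeod's solution of the pre-gelation Smoluchowski equation with multiplicative kernel.**
For every integer `m ≥ 1` define `c_t(m) = t^(m-1) m^(m-2) e^(-mt) / m!` for `t ≥ 0`.
Then `c_0(m) = 1` if `m = 1` and `c_0(m) = 0` otherwise, and for every `m ≥ 1` and every
`t ∈ [0,1)`, the function `t ↦ c_t(m)` is differentiable with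
`∂_t c_t(m) = (1/2) Σ_{m'=1}^{m-1} m'(m-m') c_t(m') c_t(m-m') − m c_t(m)`. -/
theorem mcleod_solution
    (c : ℝ → ℕ → ℝ)
    (hc : ∀ (t : ℝ) (m : ℕ),
      c t m = t ^ (m - 1) * (m : ℝ) ^ (m - 2) * Real.exp (-(m : ℝ) * t) / (Nat.factorial m)) :
    (∀ m : ℕ, 1 ≤ m → c 0 m = if m = 1 then 1 else 0) ∧
    (∀ m : ℕ, 1 ≤ m → ∀ t ∈ Set.Ico (0 : ℝ) 1,
      HasDerivAt (fun s => c s m)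
        ((1 / 2) * ∑ m' ∈ Finset.Ioo 0 m,
            (m' : ℝ) * ((m - m' : ℕ) : ℝ) * c t m' * c t (m - m')
          - (m : ℝ) * c t m) t) := by
  constructor
  · intro m hm
    rw [hc]
    rcases eq_or_lt_of_le hm with h1 | h2
    · rw [if_pos h1.symm, ← h1]
      norm_num
    · rw [if_neg (by omega)]
      rw [zero_pow (by omega : m - 1 ≠ 0)]
      ring
  · intro m hm t _
    have h2 : HasDerivAt (fun s => Real.exp (-(m:ℝ)*s)) (Real.exp (-(m:ℝ)*t) * (-(m:ℝ)*1)) t :=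
      HasDerivAt.exp ((hasDerivAt_id t).const_mul (-(m:ℝ)))
    have hD : HasDerivAt (fun s => s ^ (m-1) * (m:ℝ)^(m-2) * Real.exp (-(m:ℝ)*s) / (Nat.factorial m))
        ((((m-1:ℕ):ℝ) * t^(m-1-1) * (m:ℝ)^(m-2) * Real.exp (-(m:ℝ)*t)
          + t^(m-1) * (m:ℝ)^(m-2) * (Real.exp (-(m:ℝ)*t) * (-(m:ℝ)*1))) / (Nat.factorial m)) t := by
      have := (((hasDerivAt_pow (m-1) t).mul_const ((m:ℝ)^(m-2))).mul h2).div_const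
        ((Nat.factorial m : ℝ))
      exact this
    have hfun : (fun s => c s m)
        = fun s => s ^ (m-1) * (m:ℝ)^(m-2) * Real.exp (-(m:ℝ)*s) / (Nat.factorial m) :=
      funext fun s => hc s m
    rw [hfun]
    convert hD using 1
    -- value equality
    rcases eq_or_lt_of_le hm with h1 | hm2
    · -- m = 1
      subst h1
      rw [show Finset.Ioo 0 1 = (∅ : Finset ℕ) from by decide, Finset.sum_empty, hc t 1]
      norm_num
    · -- m ≥ 2
      have hsum : ∀ k ∈ Finset.Ioo 0 m, (k : ℝ) * ((m - k : ℕ) : ℝ) * c t k * c t (m - k)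
          = (t^(m-2) * Real.exp (-(m:ℝ)*t) / (Nat.factorial m))
            * ((m.choose k : ℝ) * (k:ℝ)^(k-1) * ((m-k:ℕ):ℝ)^(m-k-1)) := by
        intro k hk
        obtain ⟨hk0, hkm⟩ := Finset.mem_Ioo.mp hk
        have hkle : k ≤ m := le_of_lt hkm
        have e1 : Real.exp (-(k:ℝ)*t) * Real.exp (-((m-k:ℕ):ℝ)*t) = Real.exp (-(m:ℝ)*t) := by
          rw [← Real.exp_add]
          congr 1
          rw [Nat.cast_sub hkle]
          ring
        have e2 : t^(k-1)*t^(m-k-1) = t^(m-2) := by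
          rw [← pow_add]
          congr 1
          omega
        have e3 : (k:ℝ)^(k-2)*(k:ℝ) = (k:ℝ)^(k-1) := powsucc k hk0
        have e4 : ((m-k:ℕ):ℝ)^(m-k-2)*((m-k:ℕ):ℝ) = ((m-k:ℕ):ℝ)^(m-k-1) :=
          powsucc (m-k) (by omega)
        have e5 : (m.choose k:ℝ) * (k.factorial:ℝ) * ((m-k).factorial:ℝ) = (m.factorial:ℝ) := by
          exact_mod_cast congrArg (fun t : ℕ => (t:ℝ))
            (Nat.choose_mul_factorial_mul_factorial hkle)
        have hkf : ((k.factorial:ℕ):ℝ) ≠ 0 := Nat.cast_ne_zero.mpr (Nat.factorial_ne_zero k)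
        have hmkf : (((m-k).factorial:ℕ):ℝ) ≠ 0 := Nat.cast_ne_zero.mpr (Nat.factorial_ne_zero _)
        have hmf : ((m.factorial:ℕ):ℝ) ≠ 0 := Nat.cast_ne_zero.mpr (Nat.factorial_ne_zero m)
        rw [hc t k, hc t (m-k)]
        calc (k:ℝ) * ((m-k:ℕ):ℝ)
              * (t ^ (k - 1) * (k:ℝ) ^ (k - 2) * Real.exp (-(k:ℝ) * t) / (k.factorial:ℝ))
              * (t ^ (m-k-1) * ((m-k:ℕ):ℝ) ^ (m-k-2) * Real.exp (-((m-k:ℕ):ℝ) * t)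
                  / ((m-k).factorial:ℝ))
            = ((t^(k-1)*t^(m-k-1)) * ((k:ℝ)^(k-2)*(k:ℝ))
                * (((m-k:ℕ):ℝ)^(m-k-2)*((m-k:ℕ):ℝ))
                * (Real.exp (-(k:ℝ)*t) * Real.exp (-((m-k:ℕ):ℝ)*t)))
              / ((k.factorial:ℝ) * ((m-k).factorial:ℝ)) := by ring
          _ = (t^(m-2) * (k:ℝ)^(k-1) * ((m-k:ℕ):ℝ)^(m-k-1) * Real.exp (-(m:ℝ)*t))
              / ((k.factorial:ℝ) * ((m-k).factorial:ℝ)) := by rw [e1, e2, e3, e4]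
          _ = (t^(m-2) * Real.exp (-(m:ℝ)*t) / (Nat.factorial m))
              * ((m.choose k : ℝ) * (k:ℝ)^(k-1) * ((m-k:ℕ):ℝ)^(m-k-1)) := by
              rw [← e5]
              have hC : (m.choose k : ℝ) ≠ 0 := Nat.cast_ne_zero.mpr (Nat.choose_pos hkle).ne'
              field_simp
      rw [Finset.sum_congr rfl hsum, ← Finset.mul_sum, keyId' m hm2, hc t m,
        Nat.cast_sub hm, Nat.cast_one, show m-1-1 = m-2 from by omega]
      ring
end

section
/- Let T₀ ∈ (0,∞] and let (c_t(m))_{m≥1, t∈[0,T₀)} be a family of real-valued functions, each differentiable in t on [0,T₀), satisfying c_0(m) = 1_{m=1} and, for every m ≥ 1 and t ∈ [0,T₀), ∂_t c_t(m) = (1/2) Σ_{m'=1}^{m-1} m'(m-m') c_t(m') c_t(m-m') − m c_t(m). Then c_t(m) = t^{m-1} m^{m-2} e^{-mt} / m! for every m ≥ 1 and t ∈ [0,T₀). (Uniqueness of McLeod's solution.) -/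
open ENNReal

section McLeodAux
open Polynomial


lemma mcleod_fd : ∀ (n d : ℕ), d < n → ∀ x : ℝ,
    ∑ k ∈ Finset.range (n+1), (-1:ℝ)^k * (n.choose k) * (x + k)^d = 0 := by
  intro n
  induction n with
  | zero => intro d hd; omega
  | succ n ih =>
    intro d hd x
    set g : ℕ → ℝ := fun k => (x + k)^d with hg
    have h2' : ∑ j ∈ Finset.range (n+1), (-1:ℝ)^(j+1) * (n.choose (j+1)) * g (j+1)
        = ∑ k ∈ Finset.range (n+1), (-1:ℝ)^k * (n.choose k) * g k - g 0 := by
      have e1 : ∑ k ∈ Finset.range (n+2), (-1:ℝ)^k * (n.choose k) * g k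
          = ∑ j ∈ Finset.range (n+1), (-1:ℝ)^(j+1) * (n.choose (j+1)) * g (j+1) + g 0 := by
        rw [Finset.sum_range_succ' _ (n+1)]
        simp
      have e2 : ∑ k ∈ Finset.range (n+2), (-1:ℝ)^k * (n.choose k) * g k
          = ∑ k ∈ Finset.range (n+1), (-1:ℝ)^k * (n.choose k) * g k := by
        rw [Finset.sum_range_succ]
        simp [Nat.choose_succ_self]
      linarith [e1, e2.symm]
    have key : ∑ k ∈ Finset.range (n+2), (-1:ℝ)^k * ((n+1).choose k) * g k
        = ∑ k ∈ Finset.range (n+1), (-1:ℝ)^k * (n.choose k) * (g k - g (k+1)) := by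
      rw [Finset.sum_range_succ' _ (n+1)]
      have e3 : ∀ j ∈ Finset.range (n+1), (-1:ℝ)^(j+1) * ((n+1).choose (j+1)) * g (j+1)
          = (-1:ℝ)^(j+1) * (n.choose j) * g (j+1) + (-1:ℝ)^(j+1) * (n.choose (j+1)) * g (j+1) := by
        intro j _
        rw [Nat.choose_succ_succ]
        push_cast
        ring
      rw [Finset.sum_congr rfl e3, Finset.sum_add_distrib, h2']
      have e5 : ∑ k ∈ Finset.range (n+1), (-1:ℝ)^k * (n.choose k) * (g k - g (k+1))
          = ∑ k ∈ Finset.range (n+1), (-1:ℝ)^k * (n.choose k) * g k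
            + ∑ k ∈ Finset.range (n+1), (-1:ℝ)^(k+1) * (n.choose k) * g (k+1) := by
        rw [← Finset.sum_add_distrib]
        exact Finset.sum_congr rfl (fun k _ => by ring)
      rw [e5]
      simp only [pow_zero, Nat.choose_zero_right, Nat.cast_one, Nat.cast_zero, one_mul]
      ring
    rw [key]
    have e4 : ∀ k ∈ Finset.range (n+1), (-1:ℝ)^k * (n.choose k) * (g k - g (k+1))
        = ∑ j ∈ Finset.range d, -((d.choose j : ℝ) * ((-1:ℝ)^k * (n.choose k) * (x+k)^j)) := by
      intro k _
      have hb : ((x + k) + 1)^d = ∑ j ∈ Finset.range (d+1), (x+k)^j * (d.choose j : ℝ) := by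
        rw [add_pow]
        simp
      have hsub : g k - g (k+1) = -∑ j ∈ Finset.range d, (x+k)^j * (d.choose j : ℝ) := by
        simp only [hg]
        push_cast
        have hx : (x + ((k:ℝ) + 1)) = (x + k) + 1 := by ring
        rw [hx, hb, Finset.sum_range_succ]
        simp
      rw [hsub, mul_neg, Finset.mul_sum, ← Finset.sum_neg_distrib]
      exact Finset.sum_congr rfl (fun j _ => by ring)
    rw [Finset.sum_congr rfl e4, Finset.sum_comm]
    rw [Finset.sum_eq_zero]
    intro j hj
    simp only [Finset.mem_range] at hj
    have hih : ∑ k ∈ Finset.range (n+1), (-1:ℝ)^k * (n.choose k) * (x+k)^j = 0 :=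
      ih j (by omega) x
    have h0 : ∑ k ∈ Finset.range (n+1), -((d.choose j : ℝ) * ((-1:ℝ)^k * (n.choose k) * (x+k)^j))
        = -((d.choose j : ℝ) * ∑ k ∈ Finset.range (n+1), (-1:ℝ)^k * (n.choose k) * (x+k)^j) := by
      rw [Finset.mul_sum, Finset.sum_neg_distrib]
    rw [h0, hih, mul_zero, neg_zero]



noncomputable def Bp (x : ℝ) (n : ℕ) : ℝ[X] :=
  (X + C (n:ℝ))^n + ∑ k ∈ Finset.Icc 1 n,
    C ((n.choose k : ℝ) * x * (x + k)^(k-1)) * (X + C (((n - k : ℕ)) : ℝ))^(n - k)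

lemma range_succ_eq_insert_Icc (n : ℕ) : Finset.range (n+1) = insert 0 (Finset.Icc 1 n) := by
  ext k; simp [Finset.mem_range, Finset.mem_Icc]; omega

lemma mcleod_babel (x : ℝ) : ∀ n : ℕ, Bp x n = (X + C (x + n))^n := by
  intro n
  induction n with
  | zero => simp [Bp]
  | succ n ih =>
    -- shifted IH
    have hQ : (X + C (((n+1:ℕ)):ℝ))^n + ∑ k ∈ Finset.Icc 1 n,
        C ((n.choose k : ℝ) * x * (x + k)^(k-1)) * (X + C (((n + 1 - k : ℕ)) : ℝ))^(n - k)
        = (X + C (x + ((n+1:ℕ):ℝ)))^n := by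
      have h := congrArg (fun p : ℝ[X] => p.comp (X + 1)) ih
      simp only [Bp, add_comp, pow_comp, X_comp, C_comp, sum_comp, mul_comp] at h
      have e1 : (X + C (((n+1:ℕ)):ℝ)) = X + 1 + C ((n:ℕ):ℝ) := by
        push_cast; rw [C_add, C_1]; ring
      have e2 : (X + C (x + ((n+1:ℕ):ℝ))) = X + 1 + C (x + n) := by
        push_cast; simp only [C_add, C_1]; ring
      rw [e1, e2, ← h]
      congr 1
      apply Finset.sum_congr rfl
      intro k hk
      simp only [Finset.mem_Icc] at hk
      have e3 : (X + C (((n + 1 - k : ℕ)) : ℝ)) = X + 1 + C (((n - k : ℕ)) : ℝ) := by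
        rw [Nat.cast_sub (by omega), Nat.cast_sub (by omega),
          show ((n+1:ℕ):ℝ) - (k:ℝ) = ((n:ℝ) - k) + 1 by push_cast; ring, C_add, C_1]
        ring
      rw [e3]
    -- derivative computation
    have hder : derivative (Bp x (n+1)) = C (((n+1:ℕ)):ℝ) * (X + C (x + ((n+1:ℕ):ℝ)))^n := by
      rw [← hQ]
      simp only [Bp, derivative_add, derivative_pow, derivative_X, derivative_C,
        add_zero, mul_one, map_sum, derivative_mul, zero_mul, zero_add]
      rw [mul_add, Finset.mul_sum]
      congr 1
      rw [Finset.sum_Icc_succ_top (by omega : 1 ≤ n+1)]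
      have htop : C ((((n+1).choose (n+1) : ℕ):ℝ) * x * (x + (((n+1:ℕ)):ℝ))^((n+1)-1)) *
          (C ((((n+1) - (n+1):ℕ)):ℝ) * (X + C ((((n+1) - (n+1):ℕ)):ℝ))^((n+1)-(n+1)-1)) = 0 := by
        norm_num
      rw [htop, add_zero]
      apply Finset.sum_congr rfl
      intro k hk
      simp only [Finset.mem_Icc] at hk
      have hnk : (n+1) - k - 1 = n - k := by omega
      have hchn : (n+1).choose k * (n+1-k) = (n+1) * n.choose k :=
        calc (n+1).choose k * (n+1-k) = (n+1).choose (k+1) * (k+1) :=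
              (Nat.choose_succ_right_eq (n+1) k).symm
          _ = (n+1) * n.choose k := (Nat.add_one_mul_choose_eq n k).symm
      have hR : (((n+1).choose k : ℕ):ℝ) * ((n+1-k : ℕ):ℝ) = ((n+1:ℕ):ℝ) * ((n.choose k : ℕ):ℝ) := by
        exact_mod_cast hchn
      rw [hnk]
      calc C ((((n+1).choose k:ℕ):ℝ) * x * (x + (k:ℝ))^(k-1))
              * (C (((n+1-k:ℕ)):ℝ) * (X + C (((n+1-k:ℕ)):ℝ))^(n-k))
          = C ((((n+1).choose k:ℕ):ℝ) * (((n+1-k:ℕ)):ℝ) * (x * (x + (k:ℝ))^(k-1)))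
              * (X + C (((n+1-k:ℕ)):ℝ))^(n-k) := by
            simp only [C_mul]; ring
        _ = C (((n+1:ℕ):ℝ) * (((n.choose k:ℕ)):ℝ) * (x * (x + (k:ℝ))^(k-1)))
              * (X + C (((n+1-k:ℕ)):ℝ))^(n-k) := by rw [hR]
        _ = C (((n+1:ℕ)):ℝ) * (C ((((n.choose k:ℕ)):ℝ) * x * (x + (k:ℝ))^(k-1))
              * (X + C (((n+1-k:ℕ)):ℝ))^(n-k)) := by
            simp only [C_mul]; ring
    -- conclude by constancy + evaluation
    have hdiff : derivative (Bp x (n+1) - (X + C (x + ((n+1:ℕ):ℝ)))^(n+1)) = 0 := by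
      rw [derivative_sub, hder, derivative_pow, derivative_add, derivative_X, derivative_C]
      simp
    have hc := eq_C_of_derivative_eq_zero hdiff
    have heval : eval (-(x + ((n+1:ℕ):ℝ))) (Bp x (n+1) - (X + C (x + ((n+1:ℕ):ℝ)))^(n+1)) = 0 := by
      rw [eval_sub, eval_pow, eval_add, eval_X, eval_C, neg_add_cancel, zero_pow (by omega),
        sub_zero]
      simp only [Bp, eval_add, eval_pow, eval_finset_sum, eval_mul, eval_X, eval_C]
      have hterm : ∀ k ∈ Finset.Icc 1 (n+1),
          ((n+1).choose k : ℝ) * x * (x + k)^(k-1) * ((-(x + ((n+1:ℕ):ℝ)) + (((n+1-k:ℕ)):ℝ))^((n+1)-k))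
          = (-1:ℝ)^(n+1) * x * ((-1:ℝ)^k * ((n+1).choose k : ℝ) * (x + k)^n) := by
        intro k hk
        simp only [Finset.mem_Icc] at hk
        have hcast : (((n+1-k:ℕ)):ℝ) = ((n+1:ℕ):ℝ) - k := by
          rw [Nat.cast_sub (by omega)]
        have hbase : (-(x + ((n+1:ℕ):ℝ)) + (((n+1-k:ℕ)):ℝ)) = -(x + k) := by
          rw [hcast]; ring
        rw [hbase, neg_pow]
        have hpow : (x + (k:ℝ))^(k-1) * (x + k)^((n+1)-k) = (x + k)^n := by
          rw [← pow_add]; congr 1; omega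
        have hsgn : (-1:ℝ)^((n+1)-k) = (-1:ℝ)^(n+1) * (-1:ℝ)^k := by
          have h1 : (-1:ℝ)^((n+1)-k) * (-1:ℝ)^k = (-1:ℝ)^(n+1) := by
            rw [← pow_add]; congr 1; omega
          have h2 : ((-1:ℝ)^k)^2 = 1 := by
            rw [← pow_mul, mul_comm, pow_mul]; norm_num
          rw [← h1, mul_assoc, ← sq, h2, mul_one]
        calc ((n+1).choose k : ℝ) * x * (x + k)^(k-1) * ((-1:ℝ)^((n+1)-k) * (x+k)^((n+1)-k))
            = (-1:ℝ)^((n+1)-k) * (((n+1).choose k : ℝ) * x) * ((x + k)^(k-1) * (x+k)^((n+1)-k)) := by ring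
          _ = ((-1:ℝ)^(n+1) * (-1:ℝ)^k) * (((n+1).choose k : ℝ) * x) * (x + k)^n := by rw [hpow, hsgn]
          _ = (-1:ℝ)^(n+1) * x * ((-1:ℝ)^k * ((n+1).choose k : ℝ) * (x + k)^n) := by ring
      rw [Finset.sum_congr rfl hterm]
      have hfirst : (-(x + ((n+1:ℕ):ℝ)) + ((n+1:ℕ):ℝ))^(n+1)
          = (-1:ℝ)^(n+1) * x * ((-1:ℝ)^(0:ℕ) * (((n+1).choose 0 : ℕ) : ℝ) * (x + ((0:ℕ):ℝ))^n) := by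
        rw [show (-(x + ((n+1:ℕ):ℝ)) + ((n+1:ℕ):ℝ)) = -x by ring, neg_pow]
        simp [pow_succ]
        ring
      rw [hfirst, ← Finset.mul_sum]
      have hins : ((-1:ℝ)^(0:ℕ) * (((n+1).choose 0 : ℕ) : ℝ) * (x + ((0:ℕ):ℝ))^n)
            + ∑ k ∈ Finset.Icc 1 (n+1), (-1:ℝ)^k * ((n+1).choose k : ℝ) * (x + k)^n
          = ∑ k ∈ Finset.range (n+2), (-1:ℝ)^k * ((n+1).choose k : ℝ) * (x + k)^n := by
        rw [range_succ_eq_insert_Icc (n+1), Finset.sum_insert (by simp)]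
      rw [← mul_add, hins, mcleod_fd (n+1) n (by omega) x, mul_zero]
    rw [hc, eval_C] at heval
    rw [heval, map_zero, sub_eq_zero] at hc
    exact hc

-- Step 1: coefficient of Y^1 in Babel
lemma mcleod_step1 (n : ℕ) (x : ℝ) :
    ∑ k ∈ Finset.Icc 1 n, (n.choose k : ℝ) * x * (x + k)^(k-1)
        * ((((n-k:ℕ)):ℝ)^(n-k-1) * (((n-k:ℕ)):ℝ))
      = (x + (n:ℝ))^(n-1) * n - ((n:ℝ))^(n-1) * n := by
  have h := congrArg (fun p : ℝ[X] => p.coeff 1) (mcleod_babel x n)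
  simp only [Bp, coeff_add, finset_sum_coeff, coeff_C_mul, coeff_X_add_C_pow,
    Nat.choose_one_right] at h
  push_cast at h
  linarith [h]

-- Step 2: identity A
lemma mcleod_idA (n : ℕ) :
    ∑ k ∈ Finset.Icc 1 n, (n.choose k : ℝ)
        * ((((n-k:ℕ)):ℝ)^(n-k-1) * (((n-k:ℕ)):ℝ)) * (k:ℝ)^(k-1)
      = ((n:ℝ))^(n-1-1) * (((n-1).choose 1 : ℕ) : ℝ) * n := by
  set L : ℝ[X] := ∑ k ∈ Finset.Icc 1 n,
    C ((n.choose k : ℝ) * ((((n-k:ℕ)):ℝ)^(n-k-1) * (((n-k:ℕ)):ℝ))) * (X * (X + C (k:ℝ))^(k-1))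
    with hL
  set R : ℝ[X] := (X + C (n:ℝ))^(n-1) * C (n:ℝ) - C (((n:ℝ))^(n-1) * n) with hR
  have hLR : L = R := by
    apply Polynomial.funext
    intro x
    simp only [hL, hR, eval_sub, eval_mul, eval_add, eval_pow, eval_X, eval_C, eval_finset_sum]
    rw [← mcleod_step1 n x]
    exact Finset.sum_congr rfl (fun k _ => by ring)
  have hcoeff := congrArg (fun p : ℝ[X] => p.coeff 1) hLR
  simp only [hL, hR, finset_sum_coeff, coeff_C_mul, coeff_sub, coeff_mul_C, coeff_C] at hcoeff
  have hXmul : ∀ k : ℕ, (X * (X + C ((k:ℕ):ℝ))^(k-1)).coeff 1 = ((k:ℕ):ℝ)^(k-1) := by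
    intro k
    rw [show (1:ℕ) = 0+1 from rfl, coeff_X_mul, coeff_X_add_C_pow]
    simp
  simp only [hXmul, coeff_X_add_C_pow] at hcoeff
  simpa using hcoeff

lemma mcleod_idS (n : ℕ) (hn : 1 ≤ n) :
    ∑ k ∈ Finset.Ioo 0 n, (n.choose k : ℝ) * (k:ℝ)^(k-1) * (((n-k:ℕ)):ℝ)^(n-k-1)
      = 2 * (((n-1:ℕ)):ℝ) * (n:ℝ)^(n-2) := by
  have hins : Finset.Icc 1 n = insert n (Finset.Ioo 0 n) := by
    ext k; simp [Finset.mem_Icc, Finset.mem_Ioo, Finset.mem_insert]; omega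
  -- A over Ioo
  have hA : ∑ k ∈ Finset.Ioo 0 n, (n.choose k : ℝ)
        * ((((n-k:ℕ)):ℝ)^(n-k-1) * (((n-k:ℕ)):ℝ)) * (k:ℝ)^(k-1)
      = ((n:ℝ))^(n-2) * (((n-1:ℕ)):ℝ) * n := by
    have h := mcleod_idA n
    rw [hins, Finset.sum_insert (by simp)] at h
    simp only [Nat.sub_self, Nat.cast_zero, Nat.choose_one_right] at h
    have h2 : ((n:ℝ))^(n-1-1) = ((n:ℝ))^(n-2) := by rw [show n-1-1 = n-2 by omega]
    rw [h2] at h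
    linarith [h]
  -- reflected A
  have hB : ∑ k ∈ Finset.Ioo 0 n, (n.choose k : ℝ)
        * ((k:ℝ)^(k-1) * (k:ℝ)) * (((n-k:ℕ)):ℝ)^(n-k-1)
      = ((n:ℝ))^(n-2) * (((n-1:ℕ)):ℝ) * n := by
    rw [← hA]
    apply Finset.sum_nbij' (fun k => n - k) (fun k => n - k)
    · intro a ha; simp only [Finset.mem_Ioo] at ha ⊢; omega
    · intro a ha; simp only [Finset.mem_Ioo] at ha ⊢; omega
    · intro a ha; simp only [Finset.mem_Ioo] at ha; omega
    · intro a ha; simp only [Finset.mem_Ioo] at ha; omega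
    · intro a ha
      simp only [Finset.mem_Ioo] at ha
      have e1 : n - (n - a) = a := by omega
      have e2 : n.choose (n - a) = n.choose a := Nat.choose_symm (by omega)
      rw [e1, e2]
  -- combine
  have hsum : (n:ℝ) * ∑ k ∈ Finset.Ioo 0 n,
        (n.choose k : ℝ) * (k:ℝ)^(k-1) * (((n-k:ℕ)):ℝ)^(n-k-1)
      = (n:ℝ) * (2 * (((n-1:ℕ)):ℝ) * (n:ℝ)^(n-2)) := by
    rw [Finset.mul_sum]
    have hterm : ∀ k ∈ Finset.Ioo 0 n,
        (n:ℝ) * ((n.choose k : ℝ) * (k:ℝ)^(k-1) * (((n-k:ℕ)):ℝ)^(n-k-1))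
          = (n.choose k : ℝ) * ((((n-k:ℕ)):ℝ)^(n-k-1) * (((n-k:ℕ)):ℝ)) * (k:ℝ)^(k-1)
            + (n.choose k : ℝ) * ((k:ℝ)^(k-1) * (k:ℝ)) * (((n-k:ℕ)):ℝ)^(n-k-1) := by
      intro k hk
      simp only [Finset.mem_Ioo] at hk
      have hcast : (((n-k:ℕ)):ℝ) = (n:ℝ) - k := by
        rw [Nat.cast_sub (by omega)]
      rw [hcast]
      ring
    rw [Finset.sum_congr rfl hterm, Finset.sum_add_distrib, hA, hB]
    ring
  have hn0 : (n:ℝ) ≠ 0 := Nat.cast_ne_zero.2 (by omega)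
  exact mul_left_cancel₀ hn0 hsum

lemma mcleod_pow_helper (j : ℕ) (hj : 1 ≤ j) : (j:ℝ) * (j:ℝ)^(j-2) = (j:ℝ)^(j-1) := by
  match j, hj with
  | 1, _ => norm_num
  | (j+2), _ =>
    rw [show j+2-1 = (j+2-2)+1 by omega, pow_succ]
    ring

lemma mcleod_keyId (m : ℕ) (hm : 1 ≤ m) :
    ∑ k ∈ Finset.Ioo 0 m, (k:ℝ) * (((m-k:ℕ)):ℝ)
        * ((k:ℝ)^(k-2) / (k.factorial : ℝ)) * ((((m-k:ℕ)):ℝ)^(m-k-2) / ((m-k).factorial : ℝ))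
      = 2 * (((m-1:ℕ)):ℝ) * (m:ℝ)^(m-2) / (m.factorial : ℝ) := by
  have hterm : ∀ k ∈ Finset.Ioo 0 m, (k:ℝ) * (((m-k:ℕ)):ℝ)
        * ((k:ℝ)^(k-2) / (k.factorial : ℝ)) * ((((m-k:ℕ)):ℝ)^(m-k-2) / ((m-k).factorial : ℝ))
      = (m.choose k : ℝ) * (k:ℝ)^(k-1) * (((m-k:ℕ)):ℝ)^(m-k-1) / (m.factorial : ℝ) := by
    intro k hk
    simp only [Finset.mem_Ioo] at hk
    have h1 : (k:ℝ) * (k:ℝ)^(k-2) = (k:ℝ)^(k-1) := mcleod_pow_helper k hk.1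
    have h2 : ((m-k:ℕ):ℝ) * ((m-k:ℕ):ℝ)^(m-k-2) = ((m-k:ℕ):ℝ)^(m-k-1) :=
      mcleod_pow_helper (m-k) (by omega)
    have hfac : ((m.choose k : ℕ):ℝ) * (k.factorial:ℝ) * ((m-k).factorial:ℝ) = (m.factorial:ℝ) := by
      exact_mod_cast congrArg (Nat.cast : ℕ → ℝ)
        (Nat.choose_mul_factorial_mul_factorial (le_of_lt hk.2))
    have hkf : (k.factorial:ℝ) > 0 := by positivity
    have hmkf : ((m-k).factorial:ℝ) > 0 := by positivity
    have hmf : (m.factorial:ℝ) > 0 := by positivity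
    have step1 : (k:ℝ) * (((m-k:ℕ)):ℝ)
        * ((k:ℝ)^(k-2) / (k.factorial : ℝ)) * ((((m-k:ℕ)):ℝ)^(m-k-2) / ((m-k).factorial : ℝ))
        = ((k:ℝ) * (k:ℝ)^(k-2)) * ((((m-k:ℕ)):ℝ) * (((m-k:ℕ)):ℝ)^(m-k-2))
          / ((k.factorial : ℝ) * ((m-k).factorial : ℝ)) := by
      field_simp
    rw [step1, h1, h2, div_eq_div_iff (by positivity) (by positivity)]
    linear_combination (-((k:ℝ)^(k-1) * (((m-k:ℕ)):ℝ)^(m-k-1))) * hfac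
  rw [Finset.sum_congr rfl hterm, ← Finset.sum_div, mcleod_idS m hm]

end McLeodAux

/-- **Uniqueness of McLeod's solution.**
Let `T₀ ∈ (0,∞]` and let `(c_t(m))` (for `m ≥ 1`, `t ∈ [0,T₀)`) be a family of real-valued
functions, each differentiable in `t` on `[0,T₀)`, satisfying `c_0(m) = 1_{m=1}` and, for every
`m ≥ 1` and `t ∈ [0,T₀)`,
`∂_t c_t(m) = (1/2) Σ_{m'=1}^{m-1} m'(m-m') c_t(m') c_t(m-m') − m c_t(m)`.
Then `c_t(m) = t^(m-1) m^(m-2) e^(-mt) / m!` for every `m ≥ 1` and `t ∈ [0,T₀)`. -/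
theorem mcleod_uniqueness
    (T₀ : ℝ≥0∞) (hT₀ : 0 < T₀)
    (c : ℝ → ℕ → ℝ)
    (hinit : ∀ m : ℕ, 1 ≤ m → c 0 m = if m = 1 then 1 else 0)
    (hode : ∀ m : ℕ, 1 ≤ m → ∀ t : ℝ, 0 ≤ t → ENNReal.ofReal t < T₀ →
      HasDerivWithinAt (fun s => c s m)
        ((1 / 2) * ∑ m' ∈ Finset.Ioo 0 m,
            (m' : ℝ) * ((m - m' : ℕ) : ℝ) * c t m' * c t (m - m')
          - (m : ℝ) * c t m) (Set.Ici 0) t) :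
    ∀ m : ℕ, 1 ≤ m → ∀ t : ℝ, 0 ≤ t → ENNReal.ofReal t < T₀ →
      c t m = t ^ (m - 1) * (m : ℝ) ^ (m - 2) * Real.exp (-(m : ℝ) * t) / (Nat.factorial m) := by

  intro m
  induction m using Nat.strong_induction_on with
  | _ m ih =>
  intro hm t ht htT
  set F : ℝ → ℝ := fun s => s ^ (m-1) * (m:ℝ)^(m-2) * Real.exp (-(m:ℝ)*s) / (Nat.factorial m : ℝ)
    with hFdef
  -- derivative of F
  have hfder : ∀ s : ℝ, HasDerivAt F
      ((((m-1:ℕ)):ℝ) * s^(m-2) * (m:ℝ)^(m-2) * Real.exp (-(m:ℝ)*s) / (Nat.factorial m : ℝ)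
        - (m:ℝ) * F s) s := by
    intro s
    have h1 : HasDerivAt (fun u : ℝ => u ^ (m-1)) ((((m-1:ℕ)):ℝ) * s^(m-2)) s := by
      have := hasDerivAt_pow (m-1) s
      rwa [show m-1-1 = m-2 by omega] at this
    have h2 : HasDerivAt (fun u : ℝ => Real.exp (-(m:ℝ)*u)) (Real.exp (-(m:ℝ)*s) * (-(m:ℝ))) s := by
      have := (((hasDerivAt_id s).const_mul (-(m:ℝ))).exp)
      simpa using this
    have h3 : HasDerivAt (fun u : ℝ => (u^(m-1) * Real.exp (-(m:ℝ)*u)) * ((m:ℝ)^(m-2)/(Nat.factorial m : ℝ))) _ s :=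
      (h1.mul h2).mul_const ((m:ℝ)^(m-2) / (Nat.factorial m : ℝ))
    have hfun : (fun u : ℝ => (u^(m-1) * Real.exp (-(m:ℝ)*u)) * ((m:ℝ)^(m-2)/(Nat.factorial m : ℝ)))
        = F := by
      funext u; simp only [hFdef]; ring
    rw [hfun] at h3
    convert h3 using 1
    simp only [hFdef]
    ring
  -- derivative of g within Ici 0
  set g : ℝ → ℝ := fun s => (c s m - F s) * Real.exp ((m:ℝ)*s) with hgdef
  have hg : ∀ s : ℝ, 0 ≤ s → ENNReal.ofReal s < T₀ →
      HasDerivWithinAt g 0 (Set.Ici 0) s := by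
    intro s hs hsT
    have hsum : ∑ k ∈ Finset.Ioo 0 m, (k:ℝ) * (((m-k:ℕ)):ℝ) * c s k * c s (m-k)
        = (s^(m-2) * Real.exp (-(m:ℝ)*s)) * (2 * (((m-1:ℕ)):ℝ) * (m:ℝ)^(m-2) / (Nat.factorial m : ℝ)) := by
      rw [← mcleod_keyId m hm, Finset.mul_sum]
      apply Finset.sum_congr rfl
      intro k hk
      simp only [Finset.mem_Ioo] at hk
      rw [ih k hk.2 (by omega) s hs hsT, ih (m-k) (by omega) (by omega) s hs hsT]
      have hpow : s^(k-1) * s^(m-k-1) = s^(m-2) := by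
        rw [← pow_add]; congr 1; omega
      have hexp : Real.exp (-(k:ℝ)*s) * Real.exp (-(((m-k:ℕ)):ℝ)*s) = Real.exp (-(m:ℝ)*s) := by
        rw [← Real.exp_add]; congr 1
        rw [Nat.cast_sub (le_of_lt hk.2)]; ring
      calc (k:ℝ) * (((m-k:ℕ)):ℝ)
            * (s^(k-1) * (k:ℝ)^(k-2) * Real.exp (-(k:ℝ)*s) / (Nat.factorial k : ℝ))
            * (s^(m-k-1) * (((m-k:ℕ)):ℝ)^(m-k-2) * Real.exp (-(((m-k:ℕ)):ℝ)*s) / (Nat.factorial (m-k) : ℝ))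
          = (s^(k-1) * s^(m-k-1)) * (Real.exp (-(k:ℝ)*s) * Real.exp (-(((m-k:ℕ)):ℝ)*s))
            * ((k:ℝ) * (((m-k:ℕ)):ℝ) * ((k:ℝ)^(k-2) / (Nat.factorial k : ℝ))
              * ((((m-k:ℕ)):ℝ)^(m-k-2) / (Nat.factorial (m-k) : ℝ))) := by ring
        _ = (s^(m-2) * Real.exp (-(m:ℝ)*s))
            * ((k:ℝ) * (((m-k:ℕ)):ℝ) * ((k:ℝ)^(k-2) / (Nat.factorial k : ℝ))
              * ((((m-k:ℕ)):ℝ)^(m-k-2) / (Nat.factorial (m-k) : ℝ))) := by rw [hpow, hexp]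
    have hc := hode m hm s hs hsT
    have hFd := (hfder s).hasDerivWithinAt (s := Set.Ici (0:ℝ))
    have he : HasDerivAt (fun u : ℝ => Real.exp ((m:ℝ)*u)) (Real.exp ((m:ℝ)*s) * (m:ℝ)) s := by
      have := (((hasDerivAt_id s).const_mul ((m:ℝ))).exp)
      simpa using this
    have hder0 := (hc.sub hFd).mul he.hasDerivWithinAt
    have hval : ((1 / 2) * ∑ m' ∈ Finset.Ioo 0 m,
            (m' : ℝ) * ((m - m' : ℕ) : ℝ) * c s m' * c s (m - m')
          - (m : ℝ) * c s m
          - ((((m-1:ℕ)):ℝ) * s^(m-2) * (m:ℝ)^(m-2) * Real.exp (-(m:ℝ)*s) / (Nat.factorial m : ℝ)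
            - (m:ℝ) * F s)) * Real.exp ((m:ℝ)*s)
        + (c s m - F s) * (Real.exp ((m:ℝ)*s) * (m:ℝ)) = 0 := by
      rw [hsum]
      ring
    rw [show ((fun s => c s m) - F) s = c s m - F s from rfl, hval] at hder0
    exact hder0
  -- g is constant on [0,t], equal to g 0 = 0
  have hg0 : g 0 = 0 := by
    simp only [hgdef]
    rw [hinit m hm]
    rcases eq_or_lt_of_le hm with h1 | h2
    · subst h1
      norm_num [hFdef]
    · rw [if_neg (by omega)]
      simp only [hFdef]
      rw [zero_pow (by omega : m - 1 ≠ 0)]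
      norm_num
  have hconst := constant_of_has_deriv_right_zero
    (f := g) (a := 0) (b := t)
    (fun u hu => ((hg u hu.1 (lt_of_le_of_lt (ENNReal.ofReal_le_ofReal hu.2) htT)).continuousWithinAt).mono
      (fun y hy => hy.1))
    (fun u hu => (hg u hu.1 (lt_of_le_of_lt (ENNReal.ofReal_le_ofReal (le_of_lt hu.2)) htT)).mono
      (Set.Ici_subset_Ici.mpr hu.1))
  have hgt : g t = 0 := by
    rw [hconst t ⟨ht, le_refl t⟩, hg0]
  have hexp0 : Real.exp ((m:ℝ)*t) ≠ 0 := Real.exp_ne_zero _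
  have : c t m - F t = 0 := by
    simp only [hgdef] at hgt
    exact (mul_eq_zero.1 hgt).resolve_right hexp0
  have := sub_eq_zero.1 this
  simpa [hFdef] using this
end

section
/- For every t with 0 < t ≤ 1, one has Σ_{m=1}^{∞} t^{m-1} m^{m-1} e^{-tm} / m! = 1. Equivalently, the Borel distribution with parameter t, p_t(m) = e^{-tm}(tm)^{m-1}/m! for m ≥ 1, is a probability distribution on {1,2,...} when 0 < t ≤ 1. -/
noncomputable def bg (t : ℝ) (p : ℕ × ℕ) : ℝ :=
  (-1 : ℝ) ^ p.2 * t ^ (p.1 + p.2) * ((p.1 + 1 : ℕ) : ℝ) ^ (p.1 + p.2)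
    / ((p.1 + 1).factorial * p.2.factorial)

lemma pow_self_le_fact_mul_exp (n : ℕ) : (n : ℝ) ^ n ≤ n.factorial * Real.exp n := by
  have h2 : ∑ i ∈ Finset.range (n + 1), (n : ℝ) ^ i / i.factorial ≤ Real.exp n :=
    Real.sum_le_exp_of_nonneg (by positivity) _
  have h3 := Finset.single_le_sum (f := fun i => (n : ℝ) ^ i / i.factorial)
    (fun i _ => by positivity) (Finset.self_mem_range_succ n)
  have hf : (0 : ℝ) < n.factorial := by positivity
  have h1 : (n : ℝ) ^ n / n.factorial ≤ Real.exp n := le_trans (by simpa using h3) h2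
  rw [div_le_iff₀ hf] at h1
  linarith

lemma pow_le_fact_mul_exp (m : ℝ) (hm : 0 ≤ m) (j : ℕ) : m ^ j ≤ j.factorial * Real.exp m := by
  have h2 : ∑ i ∈ Finset.range (j + 1), m ^ i / i.factorial ≤ Real.exp m :=
    Real.sum_le_exp_of_nonneg hm _
  have h3 := Finset.single_le_sum (f := fun i => m ^ i / i.factorial)
    (fun i _ => by positivity) (Finset.self_mem_range_succ j)
  have hf : (0 : ℝ) < j.factorial := by positivity
  have : m ^ j / j.factorial ≤ Real.exp m := le_trans (by simpa using h3) h2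
  rw [div_le_iff₀ hf] at this
  linarith

lemma fact_pow_bound (k : ℕ) : ((k + 1 : ℕ) : ℝ) ^ k / (k + 1).factorial ≤ Real.exp (k + 1) := by
  have h := pow_self_le_fact_mul_exp (k + 1)
  have hk1 : (1:ℝ) ≤ ((k:ℝ)+1) := by push_cast; linarith [Nat.cast_nonneg (α := ℝ) k]
  have hf : (0:ℝ) < (k+1).factorial := by positivity
  rw [div_le_iff₀ hf]
  push_cast at h ⊢
  have hpp : ((k:ℝ)+1) ^ k ≤ ((k:ℝ)+1) ^ (k+1) := pow_le_pow_right₀ hk1 (Nat.le_succ k)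
  linarith

lemma bg_abs_le (t : ℝ) (ht0 : 0 ≤ t) (p : ℕ × ℕ) :
    |bg t p| ≤ (Real.exp 2 * (t * Real.exp 2) ^ p.1) * t ^ p.2 := by
  obtain ⟨k, j⟩ := p
  have hkf : (0:ℝ) < (k+1).factorial := by positivity
  have hjf : (0:ℝ) < (j).factorial := by positivity
  have habs : |bg t (k, j)| = t ^ (k + j) * ((k + 1 : ℕ) : ℝ) ^ (k + j)
      / ((k + 1).factorial * j.factorial) := by
    unfold bg
    rw [abs_div, abs_mul, abs_mul, abs_pow, abs_pow, abs_pow, abs_neg, abs_one, one_pow, one_mul,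
      abs_of_nonneg ht0]
    congr 1
    · push_cast; rw [abs_of_nonneg (by positivity)]
    · rw [abs_of_nonneg (by positivity)]
  rw [habs]
  have e1 : ((k + 1 : ℕ) : ℝ) ^ k / (k + 1).factorial ≤ Real.exp (k + 1) := fact_pow_bound k
  have e2 : ((k + 1 : ℕ) : ℝ) ^ j / j.factorial ≤ Real.exp (k + 1) := by
    rw [div_le_iff₀ hjf]
    have := pow_le_fact_mul_exp ((k + 1 : ℕ) : ℝ) (by positivity) j
    push_cast at this ⊢
    linarith
  have hsplit : t ^ (k + j) * ((k + 1 : ℕ) : ℝ) ^ (k + j) / ((k + 1).factorial * j.factorial)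
      = (t ^ k * t ^ j) * ((((k + 1 : ℕ) : ℝ) ^ k / (k + 1).factorial)
          * (((k + 1 : ℕ) : ℝ) ^ j / j.factorial)) := by
    rw [pow_add, pow_add]; ring
  rw [hsplit]
  have hprod : (((k + 1 : ℕ) : ℝ) ^ k / (k + 1).factorial) * (((k + 1 : ℕ) : ℝ) ^ j / j.factorial)
      ≤ Real.exp (k + 1) * Real.exp (k + 1) :=
    mul_le_mul e1 e2 (by positivity) (Real.exp_pos _).le
  have hexp : Real.exp ((k:ℝ) + 1) * Real.exp ((k:ℝ) + 1) = Real.exp 2 * (Real.exp 2) ^ k := by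
    rw [← Real.exp_nat_mul, ← Real.exp_add, ← Real.exp_add]
    congr 1; push_cast; ring
  calc (t ^ k * t ^ j) * ((((k + 1 : ℕ) : ℝ) ^ k / (k + 1).factorial)
          * (((k + 1 : ℕ) : ℝ) ^ j / j.factorial))
      ≤ (t ^ k * t ^ j) * (Real.exp ((k:ℝ) + 1) * Real.exp ((k:ℝ) + 1)) := by
        apply mul_le_mul_of_nonneg_left _ (by positivity)
        convert hprod using 3 <;> push_cast <;> ring
    _ = (Real.exp 2 * (t * Real.exp 2) ^ k) * t ^ j := by
        rw [hexp, mul_pow]; ring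

lemma bg_summable_abs (t : ℝ) (ht0 : 0 ≤ t) (ht1 : t ≤ 1/8) :
    Summable fun p : ℕ × ℕ => |bg t p| := by
  have he : Real.exp 1 < 2.7182818286 := Real.exp_one_lt_d9
  have he2 : Real.exp 2 < 8 := by
    rw [show (2:ℝ) = 1 + 1 by norm_num, Real.exp_add]
    nlinarith [Real.exp_pos 1]
  have hA : Summable fun k : ℕ => Real.exp 2 * (t * Real.exp 2) ^ k := by
    apply Summable.mul_left
    apply summable_geometric_of_lt_one (by positivity)
    nlinarith [Real.exp_pos 2]
  have hB : Summable fun j : ℕ => t ^ j :=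
    summable_geometric_of_lt_one ht0 (by linarith)
  have hAB : Summable fun p : ℕ × ℕ => (Real.exp 2 * (t * Real.exp 2) ^ p.1) * t ^ p.2 :=
    hA.mul_of_nonneg hB (fun k => by positivity) (fun j => by positivity)
  exact Summable.of_nonneg_of_le (fun p => abs_nonneg _) (fun p => bg_abs_le t ht0 p) hAB

lemma bg_summable (t : ℝ) (ht0 : 0 ≤ t) (ht1 : t ≤ 1/8) : Summable (bg t) :=
  (summable_abs_iff).mp (bg_summable_abs t ht0 ht1)

open Finset in
lemma borel_alt_sum : ∀ N M : ℕ, N < M →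
    ∑ m ∈ Finset.range (M + 1), (-1 : ℝ) ^ m * (M.choose m) * (m : ℝ) ^ N = 0 := by
  intro N
  induction N using Nat.strong_induction_on with
  | _ N ih =>
    intro M hNM
    match N with
    | 0 =>
      have h := Int.alternating_sum_range_choose_of_ne (n := M) (by omega)
      have : ((∑ i ∈ range (M + 1), (-1 : ℤ) ^ i * ↑(M.choose i) : ℤ) : ℝ) = 0 := by
        rw [h]; norm_num
      push_cast at this
      simpa using this
    | N' + 1 =>
      obtain ⟨K, rfl⟩ : ∃ K, M = K + 1 := ⟨M - 1, by omega⟩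
      rw [Finset.sum_range_succ']
      simp only [pow_zero, Nat.cast_zero, one_mul, zero_pow (by omega : N' + 1 ≠ 0), mul_zero,
        add_zero]
      have key : ∀ j ∈ range (K + 1),
          (-1 : ℝ) ^ (j + 1) * ((K + 1).choose (j + 1)) * ((j : ℝ) + 1) ^ (N' + 1)
          = -(K + 1) * ∑ i ∈ range (N' + 1),
              (N'.choose i) * ((-1 : ℝ) ^ j * (K.choose j) * (j : ℝ) ^ i) := by
        intro j _
        have hc : ((K + 1).choose (j + 1) : ℝ) * ((j : ℝ) + 1) = (K + 1) * (K.choose j) := by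
          have h2 := congrArg (Nat.cast : ℕ → ℝ) (Nat.add_one_mul_choose_eq K j)
          push_cast at h2
          linarith
        have hbin : ((j : ℝ) + 1) ^ N' = ∑ i ∈ range (N' + 1), (j : ℝ) ^ i * (N'.choose i) := by
          have := add_pow (j : ℝ) 1 N'
          simpa using this
        rw [pow_succ (-1 : ℝ) j]
        calc (-1 : ℝ) ^ j * -1 * ((K + 1).choose (j + 1)) * ((j : ℝ) + 1) ^ (N' + 1)
            = -((-1 : ℝ) ^ j) * (((K + 1).choose (j + 1) : ℝ) * ((j:ℝ)+1)) * ((j : ℝ) + 1) ^ N' := by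
              ring
          _ = -((-1 : ℝ) ^ j) * ((K + 1) * (K.choose j)) *
                ∑ i ∈ range (N' + 1), (j : ℝ) ^ i * (N'.choose i) := by rw [hc, hbin]
          _ = -(K + 1) * ∑ i ∈ range (N' + 1),
              (N'.choose i) * ((-1 : ℝ) ^ j * (K.choose j) * (j : ℝ) ^ i) := by
              simp only [Finset.mul_sum]
              exact Finset.sum_congr rfl fun i _ => by ring
      have : ∑ j ∈ range (K + 1),
          (-1 : ℝ) ^ (j + 1) * ((K + 1).choose (j + 1)) * (((j:ℕ) + 1 : ℕ) : ℝ) ^ (N' + 1) = 0 := by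
        calc ∑ j ∈ range (K + 1),
            (-1 : ℝ) ^ (j + 1) * ((K + 1).choose (j + 1)) * (((j:ℕ) + 1 : ℕ) : ℝ) ^ (N' + 1)
            = ∑ j ∈ range (K + 1), -(K + 1) * ∑ i ∈ range (N' + 1),
              (N'.choose i) * ((-1 : ℝ) ^ j * (K.choose j) * (j : ℝ) ^ i) := by
              refine Finset.sum_congr rfl fun j hj => ?_
              push_cast
              exact key j hj
          _ = -(K + 1) * ∑ i ∈ range (N' + 1), (N'.choose i) *
                ∑ j ∈ range (K + 1), ((-1 : ℝ) ^ j * (K.choose j) * (j : ℝ) ^ i) := by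
              rw [← Finset.mul_sum, Finset.sum_comm]
              congr 1
              refine Finset.sum_congr rfl fun i _ => ?_
              rw [Finset.mul_sum]
          _ = 0 := by
              rw [Finset.sum_eq_zero, mul_zero]
              intro i hi
              rw [Finset.mem_range] at hi
              rw [ih i hi K (by omega), mul_zero]
      simpa using this

lemma alt_fact_sum (n : ℕ) (hn : 1 ≤ n) :
    ∑ i ∈ Finset.range (n + 1),
      (-1 : ℝ) ^ (n - i) * ((i + 1 : ℕ) : ℝ) ^ n / ((i + 1).factorial * (n - i).factorial) = 0 := by
  have hS := borel_alt_sum n (n + 1) (Nat.lt_succ_self n)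
  rw [Finset.sum_range_succ'] at hS
  simp only [pow_zero, Nat.cast_zero, one_mul, zero_pow (by omega : n ≠ 0), mul_zero,
    add_zero] at hS
  -- hS : ∑ i ∈ range (n+1), (-1)^(i+1) * ((n+1).choose (i+1)) * ((i+1 : ℕ):ℝ)^n = 0
  have key : ∀ i ∈ Finset.range (n + 1),
      (-1 : ℝ) ^ (n - i) * ((i + 1 : ℕ) : ℝ) ^ n / ((i + 1).factorial * (n - i).factorial)
      = ((-1 : ℝ) ^ (n + 1) / (n + 1).factorial)
          * ((-1 : ℝ) ^ (i + 1) * (((n + 1).choose (i + 1) : ℕ) : ℝ) * ((i + 1 : ℕ) : ℝ) ^ n) := by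
    intro i hi
    rw [Finset.mem_range] at hi
    have hin : i ≤ n := by omega
    have hC : (((n + 1).choose (i + 1) : ℕ) : ℝ) * ((i + 1).factorial * (n - i).factorial)
        = (n + 1).factorial := by
      have h := Nat.choose_mul_factorial_mul_factorial (show i + 1 ≤ n + 1 by omega)
      have h2 : n + 1 - (i + 1) = n - i := by omega
      rw [h2] at h
      exact_mod_cast congrArg (Nat.cast : ℕ → ℝ) (by rw [← h]; ring)
    have s1 : (-1 : ℝ) ^ (n - i) * (-1 : ℝ) ^ (i + 1) = (-1 : ℝ) ^ (n + 1) := by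
      rw [← pow_add]; congr 1; omega
    have s2 : (-1 : ℝ) ^ (i + 1) * (-1 : ℝ) ^ (i + 1) = 1 := by
      rw [← pow_add]
      exact Even.neg_one_pow ⟨i + 1, by ring⟩
    have sign : (-1 : ℝ) ^ (n - i) = (-1 : ℝ) ^ (n + 1) * (-1 : ℝ) ^ (i + 1) := by
      linear_combination ((-1 : ℝ) ^ (i + 1)) * s1 - ((-1 : ℝ) ^ (n - i)) * s2
    have hff : (0:ℝ) < (i + 1).factorial * (n - i).factorial := by positivity
    have hnf : (0:ℝ) < (n + 1).factorial := by positivity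
    have h2 : (1 : ℝ) / ((i + 1).factorial * (n - i).factorial)
        = (((n + 1).choose (i + 1) : ℕ) : ℝ) / (n + 1).factorial := by
      rw [div_eq_div_iff hff.ne' hnf.ne']
      linarith [hC]
    calc (-1 : ℝ) ^ (n - i) * ((i + 1 : ℕ) : ℝ) ^ n / ((i + 1).factorial * (n - i).factorial)
        = (-1 : ℝ) ^ (n - i) * ((i + 1 : ℕ) : ℝ) ^ n
            * (1 / ((i + 1).factorial * (n - i).factorial)) := by ring
      _ = (-1 : ℝ) ^ (n - i) * ((i + 1 : ℕ) : ℝ) ^ n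
            * ((((n + 1).choose (i + 1) : ℕ) : ℝ) / (n + 1).factorial) := by rw [h2]
      _ = ((-1 : ℝ) ^ (n + 1) / (n + 1).factorial)
          * ((-1 : ℝ) ^ (i + 1) * (((n + 1).choose (i + 1) : ℕ) : ℝ) * ((i + 1 : ℕ) : ℝ) ^ n) := by
          rw [sign]; ring
  rw [Finset.sum_congr rfl key, ← Finset.mul_sum]
  have : ∑ i ∈ Finset.range (n + 1),
      (-1 : ℝ) ^ (i + 1) * (((n + 1).choose (i + 1) : ℕ) : ℝ) * ((i + 1 : ℕ) : ℝ) ^ n = 0 := by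
    exact_mod_cast hS
  rw [this, mul_zero]

noncomputable def bt (t : ℝ) (k : ℕ) : ℝ :=
  t ^ k * ((k + 1 : ℕ) : ℝ) ^ k * Real.exp (-t * ((k + 1 : ℕ) : ℝ)) / (Nat.factorial (k + 1))

lemma row_eq (t : ℝ) (k : ℕ) : bt t k = ∑' j, bg t (k, j) := by
  unfold bt bg
  rw [Real.exp_eq_exp_ℝ, NormedSpace.exp_eq_tsum_div]
  have h1 : t ^ k * ((k + 1 : ℕ) : ℝ) ^ k * (∑' j : ℕ, (-t * ((k + 1 : ℕ) : ℝ)) ^ j / j.factorial)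
      / (Nat.factorial (k + 1))
      = ∑' j : ℕ, (t ^ k * ((k + 1 : ℕ) : ℝ) ^ k / (Nat.factorial (k + 1)))
          * ((-t * ((k + 1 : ℕ) : ℝ)) ^ j / j.factorial) := by
    rw [tsum_mul_left]; ring
  rw [h1]
  refine tsum_congr fun j => ?_
  push_cast
  rw [neg_mul, neg_pow, mul_pow, pow_add, pow_add]
  ring

lemma antidiag_eval (t : ℝ) (n : ℕ) :
    ∑ p ∈ Finset.HasAntidiagonal.antidiagonal n, bg t p = if n = 0 then 1 else 0 := by
  rcases Nat.eq_zero_or_pos n with h | h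
  · subst h
    rw [if_pos rfl]
    rw [Finset.Nat.antidiagonal_zero, Finset.sum_singleton]
    unfold bg
    norm_num
  · rw [if_neg (by omega), Finset.Nat.sum_antidiagonal_eq_sum_range_succ_mk]
    have key : ∀ i ∈ Finset.range (n + 1), bg t (i, n - i)
        = t ^ n * ((-1 : ℝ) ^ (n - i) * ((i + 1 : ℕ) : ℝ) ^ n
            / ((i + 1).factorial * (n - i).factorial)) := by
      intro i hi
      rw [Finset.mem_range] at hi
      have hin : i + (n - i) = n := by omega
      unfold bg
      simp only [hin]
      ring
    rw [Finset.sum_congr rfl key, ← Finset.mul_sum, alt_fact_sum n (by omega), mul_zero]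

lemma borel_small (t : ℝ) (ht0 : 0 < t) (ht1 : t ≤ 1/8) : ∑' k, bt t k = 1 := by
  have hsum := bg_summable t ht0.le ht1
  have hsig : Summable fun σ : Σ n : ℕ, Finset.HasAntidiagonal.antidiagonal n =>
      bg t (Finset.HasAntidiagonal.sigmaAntidiagonalEquivProd σ) :=
    (Equiv.summable_iff Finset.HasAntidiagonal.sigmaAntidiagonalEquivProd).mpr hsum
  calc ∑' k, bt t k = ∑' k, ∑' j, bg t (k, j) := tsum_congr (row_eq t)
    _ = ∑' p : ℕ × ℕ, bg t p := (Summable.tsum_prod hsum).symm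
    _ = ∑' σ : Σ n : ℕ, Finset.HasAntidiagonal.antidiagonal n, bg t (Finset.HasAntidiagonal.sigmaAntidiagonalEquivProd σ) :=
        (Finset.HasAntidiagonal.sigmaAntidiagonalEquivProd.tsum_eq (bg t)).symm
    _ = ∑' n : ℕ, ∑' c : Finset.HasAntidiagonal.antidiagonal n, bg t (c : ℕ × ℕ) := Summable.tsum_sigma hsig
    _ = ∑' n : ℕ, ∑ p ∈ Finset.HasAntidiagonal.antidiagonal n, bg t p :=
        tsum_congr fun n => Finset.tsum_subtype _ _
    _ = ∑' n : ℕ, if n = 0 then (1:ℝ) else 0 := tsum_congr (antidiag_eval t)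
    _ = 1 := tsum_ite_eq 0 1

lemma texp_mono {x b : ℝ} (hx : 0 ≤ x) (hxb : x ≤ b) (hb : b ≤ 1) :
    x * Real.exp (-x) ≤ b * Real.exp (-b) := by
  have h1 : x ≤ b * Real.exp (x - b) := by
    nlinarith [Real.add_one_le_exp (x - b), Real.exp_pos (x - b)]
  calc x * Real.exp (-x) ≤ b * Real.exp (x - b) * Real.exp (-x) :=
        mul_le_mul_of_nonneg_right h1 (Real.exp_pos _).le
    _ = b * Real.exp (-b) := by rw [mul_assoc, ← Real.exp_add]; ring_nf

set_option maxHeartbeats 1000000 in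
/-- Uniform summable bound for `bt t k` over `t ∈ [0,1]`. -/
lemma bt_bound : ∃ u : ℕ → ℝ, Summable u ∧ ∀ t : ℝ, 0 ≤ t → t ≤ 1 → ∀ k, |bt t k| ≤ u k := by
  obtain ⟨a, ha, hstir⟩ := Stirling.stirlingSeq'_bounded_by_pos_constant
  refine ⟨fun k => (Real.exp 1 / a) * (1 / (((k:ℝ) + 1) * Real.sqrt ((k:ℝ) + 1))), ?_, ?_⟩
  · apply Summable.mul_left
    have h32 : Summable fun n : ℕ => 1 / (n : ℝ) ^ (3/2 : ℝ) :=
      Real.summable_one_div_nat_rpow.mpr (by norm_num)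
    have h32' : Summable fun k : ℕ => 1 / ((k + 1 : ℕ) : ℝ) ^ (3/2 : ℝ) :=
      (summable_nat_add_iff 1).mpr h32
    refine h32'.congr fun k => ?_
    have hpos : (0:ℝ) < (k:ℝ) + 1 := by positivity
    have : ((k + 1 : ℕ) : ℝ) ^ (3/2 : ℝ) = ((k:ℝ) + 1) * Real.sqrt ((k:ℝ) + 1) := by
      push_cast
      rw [show (3/2 : ℝ) = 1 + 1/2 by norm_num, Real.rpow_add hpos, Real.rpow_one,
        ← Real.sqrt_eq_rpow]
    rw [this]
  · intro t ht0 ht1 k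
    have hstirk := hstir k
    unfold Stirling.stirlingSeq at hstirk
    -- (k+1)! ≥ a * √(2(k+1)) * ((k+1)/e)^(k+1)
    have hfackpos : (0:ℝ) < ((k+1).factorial : ℝ) := by positivity
    have hk1 : (0:ℝ) < (k:ℝ) + 1 := by positivity
    have hsq : (0:ℝ) < Real.sqrt (2 * ((k:ℝ)+1)) := Real.sqrt_pos.mpr (by linarith)
    have hde : (0:ℝ) < (((k:ℝ)+1) / Real.exp 1) ^ (k+1) := by positivity
    have hfact_ge : a * (Real.sqrt (2 * ((k:ℝ)+1)) * (((k:ℝ)+1) / Real.exp 1) ^ (k+1))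
        ≤ ((k+1).factorial : ℝ) := by
      rw [le_div_iff₀ (by positivity)] at hstirk
      push_cast at hstirk ⊢
      nlinarith [hstirk]
    -- bt t k = (t e^{-t})^k * e^{-t} * (k+1)^k / (k+1)!
    have hbt : |bt t k| = (t * Real.exp (-t)) ^ k * Real.exp (-t)
        * ((k:ℝ)+1) ^ k / ((k+1).factorial : ℝ) := by
      unfold bt
      rw [abs_of_nonneg (by positivity)]
      have : Real.exp (-t * ((k + 1 : ℕ) : ℝ)) = Real.exp (-t) ^ k * Real.exp (-t) := by
        rw [← Real.exp_nat_mul, ← Real.exp_add]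
        congr 1; push_cast; ring
      rw [this]
      push_cast
      rw [mul_pow]
      ring
    rw [hbt]
    have hte : (t * Real.exp (-t)) ^ k ≤ (Real.exp (-1)) ^ k := by
      apply pow_le_pow_left₀ (by positivity)
      calc t * Real.exp (-t) ≤ 1 * Real.exp (-1) := texp_mono ht0 ht1 le_rfl
        _ = Real.exp (-1) := one_mul _
    have het : Real.exp (-t) ≤ 1 := by rw [← Real.exp_zero]; exact Real.exp_le_exp.mpr (by linarith)
    -- (k+1)^k / (k+1)! ≤ e^{k+1} / (a * √(2(k+1)) * (k+1))
    have hmain : ((k:ℝ)+1) ^ k / ((k+1).factorial : ℝ)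
        ≤ Real.exp 1 ^ (k+1) / (a * Real.sqrt (2 * ((k:ℝ)+1)) * (((k:ℝ)+1))) := by
      rw [div_le_div_iff₀ hfackpos (by positivity)]
      have hcancel : (((k:ℝ)+1) / Real.exp 1) ^ (k+1) * Real.exp 1 ^ (k+1)
          = ((k:ℝ)+1) ^ (k+1) := by
        rw [div_pow, div_mul_cancel₀]
        exact (by positivity : (0:ℝ) < Real.exp 1 ^ (k+1)).ne'
      calc ((k:ℝ)+1) ^ k * (a * Real.sqrt (2 * ((k:ℝ)+1)) * ((k:ℝ)+1))
          = (a * (Real.sqrt (2 * ((k:ℝ)+1)) * (((k:ℝ)+1) / Real.exp 1) ^ (k+1)))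
              * Real.exp 1 ^ (k+1) := by
            linear_combination (-(a * Real.sqrt (2 * ((k:ℝ)+1)))) * hcancel
        _ ≤ ((k+1).factorial : ℝ) * Real.exp 1 ^ (k+1) :=
            mul_le_mul_of_nonneg_right hfact_ge (by positivity)
        _ = Real.exp 1 ^ (k+1) * ((k+1).factorial : ℝ) := mul_comm _ _
    set m : ℝ := (k:ℝ) + 1 with hm
    have hsqle : Real.sqrt m ≤ Real.sqrt (2 * m) := Real.sqrt_le_sqrt (by rw [hm]; linarith)
    have hsqpos : (0:ℝ) < Real.sqrt m := Real.sqrt_pos.mpr hk1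
    have hstep1 : (t * Real.exp (-t)) ^ k * Real.exp (-t) ≤ Real.exp (-1) ^ k := by
      nlinarith [hte, het, pow_nonneg (mul_nonneg ht0 (Real.exp_pos (-t)).le) k,
        (Real.exp_pos (-t)).le, pow_nonneg (Real.exp_pos (-1)).le k]
    have hee : Real.exp (-1) ^ k * Real.exp 1 ^ (k+1) = Real.exp 1 := by
      rw [← Real.exp_nat_mul, ← Real.exp_nat_mul, ← Real.exp_add]
      congr 1; push_cast; ring
    have step3 : Real.exp (-1) ^ k * (Real.exp 1 ^ (k+1) / (a * Real.sqrt (2 * m) * m))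
        = Real.exp 1 / (a * Real.sqrt (2 * m) * m) := by
      rw [show Real.exp (-1) ^ k * (Real.exp 1 ^ (k+1) / (a * Real.sqrt (2 * m) * m))
          = (Real.exp (-1) ^ k * Real.exp 1 ^ (k+1)) / (a * Real.sqrt (2 * m) * m) by ring, hee]
    have step4 : Real.exp 1 / (a * Real.sqrt (2 * m) * m)
        ≤ (Real.exp 1 / a) * (1 / (m * Real.sqrt m)) := by
      rw [show (Real.exp 1 / a) * (1 / (m * Real.sqrt m))
          = Real.exp 1 / (a * (m * Real.sqrt m)) by rw [div_mul_div_comm, mul_one]]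
      rw [div_le_div_iff_of_pos_left (Real.exp_pos 1) (by positivity) (by positivity)]
      have h1m : (1:ℝ) ≤ m := by rw [hm]; push_cast; linarith [Nat.cast_nonneg (α := ℝ) k]
      nlinarith [mul_le_mul_of_nonneg_left hsqle (mul_nonneg ha.le hk1.le)]
    calc (t * Real.exp (-t)) ^ k * Real.exp (-t) * m ^ k / ((k+1).factorial : ℝ)
        = ((t * Real.exp (-t)) ^ k * Real.exp (-t)) * (m ^ k / ((k+1).factorial : ℝ)) := by
          ring
      _ ≤ Real.exp (-1) ^ k * (m ^ k / ((k+1).factorial : ℝ)) :=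
          mul_le_mul_of_nonneg_right hstep1 (by positivity)
      _ ≤ Real.exp (-1) ^ k * (Real.exp 1 ^ (k+1) / (a * Real.sqrt (2 * m) * m)) :=
          mul_le_mul_of_nonneg_left hmain (by positivity)
      _ = Real.exp 1 / (a * Real.sqrt (2 * m) * m) := step3
      _ ≤ (Real.exp 1 / a) * (1 / (m * Real.sqrt m)) := step4

noncomputable def θf (t : ℝ) : ℝ := ∑' k, bt t k

noncomputable def Gc (z : ℂ) : ℂ :=
  ∑' k : ℕ, z ^ k * ((k + 1 : ℕ) : ℂ) ^ k * Complex.exp (-z * ((k + 1 : ℕ) : ℂ))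
    / ((k + 1).factorial : ℂ)

lemma Gc_real (t : ℝ) : Gc (t : ℂ) = ((θf t : ℝ) : ℂ) := by
  unfold Gc θf
  rw [Complex.ofReal_tsum]
  refine tsum_congr fun k => ?_
  unfold bt
  push_cast [Complex.ofReal_exp]
  ring

def Srect (b δ : ℝ) : Set ℂ := {z | 0 < z.re ∧ z.re < b ∧ -δ < z.im ∧ z.im < δ}

lemma Srect_eq (b δ : ℝ) : Srect b δ
    = (Complex.re ⁻¹' Set.Ioo 0 b) ∩ (Complex.im ⁻¹' Set.Ioo (-δ) δ) := by
  ext z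
  simp [Srect, Set.mem_Ioo, and_assoc]

lemma Srect_open (b δ : ℝ) : IsOpen (Srect b δ) := by
  rw [Srect_eq]
  exact (isOpen_Ioo.preimage Complex.continuous_re).inter
    (isOpen_Ioo.preimage Complex.continuous_im)

lemma Srect_preconnected (b δ : ℝ) : IsPreconnected (Srect b δ) := by
  have hconv : Convex ℝ (Srect b δ) := by
    have h1 : Srect b δ = {z : ℂ | 0 < z.re} ∩ {z : ℂ | z.re < b}
        ∩ {z : ℂ | -δ < z.im} ∩ {z : ℂ | z.im < δ} := by
      ext z; simp [Srect]; tauto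
    rw [h1]
    exact (((convex_halfSpace_re_gt 0).inter (convex_halfSpace_re_lt b)).inter
      (convex_halfSpace_im_gt (-δ))).inter (convex_halfSpace_im_lt δ)
  exact hconv.isPreconnected

lemma Gc_term_norm_le {b : ℝ} (hb0 : 0 < b) (hb1 : b < 1) :
    ∀ k : ℕ, ∀ z ∈ Srect b ((1 - b * Real.exp (1 - b)) / (2 * Real.exp 1)),
      ‖z ^ k * ((k + 1 : ℕ) : ℂ) ^ k * Complex.exp (-z * ((k + 1 : ℕ) : ℂ))
        / ((k + 1).factorial : ℂ)‖
      ≤ Real.exp 1 * ((1 + b * Real.exp (1 - b)) / 2) ^ k := by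
  set c : ℝ := b * Real.exp (1 - b) with hc
  set δ : ℝ := (1 - c) / (2 * Real.exp 1) with hδ
  set q : ℝ := (1 + c) / 2 with hq
  have hc0 : 0 < c := by positivity
  have hc1 : c < 1 := by
    have h := Real.add_one_lt_exp (x := b - 1) (by intro h; apply absurd hb1; linarith [h] )
    have he : Real.exp (1 - b) * Real.exp (b - 1) = 1 := by
      rw [← Real.exp_add]; norm_num
    nlinarith [Real.exp_pos (1 - b), Real.exp_pos (b - 1)]
  intro k z hz
  obtain ⟨hx0, hxb, him1, him2⟩ := hz
  set x : ℝ := z.re with hx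
  -- norm computation
  have hnorm : ‖z ^ k * ((k + 1 : ℕ) : ℂ) ^ k * Complex.exp (-z * ((k + 1 : ℕ) : ℂ))
      / ((k + 1).factorial : ℂ)‖
      = ‖z‖ ^ k * ((k + 1 : ℕ) : ℝ) ^ k * Real.exp (-x * ((k:ℝ) + 1))
        / ((k + 1).factorial : ℝ) := by
    have hre : (-z * ((k + 1 : ℕ) : ℂ)).re = -x * ((k:ℝ) + 1) := by
      rw [Complex.mul_re, Complex.neg_re, Complex.neg_im, Complex.natCast_re, Complex.natCast_im]
      push_cast
      ring
    simp only [norm_div, norm_mul, norm_pow, Complex.norm_natCast,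
      Complex.norm_exp, hre]
  rw [hnorm]
  have hzle : ‖z‖ ≤ x + δ := by
    calc ‖z‖ ≤ |z.re| + |z.im| := Complex.norm_le_abs_re_add_abs_im z
      _ ≤ x + δ := by
        rw [abs_of_pos hx0]
        have : |z.im| < δ := abs_lt.mpr ⟨him1, him2⟩
        linarith
  have hδ0 : 0 < δ := by
    rw [hδ]
    exact div_pos (by linarith) (by positivity)
  have hfp : ((k + 1 : ℕ) : ℝ) ^ k / ((k + 1).factorial : ℝ) ≤ Real.exp ((k:ℝ) + 1) :=
    fact_pow_bound k
  have hq1 : (x + δ) * Real.exp (1 - x) ≤ q := by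
    have h1 : x * Real.exp (1 - x) ≤ c := by
      have := texp_mono hx0.le (le_of_lt hxb) hb1.le
      have hsplit : Real.exp (1 - x) = Real.exp 1 * Real.exp (-x) := by
        rw [← Real.exp_add]; ring_nf
      have hsplit2 : Real.exp (1 - b) = Real.exp 1 * Real.exp (-b) := by
        rw [← Real.exp_add]; ring_nf
      rw [hsplit]
      rw [hc, hsplit2]
      nlinarith [Real.exp_pos 1]
    have h2 : δ * Real.exp (1 - x) ≤ δ * Real.exp 1 := by
      apply mul_le_mul_of_nonneg_left _ hδ0.le
      exact Real.exp_le_exp.mpr (by linarith)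
    have h3 : δ * Real.exp 1 = (1 - c) / 2 := by
      rw [hδ]
      field_simp
    nlinarith [h1, h2, h3]
  have hex : Real.exp (1 - x) ≤ Real.exp 1 := Real.exp_le_exp.mpr (by linarith)
  have hq0 : 0 ≤ q := by rw [hq]; linarith
  -- main estimate
  have key : ‖z‖ ^ k * ((k + 1 : ℕ) : ℝ) ^ k * Real.exp (-x * ((k:ℝ) + 1))
      / ((k + 1).factorial : ℝ)
      ≤ ((x + δ) * Real.exp (1 - x)) ^ k * Real.exp (1 - x) := by
    have e1 : ‖z‖ ^ k ≤ (x + δ) ^ k := pow_le_pow_left₀ (norm_nonneg z) hzle k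
    have hexp_split : Real.exp ((k:ℝ) + 1) * Real.exp (-x * ((k:ℝ) + 1))
        = Real.exp (1 - x) ^ (k + 1) := by
      rw [← Real.exp_nat_mul, ← Real.exp_add]
      congr 1; push_cast; ring
    calc ‖z‖ ^ k * ((k + 1 : ℕ) : ℝ) ^ k * Real.exp (-x * ((k:ℝ) + 1))
        / ((k + 1).factorial : ℝ)
        = ‖z‖ ^ k * (((k + 1 : ℕ) : ℝ) ^ k / ((k + 1).factorial : ℝ))
            * Real.exp (-x * ((k:ℝ) + 1)) := by ring
      _ ≤ (x + δ) ^ k * Real.exp ((k:ℝ) + 1) * Real.exp (-x * ((k:ℝ) + 1)) := by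
          apply mul_le_mul_of_nonneg_right _ (Real.exp_pos _).le
          apply mul_le_mul e1 hfp (by positivity) (by positivity)
      _ = (x + δ) ^ k * Real.exp (1 - x) ^ (k + 1) := by
          rw [mul_assoc, hexp_split]
      _ = ((x + δ) * Real.exp (1 - x)) ^ k * Real.exp (1 - x) := by
          rw [mul_pow, pow_succ]; ring
  refine key.trans ?_
  have h5 : ((x + δ) * Real.exp (1 - x)) ^ k ≤ q ^ k :=
    pow_le_pow_left₀ (by positivity) hq1 k
  calc ((x + δ) * Real.exp (1 - x)) ^ k * Real.exp (1 - x)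
      ≤ q ^ k * Real.exp 1 := mul_le_mul h5 hex (Real.exp_pos _).le (by positivity)
    _ = Real.exp 1 * q ^ k := mul_comm _ _

lemma texp_lt_one {b : ℝ} (hb0 : 0 < b) (hb1 : b < 1) : b * Real.exp (1 - b) < 1 := by
  have h := Real.add_one_lt_exp (x := b - 1) (by intro h; apply absurd hb1; linarith [h])
  have he : Real.exp (1 - b) * Real.exp (b - 1) = 1 := by
    rw [← Real.exp_add]; norm_num
  nlinarith [Real.exp_pos (1 - b), Real.exp_pos (b - 1)]

lemma Gc_differentiable_term (k : ℕ) :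
    Differentiable ℂ fun z : ℂ => z ^ k * ((k + 1 : ℕ) : ℂ) ^ k
      * Complex.exp (-z * ((k + 1 : ℕ) : ℂ)) / ((k + 1).factorial : ℂ) := by
  apply Differentiable.div_const
  apply Differentiable.mul
  · exact (differentiable_pow k).mul_const _
  · exact Complex.differentiable_exp.comp (differentiable_id.neg.mul_const _)

lemma Gc_analytic {b : ℝ} (hb0 : 0 < b) (hb1 : b < 1) :
    AnalyticOnNhd ℂ Gc (Srect b ((1 - b * Real.exp (1 - b)) / (2 * Real.exp 1))) := by
  have hq1 : (1 + b * Real.exp (1 - b)) / 2 < 1 := by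
    have := texp_lt_one hb0 hb1
    linarith
  have hq0 : (0:ℝ) ≤ (1 + b * Real.exp (1 - b)) / 2 := by positivity
  have hu : Summable fun k : ℕ => Real.exp 1 * ((1 + b * Real.exp (1 - b)) / 2) ^ k :=
    (summable_geometric_of_lt_one hq0 hq1).mul_left _
  have htu := tendstoUniformlyOn_tsum_nat hu
    (f := fun (k : ℕ) (z : ℂ) => z ^ k * ((k + 1 : ℕ) : ℂ) ^ k
      * Complex.exp (-z * ((k + 1 : ℕ) : ℂ)) / ((k + 1).factorial : ℂ))
    (fun k z hz => Gc_term_norm_le hb0 hb1 k z hz)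
  have hdiff : DifferentiableOn ℂ Gc
      (Srect b ((1 - b * Real.exp (1 - b)) / (2 * Real.exp 1))) := by
    apply TendstoLocallyUniformlyOn.differentiableOn htu.tendstoLocallyUniformlyOn
    · filter_upwards with N
      exact DifferentiableOn.fun_sum fun i _ => (Gc_differentiable_term i).differentiableOn
    · exact Srect_open _ _
  exact hdiff.analyticOnNhd (Srect_open _ _)

lemma borel_small' (t : ℝ) (ht0 : 0 < t) (ht1 : t ≤ 1/8) : θf t = 1 := borel_small t ht0 ht1

lemma Gc_eq_one {b : ℝ} (hb : 1/16 < b) (hb1 : b < 1) :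
    Set.EqOn Gc (fun _ => (1:ℂ)) (Srect b ((1 - b * Real.exp (1 - b)) / (2 * Real.exp 1))) := by
  have hb0 : (0:ℝ) < b := by linarith
  have hδ0 : (0:ℝ) < (1 - b * Real.exp (1 - b)) / (2 * Real.exp 1) :=
    div_pos (by linarith [texp_lt_one hb0 hb1]) (by positivity)
  have h16 : ((1/16 : ℝ) : ℂ) ∈ Srect b ((1 - b * Real.exp (1 - b)) / (2 * Real.exp 1)) := by
    refine ⟨?_, ?_, ?_, ?_⟩ <;> simp [Complex.ofReal_re, Complex.ofReal_im] <;> linarith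
  apply AnalyticOnNhd.eqOn_of_preconnected_of_frequently_eq (Gc_analytic hb0 hb1)
    analyticOnNhd_const (Srect_preconnected _ _) h16
  -- frequently: real points near 1/16 where Gc = 1
  have hvals : ∀ n : ℕ, Gc ((1/16 + 1/((n:ℝ) + 32) : ℝ) : ℂ) = 1 := by
    intro n
    have hn0 : (0:ℝ) < (n:ℝ) + 32 := by positivity
    have h1 : (0:ℝ) < 1/16 + 1/((n:ℝ) + 32) := by positivity
    have h2 : 1/16 + 1/((n:ℝ) + 32) ≤ 1/8 := by
      have : 1/((n:ℝ) + 32) ≤ 1/32 := by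
        apply div_le_div_of_nonneg_left one_pos.le (by norm_num)
        · push_cast; linarith [Nat.cast_nonneg (α := ℝ) n]
      linarith
    rw [Gc_real, borel_small' _ h1 h2, Complex.ofReal_one]
  have htend : Filter.Tendsto (fun n : ℕ => ((1/16 + 1/((n:ℝ) + 32) : ℝ) : ℂ)) Filter.atTop
      (nhdsWithin ((1/16 : ℝ) : ℂ) {z | z ≠ ((1/16 : ℝ) : ℂ)}) := by
    apply tendsto_nhdsWithin_of_tendsto_nhds_of_eventually_within
    · have hr : Filter.Tendsto (fun n : ℕ => (1/16 + 1/((n:ℝ) + 32) : ℝ)) Filter.atTop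
          (nhds (1/16 : ℝ)) := by
        have h0 : Filter.Tendsto (fun n : ℕ => 1/((n:ℝ) + 32)) Filter.atTop (nhds 0) := by
          simp only [one_div]
          apply Filter.Tendsto.comp tendsto_inv_atTop_zero
          exact Filter.tendsto_atTop_add_const_right _ _ tendsto_natCast_atTop_atTop
        have := Filter.Tendsto.const_add (1/16 : ℝ) h0
        simpa using this
      have := (Complex.continuous_ofReal.tendsto (1/16 : ℝ)).comp hr
      exact this
    · filter_upwards with n
      simp only [Set.mem_setOf_eq, ne_eq, Complex.ofReal_inj]
      have hn0 : (0:ℝ) < 1/((n:ℝ) + 32) := by positivity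
      intro h
      nlinarith [h]
  exact htend.frequently (Filter.Frequently.of_forall fun n => hvals n)

lemma θf_eq_one_Ioo (t : ℝ) (ht : t ∈ Set.Ioo (0:ℝ) 1) : θf t = 1 := by
  obtain ⟨ht0, ht1⟩ := ht
  rcases le_or_gt t (1/8) with h | h
  · exact borel_small' t ht0 h
  · set b : ℝ := (1 + t) / 2 with hbdef
    have hb : 1/16 < b := by rw [hbdef]; linarith
    have hb1 : b < 1 := by rw [hbdef]; linarith
    have hδ0 : (0:ℝ) < (1 - b * Real.exp (1 - b)) / (2 * Real.exp 1) :=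
      div_pos (by linarith [texp_lt_one (by linarith : (0:ℝ) < b) hb1]) (by positivity)
    have hmem : ((t : ℝ) : ℂ) ∈ Srect b ((1 - b * Real.exp (1 - b)) / (2 * Real.exp 1)) := by
      refine ⟨?_, ?_, ?_, ?_⟩ <;> simp [Complex.ofReal_re, Complex.ofReal_im] <;>
        first
          | linarith
          | (rw [hbdef]; linarith)
    have := Gc_eq_one hb hb1 hmem
    rw [Gc_real] at this
    simp only at this
    exact_mod_cast this

lemma bt_continuous (k : ℕ) : Continuous fun t : ℝ => bt t k := by
  unfold bt
  apply Continuous.div_const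
  apply Continuous.mul
  · exact (continuous_pow k).mul continuous_const
  · exact Real.continuous_exp.comp (continuous_neg.mul continuous_const)

lemma θf_continuousOn : ContinuousOn θf (Set.Icc (0:ℝ) 1) := by
  obtain ⟨u, hu, hb⟩ := bt_bound
  have htu := tendstoUniformlyOn_tsum_nat hu (f := fun (k : ℕ) (t : ℝ) => bt t k)
    (s := Set.Icc (0:ℝ) 1) (fun k t ht => by
      rw [Real.norm_eq_abs]; exact hb t ht.1 ht.2 k)
  apply htu.continuousOn
  refine Filter.Frequently.of_forall fun N => ?_
  exact (continuous_finset_sum _ fun k _ => bt_continuous k).continuousOn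

lemma θf_one : θf 1 = 1 := by
  have hc : ContinuousWithinAt θf (Set.Icc (0:ℝ) 1) 1 :=
    θf_continuousOn.continuousWithinAt (by norm_num)
  have hseq : Filter.Tendsto (fun n : ℕ => 1 - 1/((n:ℝ) + 2)) Filter.atTop
      (nhdsWithin (1:ℝ) (Set.Icc (0:ℝ) 1)) := by
    apply tendsto_nhdsWithin_of_tendsto_nhds_of_eventually_within
    · have h0 : Filter.Tendsto (fun n : ℕ => 1/((n:ℝ) + 2)) Filter.atTop (nhds 0) := by
        simp only [one_div]
        apply Filter.Tendsto.comp tendsto_inv_atTop_zero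
        exact Filter.tendsto_atTop_add_const_right _ _ tendsto_natCast_atTop_atTop
      have := Filter.Tendsto.const_sub (1:ℝ) h0
      simpa using this
    · filter_upwards with n
      have hn2 : (0:ℝ) < (n:ℝ) + 2 := by positivity
      have h1 : 1/((n:ℝ) + 2) ≤ 1/2 := by
        apply div_le_div_of_nonneg_left one_pos.le (by norm_num)
        · push_cast; linarith [Nat.cast_nonneg (α := ℝ) n]
      have h2 : (0:ℝ) < 1/((n:ℝ) + 2) := by positivity
      rw [Set.mem_Icc]
      constructor <;> linarith
  have hvals : ∀ n : ℕ, θf (1 - 1/((n:ℝ) + 2)) = 1 := by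
    intro n
    have hn2 : (0:ℝ) < (n:ℝ) + 2 := by positivity
    have h1 : 1/((n:ℝ) + 2) ≤ 1/2 := by
      apply div_le_div_of_nonneg_left one_pos.le (by norm_num)
      · push_cast; linarith [Nat.cast_nonneg (α := ℝ) n]
    have h2 : (0:ℝ) < 1/((n:ℝ) + 2) := by positivity
    exact θf_eq_one_Ioo _ ⟨by linarith, by linarith⟩
  have hlim : Filter.Tendsto (fun n : ℕ => θf (1 - 1/((n:ℝ) + 2))) Filter.atTop
      (nhds (θf 1)) := hc.tendsto.comp hseq
  have hlim' : Filter.Tendsto (fun n : ℕ => θf (1 - 1/((n:ℝ) + 2))) Filter.atTop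
      (nhds 1) := by
    rw [show (fun n : ℕ => θf (1 - 1/((n:ℝ) + 2))) = fun _ : ℕ => (1:ℝ) from funext hvals]
    exact tendsto_const_nhds
  exact tendsto_nhds_unique hlim hlim'

/-- **The Borel distribution with parameter `t ∈ (0,1]` is a probability distribution.**
For every `t` with `0 < t ≤ 1`, one has `Σ_{m=1}^∞ t^(m-1) m^(m-1) e^(-tm) / m! = 1`
(the sum below runs over `m = k + 1`, `k ∈ ℕ`, i.e. over the masses `m ≥ 1`). -/
theorem borel_is_probability (t : ℝ) (ht0 : 0 < t) (ht1 : t ≤ 1) :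
    ∑' k : ℕ, t ^ k * ((k + 1 : ℕ) : ℝ) ^ k * Real.exp (-t * ((k + 1 : ℕ) : ℝ))
        / (Nat.factorial (k + 1)) = 1 := by
  have : θf t = 1 := by
    rcases lt_or_eq_of_le ht1 with h | h
    · exact θf_eq_one_Ioo t ⟨ht0, h⟩
    · rw [h]; exact θf_one
  exact this
end

section
/- For every t > 1: (a) there is a unique x ∈ (0,1) such that e^{t(x-1)} = x; (b) θ(t) := Σ_{m=1}^{∞} t^{m-1} m^{m-1} e^{-tm} / m! lies in (0,1) and satisfies e^{t(θ(t)-1)} = θ(t); in particular θ(t) < 1 for t > 1. -/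
open Finset

/-- Finite differences kill low-degree polynomials. -/
lemma findiff (n : ℕ) : ∀ j < n, ∀ x : ℝ,
    ∑ k ∈ range (n+1), (-1:ℝ)^k * (n.choose k) * (x+k)^j = 0 := by
  induction n with
  | zero => intro j hj; omega
  | succ n ih =>
    intro j hj x
    set p : ℕ → ℝ := fun k => (-1:ℝ)^k * (n.choose k) * (x+k)^j with hp
    set h : ℕ → ℝ := fun k => (-1:ℝ)^k * (n.choose k) * (x+1+k)^j with hh
    have key : ∑ k ∈ range (n+2), (-1:ℝ)^k * ((n+1).choose k) * (x+k)^j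
        = ∑ k ∈ range (n+1), (p k - h k) := by
      rw [Finset.sum_range_succ' (fun k => (-1:ℝ)^k * ((n+1).choose k) * (x+k)^j) (n+1)]
      have e1 : ∀ k ∈ range (n+1), (-1:ℝ)^(k+1) * ((n+1).choose (k+1)) * (x+(k+1:ℕ))^j
          = -h k + p (k+1) := by
        intro k hk
        rw [Nat.choose_succ_succ]
        simp only [hp, hh]
        push_cast
        ring
      rw [Finset.sum_congr rfl e1, Finset.sum_add_distrib]
      have e2 : ∑ k ∈ range (n+1), p (k+1) = ∑ k ∈ range (n+2), p k - p 0 := by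
        rw [Finset.sum_range_succ' p (n+1)]; ring
      rw [e2, Finset.sum_range_succ p (n+1)]
      have e3 : p (n+1) = 0 := by simp [hp, Nat.choose_succ_self]
      have e4 : p 0 = (-1:ℝ)^0 * ((n+1).choose 0) * (x+(0:ℕ))^j := by
        simp [hp]
      rw [e3, e4]
      push_cast
      rw [Finset.sum_sub_distrib, Finset.sum_neg_distrib]
      ring
    rw [key]
    have expand : ∀ k : ℕ, p k - h k
        = -∑ i ∈ range j, (j.choose i : ℝ) * ((-1:ℝ)^k * (n.choose k) * (x+k)^i) := by
      intro k
      have hb : (x+1+k : ℝ) = (x+k) + 1 := by ring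
      have hpow : (x+1+k:ℝ)^j = ∑ i ∈ range (j+1), (x+k)^i * 1^(j-i) * (j.choose i) := by
        rw [hb, add_pow]
      rw [hp, hh]
      simp only [hpow, one_pow, mul_one]
      rw [Finset.sum_range_succ]
      simp only [Nat.choose_self, Nat.cast_one, mul_one]
      have hs : ∑ i ∈ range j, (-1:ℝ)^k * (n.choose k) * ((x+k)^i * (j.choose i))
          = ∑ i ∈ range j, (j.choose i : ℝ) * ((-1:ℝ)^k * (n.choose k) * (x+k)^i) :=
        Finset.sum_congr rfl (fun i _ => by ring)
      rw [mul_add, Finset.mul_sum, hs]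
      ring
    rw [Finset.sum_congr rfl (fun k _ => expand k), Finset.sum_neg_distrib, Finset.sum_comm]
    rw [neg_eq_zero]
    apply Finset.sum_eq_zero
    intro i hi
    rw [← Finset.mul_sum, ih i (by have := Finset.mem_range.mp hi; omega) x, mul_zero]

/-- Abel's binomial identity (special polynomial form), proved by induction on `n`,
differentiating in `y`. -/
lemma choose_step {n k : ℕ} (h : k < n) :
    (n+1).choose (k+1) * (n-k) = (n+1) * n.choose (k+1) := by
  have h1 := Nat.add_one_mul_choose_eq n (n-k-1)
  have e1 : n - k - 1 + 1 = n - k := by omega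
  have e2 : n - (k+1) = n - k - 1 := by omega
  have e3 : n + 1 - (k+1) = n - k := by omega
  have s1 : n.choose (n-k-1) = n.choose (k+1) := by
    rw [← e2, Nat.choose_symm (by omega)]
  have s2 : (n+1).choose (n-k) = (n+1).choose (k+1) := by
    rw [← e3, Nat.choose_symm (by omega)]
  simp only [Nat.succ_eq_add_one, e1, s1, s2] at h1
  omega

lemma abel_identity (n : ℕ) : ∀ x y : ℝ,
    (x+y+n)^n = (y+n)^n + ∑ k ∈ range n,
      ((n.choose (k+1) : ℝ)) * x * (x+(k+1:ℕ))^k * (y+n-(k+1:ℕ))^(n-(k+1)) := by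
  induction n with
  | zero => intro x y; simp
  | succ n ih =>
    intro x y
    set f : ℝ → ℝ := fun y => (x+y+((n+1:ℕ):ℝ))^(n+1) - (y+((n+1:ℕ):ℝ))^(n+1)
      - ∑ k ∈ range (n+1),
        (((n+1).choose (k+1) : ℝ)) * x * (x+((k+1:ℕ):ℝ))^k * (y+((n+1:ℕ):ℝ)-((k+1:ℕ):ℝ))^((n+1)-(k+1))
      with hf
    have hderiv : ∀ y : ℝ, HasDerivAt f 0 y := by
      intro y
      have h1 : HasDerivAt (fun y : ℝ => (x+y+((n+1:ℕ):ℝ))^(n+1))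
          (((n+1 : ℕ) : ℝ) * (x+y+((n+1:ℕ):ℝ))^n * 1) y := by
        have h : HasDerivAt (fun y : ℝ => x+y+((n+1:ℕ):ℝ)) 1 y :=
          ((hasDerivAt_id y).const_add x).add_const _
        simpa using h.fun_pow (n+1)
      have h2 : HasDerivAt (fun y : ℝ => (y+((n+1:ℕ):ℝ))^(n+1))
          (((n+1 : ℕ) : ℝ) * (y+((n+1:ℕ):ℝ))^n * 1) y := by
        have h : HasDerivAt (fun y : ℝ => y+((n+1:ℕ):ℝ)) 1 y := (hasDerivAt_id y).add_const _
        simpa using h.fun_pow (n+1)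
      have h3 : ∀ k ∈ range (n+1), HasDerivAt
          (fun y : ℝ => (((n+1).choose (k+1) : ℝ)) * x * (x+((k+1:ℕ):ℝ))^k * (y+((n+1:ℕ):ℝ)-((k+1:ℕ):ℝ))^((n+1)-(k+1)))
          ((((n+1).choose (k+1) : ℝ)) * x * (x+((k+1:ℕ):ℝ))^k *
            ((((n+1)-(k+1) : ℕ) : ℝ) * (y+((n+1:ℕ):ℝ)-((k+1:ℕ):ℝ))^((n+1)-(k+1)-1) * 1)) y := by
        intro k hk
        have h : HasDerivAt (fun y : ℝ => y+((n+1:ℕ):ℝ)-((k+1:ℕ):ℝ)) 1 y := by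
          simpa using ((hasDerivAt_id y).add_const ((n+1:ℕ):ℝ)).sub_const ((k+1:ℕ):ℝ)
        exact (h.pow _).const_mul _
      have hsum := HasDerivAt.fun_sum h3
      have htot := (h1.sub h2).sub hsum
      have hzero : (((n+1 : ℕ):ℝ) * (x+y+((n+1:ℕ):ℝ))^n * 1 - ((n+1 : ℕ):ℝ) * (y+((n+1:ℕ):ℝ))^n * 1)
          - (∑ k ∈ range (n+1), (((n+1).choose (k+1) : ℝ)) * x * (x+((k+1:ℕ):ℝ))^k *
            ((((n+1)-(k+1) : ℕ):ℝ) * (y+((n+1:ℕ):ℝ)-((k+1:ℕ):ℝ))^((n+1)-(k+1)-1) * 1)) = 0 := by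
        have hih := ih x (y+1)
        have hsum2 : ∑ k ∈ range (n+1), (((n+1).choose (k+1) : ℝ)) * x * (x+((k+1:ℕ):ℝ))^k *
            ((((n+1)-(k+1) : ℕ):ℝ) * (y+((n+1:ℕ):ℝ)-((k+1:ℕ):ℝ))^((n+1)-(k+1)-1) * 1)
            = ((n+1 : ℕ) : ℝ) * ∑ k ∈ range n,
              ((n.choose (k+1) : ℝ)) * x * (x+((k+1:ℕ):ℝ))^k * ((y+1)+(n:ℝ)-((k+1:ℕ):ℝ))^(n-(k+1)) := by
          rw [Finset.sum_range_succ]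
          have hlast : (((n+1).choose (n+1) : ℝ)) * x * (x+((n+1:ℕ):ℝ))^n *
              ((((n+1)-(n+1) : ℕ):ℝ) * (y+((n+1:ℕ):ℝ)-((n+1:ℕ):ℝ))^((n+1)-(n+1)-1) * 1) = 0 := by
            simp
          rw [hlast, add_zero, Finset.mul_sum]
          apply Finset.sum_congr rfl
          intro k hk
          have hkn : k < n := Finset.mem_range.mp hk
          have hc : ((((n+1).choose (k+1)) * ((n+1)-(k+1)) : ℕ) : ℝ)
              = (((n+1) * n.choose (k+1) : ℕ) : ℝ) := by
            norm_cast
            have e : n + 1 - (k+1) = n - k := by omega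
            rw [e]
            exact choose_step hkn
          have he : (n+1)-(k+1)-1 = n-(k+1) := by omega
          have hb : y+((n+1:ℕ):ℝ)-((k+1:ℕ):ℝ) = (y+1)+(n:ℝ)-((k+1:ℕ):ℝ) := by
            push_cast; ring
          rw [he, hb]
          push_cast at hc ⊢
          linear_combination hc * (x * (x + ((k:ℝ) + 1)) ^ k * (y + 1 + (n:ℝ) - ((k:ℝ) + 1)) ^ (n - (k + 1)))
        rw [hsum2]
        have hb1 : x+(y+1)+(n:ℝ) = x+y+((n+1:ℕ):ℝ) := by push_cast; ring
        have hb2 : (y+1)+(n:ℝ) = y+((n+1:ℕ):ℝ) := by push_cast; ring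
        have hih2 : (x+y+((n+1:ℕ):ℝ))^n = (y+((n+1:ℕ):ℝ))^n + ∑ k ∈ range n,
            ((n.choose (k+1) : ℝ)) * x * (x+((k+1:ℕ):ℝ))^k * ((y+1)+(n:ℝ)-((k+1:ℕ):ℝ))^(n-(k+1)) := by
          rw [← hb1, ← hb2]
          exact hih
        rw [hih2]
        push_cast
        ring
      rw [hzero] at htot
      exact htot
    have hconst : ∀ y₁ y₂ : ℝ, f y₁ = f y₂ :=
      is_const_of_deriv_eq_zero (fun y => (hderiv y).differentiableAt)
        (fun y => (hderiv y).deriv)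
    have hval : f (-x-((n+1:ℕ):ℝ)) = 0 := by
      rw [hf]
      simp only
      set y₀ : ℝ := -x-((n+1:ℕ):ℝ) with hy₀
      have e1 : x + y₀ + ((n+1:ℕ):ℝ) = 0 := by rw [hy₀]; ring
      have e2 : y₀ + ((n+1:ℕ):ℝ) = -x := by rw [hy₀]; ring
      rw [e1, e2]
      have hterm : ∀ k ∈ range (n+1),
          (((n+1).choose (k+1) : ℝ)) * x * (x+((k+1:ℕ):ℝ))^k * (-x-((k+1:ℕ):ℝ))^((n+1)-(k+1))
          = ((-1:ℝ)^n * x) * ((-1:ℝ)^k * (((n+1).choose (k+1) : ℝ)) * (x+((k+1:ℕ):ℝ))^n) := by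
        intro k hk
        have hkn : k ≤ n := by have := Finset.mem_range.mp hk; omega
        have e3 : -x-((k+1:ℕ):ℝ) = -(x+((k+1:ℕ):ℝ)) := by ring
        rw [e3, neg_pow]
        have e4 : (n+1)-(k+1) = n-k := by omega
        rw [e4]
        have e5 : (x+((k+1:ℕ):ℝ))^k * (x+((k+1:ℕ):ℝ))^(n-k) = (x+((k+1:ℕ):ℝ))^n := by
          rw [← pow_add]; congr 1; omega
        have h7 : (-1:ℝ)^(n-k) * (-1:ℝ)^k = (-1:ℝ)^n := by
          rw [← pow_add]; congr 1; omega
        have h8 : (-1:ℝ)^k * (-1:ℝ)^k = (1:ℝ) := by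
          rw [← pow_add]; exact Even.neg_one_pow ⟨k, rfl⟩
        have e6 : (-1:ℝ)^(n-k) = (-1:ℝ)^n * (-1:ℝ)^k := by
          rw [← h7, mul_assoc, h8, mul_one]
        rw [e6]
        linear_combination ((((n+1).choose (k+1) : ℝ)) * x * (-1:ℝ)^n * (-1:ℝ)^k) * e5
      rw [Finset.sum_congr rfl hterm, ← Finset.mul_sum]
      have hfd := findiff (n+1) n (Nat.lt_succ_self n) x
      rw [Finset.sum_range_succ' (fun k => (-1:ℝ)^k * ((n+1).choose k) * (x+(k:ℕ))^n) (n+1)] at hfd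
      have hS : ∑ k ∈ range (n+1), (-1:ℝ)^k * (((n+1).choose (k+1) : ℝ)) * (x+((k+1:ℕ):ℝ))^n = x^n := by
        have hneg : ∀ k ∈ range (n+1), (-1:ℝ)^(k+1) * (((n+1).choose (k+1)):ℝ) * (x+((k+1:ℕ):ℝ))^n
            = -((-1:ℝ)^k * (((n+1).choose (k+1)):ℝ) * (x+((k+1:ℕ):ℝ))^n) := by
          intro k _
          rw [pow_succ]
          ring
        rw [Finset.sum_congr rfl hneg, Finset.sum_neg_distrib] at hfd
        simp only [pow_zero, Nat.choose_zero_right, Nat.cast_one, Nat.cast_zero, add_zero,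
          one_mul] at hfd
        linarith [hfd]
      rw [hS, zero_pow (Nat.succ_ne_zero n), neg_pow, pow_succ]
      ring
    have := hconst y (-x-((n+1:ℕ):ℝ))
    rw [hval] at this
    rw [hf] at this
    simp only at this
    linarith [this]

/-- coefficients of McLeod's series -/
noncomputable def aa (k : ℕ) : ℝ := ((k+1:ℕ):ℝ)^k / ((k+1).factorial : ℝ)

lemma aa_pos (k : ℕ) : 0 < aa k := by
  apply div_pos (by positivity)
  exact_mod_cast Nat.factorial_pos (k+1)

lemma aa_succ (k : ℕ) : aa (k+1) = aa k * (((k+2:ℕ):ℝ)/((k+1:ℕ):ℝ))^k := by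
  unfold aa
  have h1 : ((k+1:ℕ):ℝ) ≠ 0 := by positivity
  have h2 : ((k+1).factorial : ℝ) ≠ 0 := by exact_mod_cast (Nat.factorial_pos (k+1)).ne'
  have h3 : ((k+2).factorial : ℝ) = ((k+2:ℕ):ℝ) * ((k+1).factorial : ℝ) := by
    rw [show k+2 = (k+1)+1 from rfl, Nat.factorial_succ]
    push_cast; ring
  rw [h3, div_pow]
  have h4 : ((k+1+1:ℕ):ℝ)^(k+1) = ((k+2:ℕ):ℝ)^k * ((k+2:ℕ):ℝ) := by
    rw [show ((k+1+1:ℕ):ℝ) = ((k+2:ℕ):ℝ) from by push_cast; ring, pow_succ]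
  rw [h4]
  have h5 : ((k+2:ℕ):ℝ) ≠ 0 := by positivity
  field_simp

lemma ratio_le_e (k : ℕ) : (((k+2:ℕ):ℝ)/((k+1:ℕ):ℝ))^k ≤ Real.exp 1 := by
  have h1 : (0:ℝ) < ((k+1:ℕ):ℝ) := by positivity
  have hb : ((k+2:ℕ):ℝ)/((k+1:ℕ):ℝ) = 1 + 1/((k+1:ℕ):ℝ) := by
    field_simp
    push_cast; ring
  have h2 : (1:ℝ) + 1/((k+1:ℕ):ℝ) ≤ Real.exp (1/((k+1:ℕ):ℝ)) := by
    have := Real.add_one_le_exp (1/((k+1:ℕ):ℝ))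
    linarith
  have h3 : (((k+2:ℕ):ℝ)/((k+1:ℕ):ℝ))^k ≤ (Real.exp (1/((k+1:ℕ):ℝ)))^k := by
    apply pow_le_pow_left₀ (by positivity)
    rw [hb]; exact h2
  calc (((k+2:ℕ):ℝ)/((k+1:ℕ):ℝ))^k ≤ (Real.exp (1/((k+1:ℕ):ℝ)))^k := h3
    _ = Real.exp ((k:ℝ) * (1/((k+1:ℕ):ℝ))) := (Real.exp_nat_mul _ k).symm
    _ ≤ Real.exp 1 := by
        apply Real.exp_le_exp.mpr
        rw [mul_one_div, div_le_one h1]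
        push_cast; linarith

lemma aa_le (k : ℕ) : aa k ≤ (Real.exp 1)^k := by
  induction k with
  | zero => simp [aa]
  | succ k ih =>
    rw [aa_succ, pow_succ]
    have h := ratio_le_e k
    have hpos : (0:ℝ) ≤ (((k+2:ℕ):ℝ)/((k+1:ℕ):ℝ))^k := by positivity
    calc aa k * (((k+2:ℕ):ℝ)/((k+1:ℕ):ℝ))^k ≤ (Real.exp 1)^k * Real.exp 1 := by
          apply mul_le_mul ih h hpos (by positivity)
    _ = (Real.exp 1)^k * Real.exp 1 := rfl

/-- Cayley-type identity: `∑_{k=1}^n C(n,k) k^{k-1} (n-k)^{n-k} = n^n`. -/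
lemma cayley_identity (n : ℕ) :
    ∑ k ∈ range n, ((n.choose (k+1) : ℝ)) * ((k+1:ℕ):ℝ)^k * (((n-(k+1):ℕ)):ℝ)^(n-(k+1))
      = (n:ℝ) * (n:ℝ)^(n-1) := by
  have habel := fun x : ℝ => abel_identity n x 0
  -- differentiate both sides at x = 0
  have hL : HasDerivAt (fun x : ℝ => (x+0+(n:ℝ))^n) ((n:ℝ) * ((0:ℝ)+0+(n:ℝ))^(n-1) * 1) 0 := by
    have h : HasDerivAt (fun x : ℝ => x+0+(n:ℝ)) 1 0 :=
      ((hasDerivAt_id 0).add_const 0).add_const _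
    simpa using h.fun_pow n
  have hR : HasDerivAt (fun x : ℝ => ((0:ℝ)+(n:ℝ))^n + ∑ k ∈ range n,
      ((n.choose (k+1) : ℝ)) * x * (x+((k+1:ℕ):ℝ))^k * ((0:ℝ)+(n:ℝ)-((k+1:ℕ):ℝ))^(n-(k+1)))
      (∑ k ∈ range n, ((n.choose (k+1) : ℝ)) *
        ((1 * ((0:ℝ)+((k+1:ℕ):ℝ))^k + 0 * ((k:ℝ) * ((0:ℝ)+((k+1:ℕ):ℝ))^(k-1) * 1))
          * ((0:ℝ)+(n:ℝ)-((k+1:ℕ):ℝ))^(n-(k+1)))) 0 := by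
    apply HasDerivAt.const_add
    apply HasDerivAt.fun_sum
    intro k hk
    have hone : HasDerivAt (fun x : ℝ => x+((k+1:ℕ):ℝ)) 1 (0:ℝ) := (hasDerivAt_id 0).add_const _
    have hmul : HasDerivAt (fun x : ℝ => x * (x+((k+1:ℕ):ℝ))^k)
        (1 * ((0:ℝ)+((k+1:ℕ):ℝ))^k + 0 * ((k:ℝ) * ((0:ℝ)+((k+1:ℕ):ℝ))^(k-1) * 1)) 0 :=
      (hasDerivAt_id 0).mul (hone.fun_pow k)
    have := (hmul.const_mul ((n.choose (k+1) : ℝ))).mul_const (((0:ℝ)+(n:ℝ)-((k+1:ℕ):ℝ))^(n-(k+1)))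
    convert this using 1
    · rfl
    · funext x; ring
    · ring
  have heq : (fun x : ℝ => (x+0+(n:ℝ))^n) = (fun x : ℝ => ((0:ℝ)+(n:ℝ))^n + ∑ k ∈ range n,
      ((n.choose (k+1) : ℝ)) * x * (x+((k+1:ℕ):ℝ))^k * ((0:ℝ)+(n:ℝ)-((k+1:ℕ):ℝ))^(n-(k+1))) := by
    funext x
    have := habel x
    convert this using 3
  rw [heq] at hL
  have hU := hL.unique hR
  calc ∑ k ∈ range n, ((n.choose (k+1) : ℝ)) * ((k+1:ℕ):ℝ)^k * (((n-(k+1):ℕ)):ℝ)^(n-(k+1))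
      = ∑ k ∈ range n, ((n.choose (k+1) : ℝ)) *
        ((1 * ((0:ℝ)+((k+1:ℕ):ℝ))^k + 0 * ((k:ℝ) * ((0:ℝ)+((k+1:ℕ):ℝ))^(k-1) * 1))
          * ((0:ℝ)+(n:ℝ)-((k+1:ℕ):ℝ))^(n-(k+1))) := by
        apply Finset.sum_congr rfl
        intro k hk
        have hkn : k + 1 ≤ n := Finset.mem_range.mp hk
        have hcast : (0:ℝ)+(n:ℝ)-((k+1:ℕ):ℝ) = (((n-(k+1):ℕ)):ℝ) := by
          push_cast [hkn]; ring
        rw [hcast]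
        ring
    _ = (n:ℝ) * ((0:ℝ)+0+(n:ℝ))^(n-1) * 1 := hU.symm
    _ = (n:ℝ) * (n:ℝ)^(n-1) := by norm_num


/-- the key coefficient identity -/
lemma coeff_id (n : ℕ) :
    ((n:ℝ)+1) * aa (n+1) = ∑ k ∈ range (n+1), (((n-k:ℕ):ℝ)+1) * aa k * aa (n-k) := by
  have key := cayley_identity (n+2)
  rw [Finset.sum_range_succ] at key
  -- isolate the k = n+1 term
  have hlast : (((n+2).choose (n+1+1) : ℝ)) * ((n+1+1:ℕ):ℝ)^(n+1) * ((((n+2)-(n+1+1):ℕ)):ℝ)^((n+2)-(n+1+1))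
      = ((n+2:ℕ):ℝ)^(n+1) := by
    simp
    push_cast
    ring
  rw [hlast] at key
  -- per-term rewrite
  have hterm : ∀ k ∈ range (n+1),
      (((n+2).choose (k+1) : ℝ)) * ((k+1:ℕ):ℝ)^k * ((((n+2)-(k+1):ℕ)):ℝ)^((n+2)-(k+1))
      = ((n+2).factorial : ℝ) * ((((n-k:ℕ):ℝ)+1) * aa k * aa (n-k)) := by
    intro k hk
    have hkn : k ≤ n := by have := Finset.mem_range.mp hk; omega
    have e1 : (n+2)-(k+1) = (n-k)+1 := by omega
    rw [e1]
    have e2 : ((((n-k)+1:ℕ)):ℝ)^((n-k)+1) = ((((n-k)+1:ℕ)):ℝ)^(n-k) * ((((n-k)+1:ℕ)):ℝ) := pow_succ _ _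
    rw [e2]
    have hchoose : (((n+2).choose (k+1)) : ℝ) = ((n+2).factorial : ℝ) / (((k+1).factorial : ℝ) * (((n-k)+1).factorial : ℝ)) := by
      have h := Nat.cast_choose ℝ (show k+1 ≤ n+2 by omega)
      rw [h, show (n+2)-(k+1) = (n-k)+1 from by omega]
    rw [hchoose, aa, aa]
    have f1 : ((k+1).factorial : ℝ) ≠ 0 := by exact_mod_cast (Nat.factorial_pos (k+1)).ne'
    have f2 : (((n-k)+1).factorial : ℝ) ≠ 0 := by exact_mod_cast (Nat.factorial_pos ((n-k)+1)).ne'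
    field_simp
    push_cast
    ring
  rw [Finset.sum_congr rfl hterm, ← Finset.mul_sum] at key
  -- key : (n+2)! * Σ + (n+2)^(n+1) = (n+2) * (n+2)^(n+1)
  have f3 : ((n+2).factorial : ℝ) ≠ 0 := by exact_mod_cast (Nat.factorial_pos (n+2)).ne'
  rw [aa]
  have hfac : ((n+2).factorial : ℝ) = ((n+2):ℝ) * ((n+1).factorial : ℝ) := by
    rw [Nat.factorial_succ]; push_cast; ring
  have hcast2 : ((n+2:ℕ):ℝ) = (n:ℝ)+2 := by push_cast; ring
  -- goal : (n+1) * ((n+2)^(n+1) / (n+2)!) = Σ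
  have key2 : ((n+2).factorial : ℝ) * (∑ k ∈ range (n+1), (((n-k:ℕ):ℝ)+1) * aa k * aa (n-k))
      = ((n:ℝ)+1) * ((n+2:ℕ):ℝ)^(n+1) := by
    have hc : ((n+2:ℕ):ℝ) * ((n+2:ℕ):ℝ)^((n+2)-1) = ((n+2:ℕ):ℝ)^(n+1) + (((n:ℝ)+1) * ((n+2:ℕ):ℝ)^(n+1)) := by
      have : (n+2)-1 = n+1 := by omega
      rw [this]
      push_cast
      ring
    rw [hc] at key
    linarith [key]
  rw [show n+1+1 = n+2 from rfl]
  push_cast at key2 ⊢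
  rw [mul_div_assoc', div_eq_iff f3]
  linear_combination -key2

noncomputable def GG (z : ℝ) : ℝ := ∑' k : ℕ, aa k * z^k
noncomputable def GGd (z : ℝ) : ℝ := ∑' k : ℕ, ((k:ℝ)+1) * aa (k+1) * z^k

lemma norm_aa_mul_pow_le {z : ℝ} (k : ℕ) : ‖aa k * z^k‖ ≤ (Real.exp 1 * |z|)^k := by
  rw [norm_mul, norm_pow, Real.norm_eq_abs, Real.norm_eq_abs, abs_of_pos (aa_pos k), mul_pow]
  exact mul_le_mul_of_nonneg_right (aa_le k) (by positivity)

lemma summ_aa {z : ℝ} (hz : |z| < (Real.exp 1)⁻¹) : Summable (fun k => aa k * z^k) := by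
  apply Summable.of_norm_bounded (g := fun k => (Real.exp 1 * |z|)^k)
  · apply summable_geometric_of_lt_one (by positivity)
    calc Real.exp 1 * |z| < Real.exp 1 * (Real.exp 1)⁻¹ := by
          apply mul_lt_mul_of_pos_left hz (Real.exp_pos 1)
      _ = 1 := mul_inv_cancel₀ (Real.exp_pos 1).ne'
  · exact norm_aa_mul_pow_le

lemma summ_aad {z : ℝ} (hz : |z| < (Real.exp 1)⁻¹) :
    Summable (fun k : ℕ => ((k:ℝ)+1) * aa (k+1) * z^k) := by
  have hq : Real.exp 1 * |z| < 1 := by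
    calc Real.exp 1 * |z| < Real.exp 1 * (Real.exp 1)⁻¹ :=
          mul_lt_mul_of_pos_left hz (Real.exp_pos 1)
      _ = 1 := mul_inv_cancel₀ (Real.exp_pos 1).ne'
  apply Summable.of_norm_bounded
    (g := fun k : ℕ => Real.exp 1 * (((k:ℝ)+1) * (Real.exp 1 * |z|)^k))
  · apply Summable.mul_left
    have h1 : Summable (fun k : ℕ => (k:ℝ) * (Real.exp 1 * |z|)^k) := by
      simpa using summable_pow_mul_geometric_of_norm_lt_one 1
        (r := Real.exp 1 * |z|) (by rwa [Real.norm_eq_abs, abs_of_nonneg (by positivity)])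
    have h2 : Summable (fun k : ℕ => (Real.exp 1 * |z|)^k) :=
      summable_geometric_of_lt_one (by positivity) hq
    exact (h1.add h2).congr (fun k => by push_cast; ring)
  · intro k
    rw [norm_mul, norm_mul, Real.norm_eq_abs, Real.norm_eq_abs, Real.norm_eq_abs,
      abs_of_pos (aa_pos (k+1)), abs_of_nonneg (by positivity : (0:ℝ) ≤ (k:ℝ)+1), abs_pow]
    have := aa_le (k+1)
    calc ((k:ℝ)+1) * aa (k+1) * |z|^k ≤ ((k:ℝ)+1) * (Real.exp 1)^(k+1) * |z|^k := by
          apply mul_le_mul_of_nonneg_right _ (by positivity)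
          exact mul_le_mul_of_nonneg_left this (by positivity)
      _ = Real.exp 1 * (((k:ℝ)+1) * (Real.exp 1 * |z|)^k) := by rw [pow_succ, mul_pow]; ring

lemma hasDerivAt_GG {y : ℝ} (hy : |y| < (Real.exp 1)⁻¹) : HasDerivAt GG (GGd y) y := by
  set ρ : ℝ := (|y| + (Real.exp 1)⁻¹)/2 with hρ
  have hyρ : |y| < ρ := by rw [hρ]; linarith
  have hρe : ρ < (Real.exp 1)⁻¹ := by rw [hρ]; linarith
  have hρ0 : 0 < ρ := by positivity
  have hq : Real.exp 1 * ρ < 1 := by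
    calc Real.exp 1 * ρ < Real.exp 1 * (Real.exp 1)⁻¹ :=
          mul_lt_mul_of_pos_left hρe (Real.exp_pos 1)
      _ = 1 := mul_inv_cancel₀ (Real.exp_pos 1).ne'
  -- uniform bound for derivatives on Ioo (-ρ) ρ
  set u : ℕ → ℝ := fun k : ℕ => Real.exp 1 * ((k:ℝ) * (Real.exp 1 * ρ)^(k-1)) with hu
  have hsumu : Summable u := by
    apply Summable.mul_left
    rw [← summable_nat_add_iff 1]
    have h1 : Summable (fun k : ℕ => ((k:ℝ)+1) * (Real.exp 1 * ρ)^k) := by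
      have ha : Summable (fun k : ℕ => (k:ℝ) * (Real.exp 1 * ρ)^k) := by
        simpa using summable_pow_mul_geometric_of_norm_lt_one 1
          (r := Real.exp 1 * ρ) (by rw [Real.norm_eq_abs, abs_of_nonneg (by positivity)]; exact hq)
      have hb : Summable (fun k : ℕ => (Real.exp 1 * ρ)^k) :=
        summable_geometric_of_lt_one (by positivity) hq
      exact (ha.add hb).congr (fun k => by push_cast; ring)
    convert h1 using 2 with k
    · rfl
    push_cast
    ring_nf
  have hderiv : ∀ k : ℕ, ∀ x ∈ Set.Ioo (-ρ) ρ,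
      HasDerivAt (fun z : ℝ => aa k * z^k) (aa k * ((k:ℝ) * x^(k-1))) x := by
    intro k x _
    exact (hasDerivAt_pow k x).const_mul (aa k)
  have hbound : ∀ k : ℕ, ∀ x ∈ Set.Ioo (-ρ) ρ, ‖aa k * ((k:ℝ) * x^(k-1))‖ ≤ u k := by
    intro k x hx
    have hxρ : |x| ≤ ρ := by
      rw [abs_le]; exact ⟨hx.1.le, hx.2.le⟩
    rw [norm_mul, norm_mul, Real.norm_eq_abs, Real.norm_eq_abs, Real.norm_eq_abs,
      abs_of_pos (aa_pos k), abs_of_nonneg (Nat.cast_nonneg k), abs_pow, hu]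
    calc aa k * ((k:ℝ) * |x|^(k-1)) ≤ (Real.exp 1)^k * ((k:ℝ) * ρ^(k-1)) := by
          apply mul_le_mul (aa_le k)
          · apply mul_le_mul_of_nonneg_left _ (Nat.cast_nonneg k)
            exact pow_le_pow_left₀ (abs_nonneg x) hxρ _
          · positivity
          · positivity
      _ ≤ Real.exp 1 * ((k:ℝ) * (Real.exp 1 * ρ)^(k-1)) := by
          rcases Nat.eq_zero_or_pos k with hk | hk
          · subst hk; simp
          · have hk1 : k = (k-1)+1 := by omega
            rw [mul_pow]
            calc (Real.exp 1)^k * ((k:ℝ) * ρ^(k-1))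
                = Real.exp 1 * ((k:ℝ) * ((Real.exp 1)^(k-1) * ρ^(k-1))) := by
                  nth_rewrite 1 [hk1]; rw [pow_succ]; ring
              _ ≤ Real.exp 1 * ((k:ℝ) * ((Real.exp 1)^(k-1) * ρ^(k-1))) := le_refl _
  have h0 : Summable (fun k => aa k * (0:ℝ)^k) := by
    apply summ_aa
    rw [abs_zero]
    positivity
  have hmem : y ∈ Set.Ioo (-ρ) ρ := by
    constructor
    · have := (abs_le.mp hyρ.le).1; linarith [abs_nonneg y, neg_abs_le y]
    · linarith [le_abs_self y]
  have h0mem : (0:ℝ) ∈ Set.Ioo (-ρ) ρ := by constructor <;> simp [hρ0] <;> linarith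
  have := hasDerivAt_tsum_of_isPreconnected hsumu isOpen_Ioo
    (convex_Ioo _ _).isPreconnected hderiv hbound h0mem h0 hmem
  -- identify the derivative with GGd y
  have hder_eq : ∑' k : ℕ, aa k * ((k:ℝ) * y^(k-1)) = GGd y := by
    have hs : Summable (fun k => aa k * ((k:ℝ) * y^(k-1))) := by
      apply Summable.of_norm_bounded hsumu
      intro k; exact hbound k y hmem
    rw [Summable.tsum_eq_zero_add hs]
    simp only [Nat.cast_zero, zero_mul, mul_zero, zero_add]
    unfold GGd
    apply tsum_congr
    intro k
    push_cast
    ring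
  rw [← hder_eq]
  exact this

lemma GG_mul_GG {z : ℝ} (hz : |z| < (Real.exp 1)⁻¹) :
    GG z * GG z = ∑' n : ℕ, (∑ k ∈ range (n+1), aa k * aa (n-k)) * z^n := by
  have hs : Summable (fun k : ℕ => ‖aa k * z^k‖) := by
    apply Summable.of_nonneg_of_le (fun k => norm_nonneg _) norm_aa_mul_pow_le
    apply summable_geometric_of_lt_one (by positivity)
    calc Real.exp 1 * |z| < Real.exp 1 * (Real.exp 1)⁻¹ :=
          mul_lt_mul_of_pos_left hz (Real.exp_pos 1)
      _ = 1 := mul_inv_cancel₀ (Real.exp_pos 1).ne'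
  rw [GG, tsum_mul_tsum_eq_tsum_sum_antidiagonal_of_summable_norm hs hs]
  apply tsum_congr
  intro n
  rw [Finset.Nat.sum_antidiagonal_eq_sum_range_succ_mk, Finset.sum_mul]
  apply Finset.sum_congr rfl
  intro k hk
  have hkn : k ≤ n := by have := Finset.mem_range.mp hk; omega
  have : z^k * z^(n-k) = z^n := by rw [← pow_add]; congr 1; omega
  calc aa k * z^k * (aa (n-k) * z^(n-k)) = aa k * aa (n-k) * (z^k * z^(n-k)) := by ring
    _ = aa k * aa (n-k) * z^n := by rw [this]

lemma GG_mul_GGd {z : ℝ} (hz : |z| < (Real.exp 1)⁻¹) :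
    GG z * GGd z = ∑' n : ℕ, (∑ k ∈ range (n+1),
      aa k * ((((n-k:ℕ):ℝ)+1) * aa ((n-k)+1))) * z^n := by
  have hs : Summable (fun k : ℕ => ‖aa k * z^k‖) := by
    apply Summable.of_nonneg_of_le (fun k => norm_nonneg _) norm_aa_mul_pow_le
    apply summable_geometric_of_lt_one (by positivity)
    calc Real.exp 1 * |z| < Real.exp 1 * (Real.exp 1)⁻¹ :=
          mul_lt_mul_of_pos_left hz (Real.exp_pos 1)
      _ = 1 := mul_inv_cancel₀ (Real.exp_pos 1).ne'
  have hs2 : Summable (fun k : ℕ => ‖((k:ℝ)+1) * aa (k+1) * z^k‖) :=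
    (summ_aad hz).abs.congr (fun k => by rw [Real.norm_eq_abs])
  rw [GG, GGd, tsum_mul_tsum_eq_tsum_sum_antidiagonal_of_summable_norm hs hs2]
  apply tsum_congr
  intro n
  rw [Finset.Nat.sum_antidiagonal_eq_sum_range_succ_mk, Finset.sum_mul]
  apply Finset.sum_congr rfl
  intro k hk
  have hkn : k ≤ n := by have := Finset.mem_range.mp hk; omega
  have hzz : z^k * z^(n-k) = z^n := by rw [← pow_add]; congr 1; omega
  calc aa k * z^k * ((((n-k:ℕ):ℝ)+1) * aa ((n-k)+1) * z^(n-k))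
      = aa k * ((((n-k:ℕ):ℝ)+1) * aa ((n-k)+1)) * (z^k * z^(n-k)) := by ring
    _ = aa k * ((((n-k:ℕ):ℝ)+1) * aa ((n-k)+1)) * z^n := by rw [hzz]

lemma summ_norm_aa {z : ℝ} (hz : |z| < (Real.exp 1)⁻¹) :
    Summable (fun k : ℕ => ‖aa k * z^k‖) := by
  apply Summable.of_nonneg_of_le (fun k => norm_nonneg _) norm_aa_mul_pow_le
  apply summable_geometric_of_lt_one (by positivity)
  calc Real.exp 1 * |z| < Real.exp 1 * (Real.exp 1)⁻¹ :=
        mul_lt_mul_of_pos_left hz (Real.exp_pos 1)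
    _ = 1 := mul_inv_cancel₀ (Real.exp_pos 1).ne'

lemma summ_c {z : ℝ} (hz : |z| < (Real.exp 1)⁻¹) :
    Summable (fun n : ℕ => (∑ k ∈ range (n+1), aa k * aa (n-k)) * z^n) := by
  have h := summable_norm_sum_mul_antidiagonal_of_summable_norm (summ_norm_aa hz) (summ_norm_aa hz)
  apply (Summable.of_norm h).congr
  intro n
  rw [Finset.Nat.sum_antidiagonal_eq_sum_range_succ_mk, Finset.sum_mul]
  apply Finset.sum_congr rfl
  intro k hk
  have hkn : k ≤ n := by have := Finset.mem_range.mp hk; omega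
  have hzz : z^k * z^(n-k) = z^n := by rw [← pow_add]; congr 1; omega
  calc aa k * z^k * (aa (n-k) * z^(n-k)) = aa k * aa (n-k) * (z^k * z^(n-k)) := by ring
    _ = aa k * aa (n-k) * z^n := by rw [hzz]

lemma summ_d {z : ℝ} (hz : |z| < (Real.exp 1)⁻¹) :
    Summable (fun n : ℕ => (∑ k ∈ range (n+1),
      aa k * ((((n-k:ℕ):ℝ)+1) * aa ((n-k)+1))) * z^n) := by
  have hs2 : Summable (fun k : ℕ => ‖((k:ℝ)+1) * aa (k+1) * z^k‖) :=
    (summ_aad hz).abs.congr (fun k => by rw [Real.norm_eq_abs])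
  have h := summable_norm_sum_mul_antidiagonal_of_summable_norm (summ_norm_aa hz) hs2
  apply (Summable.of_norm h).congr
  intro n
  rw [Finset.Nat.sum_antidiagonal_eq_sum_range_succ_mk, Finset.sum_mul]
  apply Finset.sum_congr rfl
  intro k hk
  have hkn : k ≤ n := by have := Finset.mem_range.mp hk; omega
  have hzz : z^k * z^(n-k) = z^n := by rw [← pow_add]; congr 1; omega
  calc aa k * z^k * ((((n-k:ℕ):ℝ)+1) * aa ((n-k)+1) * z^(n-k))
      = aa k * ((((n-k:ℕ):ℝ)+1) * aa ((n-k)+1)) * (z^k * z^(n-k)) := by ring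
    _ = aa k * ((((n-k:ℕ):ℝ)+1) * aa ((n-k)+1)) * z^n := by rw [hzz]

lemma ode_GG {z : ℝ} (hz : |z| < (Real.exp 1)⁻¹) :
    GGd z = GG z * GG z + z * (GG z * GGd z) := by
  set c : ℕ → ℝ := fun n => (∑ k ∈ range (n+1), aa k * aa (n-k)) * z^n with hc
  set g : ℕ → ℝ := fun n =>
    (∑ k ∈ range (n+1), ((n-k:ℕ):ℝ) * (aa k * aa (n-k))) * z^n with hg
  -- GGd z as power series with coefficients from coeff_id
  have step1 : GGd z = ∑' n : ℕ, (c n + g n) := by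
    rw [GGd]
    apply tsum_congr
    intro n
    rw [coeff_id n, hc, hg]
    simp only
    rw [← add_mul, ← Finset.sum_add_distrib]
    congr 1
    apply Finset.sum_congr rfl
    intro k hk
    ring
  have hsummc : Summable c := summ_c hz
  have hsummaad : Summable (fun n : ℕ => ((n:ℝ)+1) * aa (n+1) * z^n) := summ_aad hz
  have hsummcg : Summable (fun n => c n + g n) := by
    apply hsummaad.congr
    intro n
    rw [coeff_id n, hc, hg]
    simp only
    rw [← add_mul, ← Finset.sum_add_distrib]
    congr 1
    apply Finset.sum_congr rfl
    intro k hk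
    ring
  have hsummg : Summable g := by
    have := hsummcg.sub hsummc
    apply this.congr
    intro n
    simp
  -- identify ∑' g with z * (GG z * GGd z)
  have hg0 : g 0 = 0 := by
    rw [hg]; simp
  have hgsucc : ∀ n : ℕ, g (n+1) = (∑ k ∈ range (n+1),
      aa k * ((((n-k:ℕ):ℝ)+1) * aa ((n-k)+1))) * z^(n+1) := by
    intro n
    rw [hg]
    simp only
    congr 1
    rw [Finset.sum_range_succ]
    have hlast : ((n+1-(n+1):ℕ):ℝ) * (aa (n+1) * aa (n+1-(n+1))) = 0 := by
      simp
    rw [hlast, add_zero]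
    apply Finset.sum_congr rfl
    intro k hk
    have hkn : k ≤ n := by have := Finset.mem_range.mp hk; omega
    have e1 : n+1-k = (n-k)+1 := by omega
    rw [e1]
    push_cast [show ((n-k)+1 : ℕ) = (n-k)+1 from rfl]
    ring
  have hsum_g_eq : ∑' n, g n = z * (GG z * GGd z) := by
    rw [Summable.tsum_eq_zero_add hsummg, hg0, zero_add]
    have : ∑' n : ℕ, g (n+1) = ∑' n : ℕ, z * ((∑ k ∈ range (n+1),
        aa k * ((((n-k:ℕ):ℝ)+1) * aa ((n-k)+1))) * z^n) := by
      apply tsum_congr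
      intro n
      rw [hgsucc n, pow_succ]
      ring
    rw [this, tsum_mul_left, ← GG_mul_GGd hz]
  have hcc : ∑' n, c n = GG z * GG z := (GG_mul_GG hz).symm
  conv_lhs => rw [step1, Summable.tsum_add hsummc hsummg, hsum_g_eq, hcc]

lemma GG_zero : GG 0 = 1 := by
  rw [GG]
  rw [tsum_eq_single 0 (fun k hk => by
    rw [zero_pow hk, mul_zero])]
  simp [aa]

lemma hasDerivAt_K {x : ℝ} (hx : |x| < (Real.exp 1)⁻¹) :
    HasDerivAt (fun z => GG z * Real.exp (-(z * GG z))) 0 x := by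
  have h1 : HasDerivAt GG (GGd x) x := hasDerivAt_GG hx
  have h2 : HasDerivAt (fun z => z * GG z) (1 * GG x + x * GGd x) x :=
    (hasDerivAt_id x).mul h1
  have h4 := h2.neg.exp
  have h5 := h1.mul h4
  convert h5 using 1
  · rfl
  · rfl
  · rfl
  have hode := ode_GG hx
  have : GGd x * Real.exp (-(x * GG x)) + GG x * (Real.exp (-(x * GG x)) * -(1 * GG x + x * GGd x))
      = Real.exp (-(x * GG x)) * (GGd x - (GG x * GG x + x * (GG x * GGd x))) := by ring
  show (0:ℝ) = GGd x * Real.exp (-(x * GG x)) + GG x * (Real.exp (-(x * GG x)) * -(1 * GG x + x * GGd x))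
  rw [this, ← hode]
  simp

lemma GG_funeq {z : ℝ} (h0 : 0 ≤ z) (hz : z < (Real.exp 1)⁻¹) :
    GG z * Real.exp (-(z * GG z)) = 1 := by
  rcases eq_or_lt_of_le h0 with h | h
  · rw [← h]
    simp [GG_zero]
  · have habs : ∀ x ∈ Set.Icc (0:ℝ) z, |x| < (Real.exp 1)⁻¹ := by
      intro x hx
      rw [abs_of_nonneg hx.1]
      exact lt_of_le_of_lt hx.2 hz
    have hdiff : DifferentiableOn ℝ (fun z => GG z * Real.exp (-(z * GG z))) (Set.Icc 0 z) :=
      fun x hx => (hasDerivAt_K (habs x hx)).differentiableAt.differentiableWithinAt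
    have hd0 : ∀ x ∈ Set.Ico (0:ℝ) z,
        derivWithin (fun z => GG z * Real.exp (-(z * GG z))) (Set.Icc 0 z) x = 0 := by
      intro x hx
      have hx' : x ∈ Set.Icc (0:ℝ) z := ⟨hx.1, hx.2.le⟩
      exact (hasDerivAt_K (habs x hx')).hasDerivWithinAt.derivWithin (uniqueDiffOn_Icc h x hx')
    have := constant_of_derivWithin_zero hdiff hd0 z (Set.mem_Icc.mpr ⟨h0, le_refl z⟩)
    rw [this]
    simp [GG_zero]

lemma GG_exp {z : ℝ} (h0 : 0 ≤ z) (hz : z < (Real.exp 1)⁻¹) :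
    GG z = Real.exp (z * GG z) := by
  have h := GG_funeq h0 hz
  have he : Real.exp (-(z * GG z)) ≠ 0 := (Real.exp_pos _).ne'
  field_simp [Real.exp_neg] at h ⊢
  rw [Real.exp_neg, ← div_eq_mul_inv, div_eq_one_iff_eq (Real.exp_pos _).ne'] at h
  linarith [h]

lemma GG_pos {z : ℝ} (h0 : 0 ≤ z) (hz : z < (Real.exp 1)⁻¹) : 0 < GG z := by
  rw [GG_exp h0 hz]; exact Real.exp_pos _

/-- On `[0, e⁻¹)`, `z * GG z < 1`. -/
lemma zGG_lt_one {z : ℝ} (h0 : 0 ≤ z) (hz : z < (Real.exp 1)⁻¹) : z * GG z < 1 := by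
  by_contra hge
  push_neg at hge
  -- continuity of x ↦ x * GG x on [0, z]
  have hcont : ContinuousOn (fun x => x * GG x) (Set.Icc 0 z) := by
    intro x hx
    have hx' : |x| < (Real.exp 1)⁻¹ := by
      rw [abs_of_nonneg hx.1]; exact lt_of_le_of_lt hx.2 hz
    exact (continuous_id.continuousAt.mul
      (hasDerivAt_GG hx').differentiableAt.continuousAt).continuousWithinAt
  have h0z : (0:ℝ) ≤ z := h0
  have hIVT := intermediate_value_Icc h0z hcont
  have h1mem : (1:ℝ) ∈ Set.Icc ((fun x => x * GG x) 0) ((fun x => x * GG x) z) := by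
    constructor
    · simp
    · simpa using hge
  obtain ⟨c, hc, hc1⟩ := hIVT h1mem
  have hc' : |c| < (Real.exp 1)⁻¹ := by
    rw [abs_of_nonneg hc.1]; exact lt_of_le_of_lt hc.2 hz
  have hcexp : GG c = Real.exp (c * GG c) := GG_exp hc.1 (lt_of_le_of_lt hc.2 hz)
  simp only at hc1
  rw [hc1] at hcexp
  have h2 : c * Real.exp 1 = 1 := by rw [← hcexp]; exact hc1
  have h3 : c = (Real.exp 1)⁻¹ := by
    have he : Real.exp 1 ≠ 0 := (Real.exp_pos 1).ne'
    field_simp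
    linarith
  have h4 : c < (Real.exp 1)⁻¹ := lt_of_le_of_lt hc.2 hz
  rw [h3] at h4
  exact lt_irrefl _ h4

/-- `θ(t) = Σ_{m=1}^∞ t^(m-1) m^(m-1) e^(-tm) / m!`, the total mass of McLeod's solution
(the sum runs over `m = k + 1`, `k ∈ ℕ`). -/
noncomputable def theta (t : ℝ) : ℝ :=
  ∑' k : ℕ, t ^ k * ((k + 1 : ℕ) : ℝ) ^ k * Real.exp (-t * ((k + 1 : ℕ) : ℝ))
      / (Nat.factorial (k + 1))

lemma no_two_roots {t a b : ℝ} (ht : 1 < t) (ha : Real.exp (t*(a-1)) = a)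
    (hb : Real.exp (t*(b-1)) = b) (hab : a < b) (hb1 : b < 1) : False := by
  have h1a : 0 < 1 - a := by linarith
  set lam : ℝ := (1-b)/(1-a) with hlam
  set mu : ℝ := (b-a)/(1-a) with hmu
  have hlam0 : 0 < lam := div_pos (by linarith) h1a
  have hmu0 : 0 < mu := div_pos (by linarith) h1a
  have hsum : lam + mu = 1 := by
    rw [hlam, hmu, ← add_div, div_eq_one_iff_eq h1a.ne']
    ring
  have hne : t*(a-1) ≠ (0:ℝ) := by
    have : t*(a-1) < 0 := mul_neg_of_pos_of_neg (by linarith) (by linarith)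
    linarith
  have hcvx := strictConvexOn_exp.2 (Set.mem_univ (t*(a-1))) (Set.mem_univ (0:ℝ))
    hne hlam0 hmu0 hsum
  simp only [smul_eq_mul, mul_zero, add_zero, Real.exp_zero, mul_one] at hcvx
  have harg : lam * (t*(a-1)) = t*(b-1) := by
    rw [hlam]
    field_simp
    ring
  rw [harg, hb, ha] at hcvx
  have hrhs : lam * a + mu = b := by
    rw [hlam, hmu]
    field_simp
    ring
  rw [hrhs] at hcvx
  exact lt_irrefl b hcvx

/-- **Gelation for the multiplicative kernel.** For every `t > 1`:
(a) there is a unique `x ∈ (0,1)` such that `e^(t(x-1)) = x`;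
(b) `θ(t)` lies in `(0,1)` and satisfies `e^(t(θ(t)-1)) = θ(t)`; in particular `θ(t) < 1`. -/
theorem theta_after_gelation (t : ℝ) (ht : 1 < t) :
    (∃! x : ℝ, x ∈ Set.Ioo (0 : ℝ) 1 ∧ Real.exp (t * (x - 1)) = x) ∧
    theta t ∈ Set.Ioo (0 : ℝ) 1 ∧ Real.exp (t * (theta t - 1)) = theta t := by
  have ht0 : (0:ℝ) < t := by linarith
  set z : ℝ := t * Real.exp (-t) with hzdef
  have hz0 : 0 < z := by positivity
  have hze : z < (Real.exp 1)⁻¹ := by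
    have h5 : t < Real.exp (t-1) := by
      have := Real.add_one_lt_exp (x := t-1) (by intro h; rw [sub_eq_zero] at h; linarith)
      linarith
    have h6 : t * Real.exp (-t) < Real.exp (t-1) * Real.exp (-t) :=
      mul_lt_mul_of_pos_right h5 (Real.exp_pos _)
    rw [← Real.exp_add] at h6
    have h7 : t - 1 + -t = -1 := by ring
    rw [h7, show Real.exp (-1:ℝ) = (Real.exp 1)⁻¹ from Real.exp_neg 1] at h6
    exact h6
  have habs : |z| < (Real.exp 1)⁻¹ := by rwa [abs_of_pos hz0]
  -- theta t = GG z * exp (-t)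
  have htheta : theta t = GG z * Real.exp (-t) := by
    rw [theta, GG, ← tsum_mul_right]
    apply tsum_congr
    intro k
    have hfac : ((k+1).factorial : ℝ) ≠ 0 := by exact_mod_cast (Nat.factorial_pos (k+1)).ne'
    rw [aa]
    have hzk : z^k = t^k * Real.exp (-t*(k:ℝ)) := by
      rw [hzdef, mul_pow, ← Real.exp_nat_mul]
      ring_nf
    rw [hzk]
    have hexp : Real.exp (-t * ((k+1:ℕ):ℝ)) = Real.exp (-t*(k:ℝ)) * Real.exp (-t) := by
      rw [← Real.exp_add]
      congr 1
      push_cast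
      ring
    rw [hexp]
    field_simp
  set u : ℝ := z * GG z with hu
  have hGpos : 0 < GG z := GG_pos hz0.le hze
  have hu0 : 0 < u := mul_pos hz0 hGpos
  have hu1 : u < 1 := zGG_lt_one hz0.le hze
  have hGz : GG z = Real.exp u := GG_exp hz0.le hze
  have htheta2 : theta t = Real.exp (u - t) := by
    rw [htheta, hGz, ← Real.exp_add, sub_eq_add_neg]
  have htt : t * theta t = u := by
    rw [htheta, hu, hzdef]
    ring
  have hthetapos : 0 < theta t := by rw [htheta2]; exact Real.exp_pos _
  have hthetalt : theta t < 1 := by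
    by_contra hge
    push_neg at hge
    have : t * 1 ≤ t * theta t := mul_le_mul_of_nonneg_left hge ht0.le
    rw [htt] at this
    linarith
  have heq : Real.exp (t * (theta t - 1)) = theta t := by
    have harg : t * (theta t - 1) = u - t := by
      rw [← htt]; ring
    rw [harg, ← htheta2]
  have hmem : theta t ∈ Set.Ioo (0:ℝ) 1 := ⟨hthetapos, hthetalt⟩
  refine ⟨⟨theta t, ⟨hmem, heq⟩, ?_⟩, hmem, heq⟩
  rintro y ⟨hymem, hyeq⟩
  rcases lt_trichotomy y (theta t) with h | h | h
  · exact absurd (no_two_roots ht hyeq heq h hthetalt) (fun h => h)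
  · exact h
  · exact absurd (no_two_roots ht heq hyeq h hymem.2) (fun h => h)
end

section
/- Let 0 < t' < 1 < t be such that t − ln t = t' − ln t'. Then t·θ(t) = t', where θ(t) = Σ_{m=1}^{∞} t^{m-1} m^{m-1} e^{-tm} / m!. (Consequently θ(t) = t'/t for t > 1.) -/
open Finset


open Finset

lemma alt_sum_pow : ∀ (j N : ℕ), j < N →
    ∑ k ∈ range (N+1), (-1:ℝ)^k * (N.choose k) * (k:ℝ)^j = 0 := by
  intro j
  induction j using Nat.strong_induction_on with
  | _ j IH =>
    intro N hN
    match j, hN with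
    | 0, hN =>
      have h0 : N ≠ 0 := by omega
      have h := Int.alternating_sum_range_choose_of_ne h0
      have h2 : ((∑ i ∈ range (N+1), (-1:ℤ)^i * (N.choose i) : ℤ) : ℝ) = 0 := by
        rw [h]; norm_num
      rw [← h2]
      push_cast
      simp
    | (j+1), hN =>
      obtain ⟨M, rfl⟩ : ∃ M, N = M + 1 := ⟨N - 1, by omega⟩
      rw [Finset.sum_range_succ']
      have h0 : (-1:ℝ)^0 * (((M+1).choose 0 : ℕ):ℝ) * ((0:ℕ):ℝ)^(j+1) = 0 := by
        simp
      rw [h0, add_zero]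
      have e1 : ∀ i ∈ range (M+1), (-1:ℝ)^(i+1) * (((M+1).choose (i+1) : ℕ):ℝ) * ((i+1:ℕ):ℝ)^(j+1)
          = -(((M:ℝ)+1)) * ((-1:ℝ)^i * (M.choose i) * ((i+1:ℕ):ℝ)^j) := by
        intro i _
        have hcn := Nat.add_one_mul_choose_eq M i
        have hc : ((M:ℝ)+1) * (M.choose i) = (((M+1).choose (i+1) : ℕ):ℝ) * ((i:ℝ)+1) := by
          exact_mod_cast congrArg (Nat.cast (R := ℝ)) hcn
        push_cast
        linear_combination ((-1:ℝ)^i * ((i:ℝ)+1)^j) * hc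
      rw [Finset.sum_congr rfl e1, ← Finset.mul_sum]
      have e2 : ∀ i ∈ range (M+1), (-1:ℝ)^i * (M.choose i) * ((i+1:ℕ):ℝ)^j
          = ∑ t ∈ range (j+1), (j.choose t : ℝ) * ((-1:ℝ)^i * (M.choose i) * (i:ℝ)^t) := by
        intro i _
        have hb : ((i:ℝ)+1)^j = ∑ t ∈ range (j+1), (i:ℝ)^t * (j.choose t) := by
          simpa using add_pow (i:ℝ) 1 j
        push_cast
        rw [hb, Finset.mul_sum]
        apply Finset.sum_congr rfl
        intro t _
        ring
      rw [Finset.sum_congr rfl e2, Finset.sum_comm]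
      have e3 : ∀ t ∈ range (j+1), ∑ i ∈ range (M+1),
          (j.choose t : ℝ) * ((-1:ℝ)^i * (M.choose i) * (i:ℝ)^t) = 0 := by
        intro t ht
        have ht' : t < j + 1 := Finset.mem_range.mp ht
        rw [← Finset.mul_sum, IH t (by omega) M (by omega), mul_zero]
      rw [Finset.sum_congr rfl e3]
      simp

lemma alt_sum_poly (N n : ℕ) (h : n < N) (x : ℝ) :
    ∑ k ∈ range (N+1), (-1:ℝ)^k * (N.choose k) * (x + k)^n = 0 := by
  have e : ∀ k ∈ range (N+1), (-1:ℝ)^k * (N.choose k) * (x + k)^n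
      = ∑ t ∈ range (n+1), (n.choose t : ℝ) * x^t * ((-1:ℝ)^k * (N.choose k) * (k:ℝ)^(n-t)) := by
    intro k _
    rw [add_pow]
    rw [Finset.mul_sum]
    apply Finset.sum_congr rfl
    intro t _
    ring
  rw [Finset.sum_congr rfl e, Finset.sum_comm]
  have e3 : ∀ t ∈ range (n+1), ∑ k ∈ range (N+1),
      (n.choose t : ℝ) * x^t * ((-1:ℝ)^k * (N.choose k) * (k:ℝ)^(n-t)) = 0 := by
    intro t ht
    rw [← Finset.mul_sum, alt_sum_pow (n-t) N (by omega), mul_zero]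
  rw [Finset.sum_congr rfl e3]
  simp

/-- Abel term `x*(x+k)^(k-1)`, with the `k = 0` term interpreted as `1`. -/
noncomputable def gAb (x : ℝ) (k : ℕ) : ℝ := if k = 0 then 1 else x * (x + k)^(k-1)

lemma abel (n : ℕ) (x : ℝ) : ∀ y : ℝ,
    ∑ k ∈ range (n+1), (n.choose k : ℝ) * gAb x k * (y + ((n - k : ℕ):ℝ))^(n-k)
      = (x + y + n)^n := by
  induction n with
  | zero => intro y; simp [gAb]
  | succ n IH =>
    set N := n + 1 with hN
    set D : ℝ → ℝ := fun y => (∑ k ∈ range (N+1), (N.choose k : ℝ) * gAb x k *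
        (y + ((N - k : ℕ):ℝ))^(N-k)) - (x + y + N)^N with hD
    have key : ∀ y : ℝ, HasDerivAt D 0 y := by
      intro y
      have hterm : ∀ k ∈ range (N+1), HasDerivAt
          (fun y : ℝ => (N.choose k : ℝ) * gAb x k * (y + ((N - k : ℕ):ℝ))^(N-k))
          ((N.choose k : ℝ) * gAb x k * ((N-k : ℕ) * (y + ((N - k : ℕ):ℝ))^(N-k-1))) y := by
        intro k _
        have h := (((hasDerivAt_id y).add_const (((N - k : ℕ):ℝ))).pow (N-k)).const_mul
          ((N.choose k : ℝ) * gAb x k)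
        simpa using h
      have hsum := HasDerivAt.fun_sum hterm
      have hrhs : HasDerivAt (fun y : ℝ => (x + y + (N:ℝ))^N)
          ((N:ℝ) * (x + y + (N:ℝ))^(N-1)) y := by
        have h1 : HasDerivAt (fun y : ℝ => x + y + (N:ℝ)) 1 y := by
          simpa using (((hasDerivAt_id y).const_add x).add_const (N:ℝ))
        simpa using (h1.fun_pow N)
      have hd := hsum.sub hrhs
      refine hd.congr_deriv (Eq.symm ?_)
      have last0 : (N.choose N : ℝ) * gAb x N * (((N-N : ℕ):ℝ) * (y + ((N - N : ℕ):ℝ))^(N-N-1)) = 0 := by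
        simp
      rw [Finset.sum_range_succ, last0, add_zero]
      have e1 : ∀ k ∈ range N, (N.choose k : ℝ) * gAb x k *
            (((N-k : ℕ):ℝ) * (y + ((N - k : ℕ):ℝ))^(N-k-1))
          = (N:ℝ) * ((n.choose k : ℝ) * gAb x k * ((y+1) + ((n - k : ℕ):ℝ))^(n-k)) := by
        intro k hk
        have hk' : k ≤ n := by have := Finset.mem_range.mp hk; omega
        have h1 : N * n.choose k = N.choose k * (N - k) := by
          have h2 := Nat.add_one_mul_choose_eq n (n - k)
          rw [Nat.choose_symm hk'] at h2
          rw [← hN] at h2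
          rw [show n - k + 1 = N - k by omega] at h2
          rw [Nat.choose_symm (show k ≤ N by omega)] at h2
          simpa using h2
        have hc : (N:ℝ) * (n.choose k : ℝ) = (N.choose k : ℝ) * ((N-k:ℕ):ℝ) := by
          exact_mod_cast congrArg (Nat.cast (R := ℝ)) h1
        have hcast : ((N - k : ℕ):ℝ) = ((n - k : ℕ):ℝ) + 1 := by
          rw [show (N - k : ℕ) = (n - k) + 1 by omega]; push_cast; ring
        have hexp : N - k - 1 = n - k := by omega
        rw [hexp]
        rw [hcast] at hc ⊢
        linear_combination (-(gAb x k * ((y+1) + ((n-k:ℕ):ℝ))^(n-k))) * hc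
      rw [Finset.sum_congr rfl e1, ← Finset.mul_sum, IH (y+1)]
      rw [show N - 1 = n from rfl]
      push_cast [hN]
      ring
    have hdiff : Differentiable ℝ D := fun y => (key y).differentiableAt
    have hderiv : ∀ y, deriv D y = 0 := fun y => (key y).deriv
    have hconst : ∀ y : ℝ, D y = D (-x - N) := fun y =>
      is_const_of_deriv_eq_zero hdiff hderiv y _
    have hzero : D (-x - N) = 0 := by
      rw [hD]
      simp only
      have e2 : ∀ k ∈ range (N+1), (N.choose k : ℝ) * gAb x k *
            ((-x - N) + ((N - k : ℕ):ℝ))^(N-k)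
          = ((-1:ℝ)^N * x) * ((-1:ℝ)^k * (N.choose k) * (x + k)^n) := by
        intro k hk
        have hk' : k ≤ N := by have := Finset.mem_range.mp hk; omega
        have hcast : ((N - k : ℕ):ℝ) = (N:ℝ) - k := by
          exact Nat.cast_sub hk'
        have hbase : (-x - N) + ((N - k : ℕ):ℝ) = -(x + k) := by rw [hcast]; ring
        rw [hbase, neg_pow]
        have hsign : (-1:ℝ)^(N-k) = (-1)^N * (-1)^k := by
          have hpa : (-1:ℝ)^((N-k)+k) = (-1)^(N-k) * (-1)^k := pow_add _ _ _
          rw [show (N-k)+k = N by omega] at hpa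
          have h2 : (-1:ℝ)^k * (-1)^k = 1 := by
            rw [← pow_add]; exact Even.neg_one_pow ⟨k, rfl⟩
          calc (-1:ℝ)^(N-k) = (-1)^(N-k) * ((-1)^k * (-1)^k) := by rw [h2, mul_one]
            _ = (-1)^N * (-1)^k := by rw [← mul_assoc, ← hpa]
        rw [hsign]
        rcases Nat.eq_zero_or_pos k with rfl | hkpos
        · simp only [gAb, if_pos rfl]
          rw [show (x + ((0:ℕ):ℝ)) = x by push_cast; ring]
          rw [show N - 0 = N from rfl, show N = n + 1 from rfl, pow_succ]
          push_cast
          ring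
        · simp only [gAb, if_neg (Nat.pos_iff_ne_zero.mp hkpos)]
          have hpow : (x + (k:ℝ))^(k-1) * (x + (k:ℝ))^(N-k) = (x + k)^n := by
            rw [← pow_add, show (k-1) + (N-k) = n by omega]
          calc (N.choose k : ℝ) * (x * (x + k)^(k-1)) * ((-1)^N * (-1)^k * (x+k)^(N-k))
              = ((-1:ℝ)^N * x) * ((-1)^k * (N.choose k) *
                ((x + (k:ℝ))^(k-1) * (x + (k:ℝ))^(N-k))) := by ring
            _ = _ := by rw [hpow]
      rw [Finset.sum_congr rfl e2, ← Finset.mul_sum, alt_sum_poly N n (by omega) x]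
      rw [show x + (-x - N) + (N:ℝ) = 0 by ring, zero_pow (by omega), mul_zero, sub_zero]
    intro y
    have := hconst y
    rw [hzero] at this
    rw [hD] at this
    simpa [sub_eq_zero] using this

/-- Differentiating Abel's identity in `x` at `x = 0`:
`∑_{k=1}^{n} C(n,k) k^(k-1) (n-k)^(n-k) = n^n`. -/
lemma star0 (n : ℕ) (hn : 1 ≤ n) :
    ∑ k ∈ range (n+1), (n.choose k : ℝ) *
      (if k = 0 then 0 else (k:ℝ)^(k-1)) * ((n - k : ℕ):ℝ)^(n-k) = (n:ℝ)^n := by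
  -- the function S x := ∑ ... equals (x+n)^n for all x
  have hS : (fun x : ℝ => ∑ k ∈ range (n+1), (n.choose k : ℝ) * gAb x k *
      (((n - k : ℕ):ℝ))^(n-k)) = fun x : ℝ => (x + (n:ℝ))^n := by
    funext x
    have := abel n x 0
    simpa using this
  -- derivative of each term at x = 0
  have hterm : ∀ k ∈ range (n+1), HasDerivAt (fun x : ℝ => (n.choose k : ℝ) * gAb x k *
      (((n - k : ℕ):ℝ))^(n-k))
      ((n.choose k : ℝ) * (if k = 0 then 0 else ((0:ℝ)+(k:ℝ))^(k-1)) * ((n - k : ℕ):ℝ)^(n-k)) 0 := by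
    intro k _
    rcases Nat.eq_zero_or_pos k with rfl | hk
    · simp only [gAb, if_pos rfl, mul_zero, zero_mul, mul_one]
      simpa using (hasDerivAt_const (0:ℝ) ((((n - 0 : ℕ):ℝ))^(n-0)))
    · have hne : k ≠ 0 := Nat.pos_iff_ne_zero.mp hk
      simp only [gAb, if_neg hne]
      -- d/dx [ x * (x+k)^(k-1) ] at 0 = k^(k-1)
      have h1 : HasDerivAt (fun x : ℝ => x * (x + (k:ℝ))^(k-1))
          (1 * ((0:ℝ) + (k:ℝ))^(k-1) + (0:ℝ) * ((k-1 : ℕ) * ((0:ℝ) + (k:ℝ))^(k-1-1) * 1)) 0 := by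
        exact (hasDerivAt_id 0).mul (((hasDerivAt_id (0:ℝ)).add_const ((k:ℝ))).pow (k-1))
      have h2 : HasDerivAt (fun x : ℝ => x * (x + (k:ℝ))^(k-1)) (((0:ℝ)+(k:ℝ))^(k-1)) 0 := by
        convert h1 using 1; ring
      have h3 := (h2.const_mul ((n.choose k : ℝ))).mul_const ((((n - k : ℕ):ℝ))^(n-k))
      convert h3 using 1
  have hsum := HasDerivAt.fun_sum hterm
  have hrhs : HasDerivAt (fun x : ℝ => (x + (n:ℝ))^n) ((n:ℝ) * ((0:ℝ) + n)^(n-1)) 0 := by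
    simpa using (((hasDerivAt_id (0:ℝ)).add_const ((n:ℝ))).fun_pow n)
  rw [hS] at hsum
  have := hsum.unique hrhs
  calc ∑ k ∈ range (n+1), (n.choose k : ℝ) *
        (if k = 0 then 0 else (k:ℝ)^(k-1)) * ((n - k : ℕ):ℝ)^(n-k)
      = ∑ k ∈ range (n+1), (n.choose k : ℝ) *
        (if k = 0 then 0 else ((0:ℝ)+(k:ℝ))^(k-1)) * ((n - k : ℕ):ℝ)^(n-k) := by
        apply Finset.sum_congr rfl
        intro k _
        rcases Nat.eq_zero_or_pos k with rfl | hk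
        · simp
        · rw [if_neg (Nat.pos_iff_ne_zero.mp hk), if_neg (Nat.pos_iff_ne_zero.mp hk), zero_add]
    _ = (n:ℝ) * ((0:ℝ) + n)^(n-1) := this
    _ = (n:ℝ)^n := by
        rw [zero_add, ← pow_succ']
        congr 1
        omega

lemma starR (N : ℕ) :
    ∑ i ∈ range (N+1), (((N+2).choose (i+1) : ℕ):ℝ) * ((i+1:ℕ):ℝ)^i * ((N+1-i : ℕ):ℝ)^(N+1-i)
      = ((N+1:ℕ):ℝ) * ((N+2:ℕ):ℝ)^(N+1) := by
  have h := star0 (N+2) (by omega)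
  rw [Finset.sum_range_succ'] at h
  simp only [if_pos rfl, mul_zero, zero_mul, add_zero] at h
  have e1 : ∀ i ∈ range (N+2), ((N+2).choose (i+1) : ℝ) *
        (if i+1 = 0 then 0 else ((i+1:ℕ):ℝ)^(i+1-1)) * ((N+2-(i+1) : ℕ):ℝ)^(N+2-(i+1))
      = (((N+2).choose (i+1) : ℕ):ℝ) * ((i+1:ℕ):ℝ)^i * ((N+1-i : ℕ):ℝ)^(N+1-i) := by
    intro i _
    rw [if_neg (by omega), show i+1-1 = i from rfl, show N+2-(i+1) = N+1-i by omega]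
  rw [Finset.sum_congr rfl e1] at h
  rw [Finset.sum_range_succ] at h
  norm_num at h
  have h2 : ((N:ℝ)+2)^(N+2) = ((N:ℝ)+2)^(N+1) * ((N:ℝ)+2) := by
    rw [← pow_succ]
  push_cast at h ⊢
  linear_combination h

noncomputable def cB (k : ℕ) : ℝ := ((k+1:ℕ):ℝ)^k / (Nat.factorial (k+1))

lemma star_c (n : ℕ) :
    ∑ i ∈ range (n+1), cB i * (((n-i)+1:ℕ):ℝ) * cB (n-i) = ((n+1:ℕ):ℝ) * cB (n+1) := by
  have e1 : ∀ i ∈ range (n+1), cB i * (((n-i)+1:ℕ):ℝ) * cB (n-i)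
      = (((n+2).choose (i+1) : ℕ):ℝ) * ((i+1:ℕ):ℝ)^i * ((n+1-i : ℕ):ℝ)^(n+1-i)
        / (Nat.factorial (n+2)) := by
    intro i hi
    have hi' : i ≤ n := by have := Finset.mem_range.mp hi; omega
    have hch : (((n+2).choose (i+1) : ℕ):ℝ)
        = (Nat.factorial (n+2) : ℝ) / ((Nat.factorial (i+1) : ℝ) * (Nat.factorial (n+1-i) : ℝ)) := by
      have := Nat.cast_choose ℝ (show i+1 ≤ n+2 by omega)
      rw [show n+2-(i+1) = n+1-i by omega] at this
      exact this
    rw [cB, cB, hch]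
    rw [show (n-i)+1 = n+1-i by omega]
    rw [show ((n-i : ℕ)) = (n+1-i)-1 by omega]
    have hfne : ∀ m : ℕ, (Nat.factorial m : ℝ) ≠ 0 := fun m => by
      exact_mod_cast (Nat.factorial_pos m).ne'
    have hpow : ((n+1-i:ℕ):ℝ)^((n+1-i)-1) * ((n+1-i:ℕ):ℝ) = ((n+1-i:ℕ):ℝ)^(n+1-i) := by
      rw [← pow_succ]
      congr 1
      omega
    field_simp
    linear_combination hpow
  rw [Finset.sum_congr rfl e1, ← Finset.sum_div, starR n]
  rw [cB]
  push_cast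
  ring

lemma cB_nonneg (k : ℕ) : 0 ≤ cB k := by
  unfold cB; positivity

lemma cB_mul_le (k : ℕ) : cB k * ((k:ℝ)+1) ≤ (Real.exp 1)^(k+1) := by
  have h1 : ((k+1:ℕ):ℝ)^(k+1) / (Nat.factorial (k+1)) ≤ Real.exp ((k+1:ℕ):ℝ) := by
    refine le_trans ?_ (Real.sum_le_exp_of_nonneg (by positivity) (k+2))
    exact Finset.single_le_sum (f := fun i => ((k+1:ℕ):ℝ)^i / (Nat.factorial i))
      (fun i _ => by positivity) (Finset.self_mem_range_succ (k+1))
  have h2 : Real.exp (((k+1:ℕ)):ℝ) = (Real.exp 1)^(k+1) := by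
    rw [← Real.exp_nat_mul]; norm_num
  calc cB k * ((k:ℝ)+1) = ((k+1:ℕ):ℝ)^(k+1) / (Nat.factorial (k+1)) := by
        rw [cB, pow_succ]; push_cast; ring
    _ ≤ _ := h2 ▸ h1

lemma summable_KT (x : ℝ) (hx0 : 0 ≤ x) (hx : x * Real.exp 1 < 1) :
    Summable (fun k : ℕ => ((k:ℝ)+1) * cB k * x^(k+1)) := by
  have hq0 : 0 ≤ x * Real.exp 1 := by positivity
  have hgeom : Summable (fun k : ℕ => (x * Real.exp 1) * (x * Real.exp 1)^k) :=
    (summable_geometric_of_lt_one hq0 hx).mul_left _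
  refine Summable.of_nonneg_of_le (fun k => mul_nonneg (mul_nonneg (by positivity) (cB_nonneg k))
    (pow_nonneg hx0 _)) (fun k => ?_) hgeom
  have h1 : ((k:ℝ)+1) * cB k * x^(k+1) ≤ (Real.exp 1)^(k+1) * x^(k+1) := by
    apply mul_le_mul_of_nonneg_right _ (by positivity)
    rw [mul_comm]; exact cB_mul_le k
  calc ((k:ℝ)+1) * cB k * x^(k+1) ≤ (Real.exp 1)^(k+1) * x^(k+1) := h1
    _ = (x * Real.exp 1) * (x * Real.exp 1)^k := by
        rw [← mul_pow]; rw [pow_succ]; ring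

lemma summable_WT (x : ℝ) (hx0 : 0 ≤ x) (hx : x * Real.exp 1 < 1) :
    Summable (fun k : ℕ => cB k * x^(k+1)) := by
  refine Summable.of_nonneg_of_le (fun k => mul_nonneg (cB_nonneg k) (pow_nonneg hx0 _))
    (fun k => ?_) (summable_KT x hx0 hx)
  have hk : (1:ℝ) ≤ (k:ℝ)+1 := by have : (0:ℝ) ≤ (k:ℝ) := Nat.cast_nonneg k; linarith
  nlinarith [cB_nonneg k, pow_nonneg hx0 (k+1), mul_nonneg (cB_nonneg k) (pow_nonneg hx0 (k+1))]

noncomputable def WT (x : ℝ) : ℝ := ∑' k : ℕ, cB k * x^(k+1)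
noncomputable def KT (x : ℝ) : ℝ := ∑' k : ℕ, ((k:ℝ)+1) * cB k * x^(k+1)

lemma xe_lt (s : ℝ) (hs : s ≠ 1) : s * Real.exp (-s) * Real.exp 1 < 1 := by
  have h := Real.add_one_lt_exp (x := s - 1) (by intro hh; apply hs; linarith)
  have h2 : s < Real.exp (s - 1) := by linarith
  have hpos : (0:ℝ) < Real.exp (-s) * Real.exp 1 := by positivity
  have h3 := mul_lt_mul_of_pos_right h2 hpos
  calc s * Real.exp (-s) * Real.exp 1 = s * (Real.exp (-s) * Real.exp 1) := by ring
    _ < Real.exp (s-1) * (Real.exp (-s) * Real.exp 1) := h3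
    _ = 1 := by rw [← Real.exp_add, ← Real.exp_add]; norm_num

lemma KH (x : ℝ) (hx0 : 0 ≤ x) (hx : x * Real.exp 1 < 1) :
    KT x - WT x = WT x * KT x := by
  have hW := summable_WT x hx0 hx
  have hK := summable_KT x hx0 hx
  have hWn : Summable (fun k : ℕ => ‖cB k * x^(k+1)‖) := by
    refine hW.congr fun k => ?_
    exact ((Real.norm_eq_abs _).trans (abs_of_nonneg
      (mul_nonneg (cB_nonneg k) (pow_nonneg hx0 _)))).symm
  have hKn : Summable (fun k : ℕ => ‖((k:ℝ)+1) * cB k * x^(k+1)‖) := by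
    refine hK.congr fun k => ?_
    exact ((Real.norm_eq_abs _).trans (abs_of_nonneg
      (mul_nonneg (mul_nonneg (by positivity) (cB_nonneg k)) (pow_nonneg hx0 _)))).symm
  have hprod := tsum_mul_tsum_eq_tsum_sum_antidiagonal_of_summable_norm hWn hKn
  -- identify each antidiagonal sum
  have hterm : ∀ n : ℕ, ∑ kl ∈ antidiagonal n,
      (cB kl.1 * x^(kl.1+1)) * (((kl.2:ℝ)+1) * cB kl.2 * x^(kl.2+1))
      = ((n:ℝ)+1) * cB (n+1) * x^(n+2) := by
    intro n
    rw [Finset.Nat.sum_antidiagonal_eq_sum_range_succ_mk]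
    have e1 : ∀ i ∈ range (n+1), (cB i * x^(i+1)) * ((((n-i:ℕ):ℝ)+1) * cB (n-i) * x^((n-i)+1))
        = (cB i * (((n-i)+1:ℕ):ℝ) * cB (n-i)) * x^(n+2) := by
      intro i hi
      have hi' : i ≤ n := by have := Finset.mem_range.mp hi; omega
      have hxp : x^(i+1) * x^((n-i)+1) = x^(n+2) := by
        rw [← pow_add]; congr 1; omega
      have hc : (((n-i)+1:ℕ):ℝ) = ((n-i:ℕ):ℝ)+1 := by push_cast; ring
      rw [hc]
      calc (cB i * x^(i+1)) * ((((n-i:ℕ):ℝ)+1) * cB (n-i) * x^((n-i)+1))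
          = (cB i * (((n-i:ℕ):ℝ)+1) * cB (n-i)) * (x^(i+1) * x^((n-i)+1)) := by ring
        _ = _ := by rw [hxp]
    rw [Finset.sum_congr rfl e1, ← Finset.sum_mul, star_c n]
    push_cast
    ring
  have hsub : Summable (fun k : ℕ => ((k:ℝ)+1) * cB k * x^(k+1) - cB k * x^(k+1)) := hK.sub hW
  have hdiff : KT x - WT x = ∑' k : ℕ, (((k:ℝ)+1) * cB k * x^(k+1) - cB k * x^(k+1)) := by
    rw [Summable.tsum_sub hK hW]; rfl
  rw [hdiff]
  have hshift : ∑' k : ℕ, (((k:ℝ)+1) * cB k * x^(k+1) - cB k * x^(k+1))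
      = ∑' n : ℕ, ((n:ℝ)+1) * cB (n+1) * x^(n+2) := by
    rw [Summable.tsum_eq_zero_add hsub]
    simp only [Nat.cast_zero]
    rw [show ((0:ℝ)+1) * cB 0 * x^(0+1) - cB 0 * x^(0+1) = 0 by ring, zero_add]
    apply tsum_congr
    intro n
    push_cast
    ring
  rw [hshift, WT, KT, hprod]
  exact (tsum_congr hterm).symm

lemma ue_mono {z b : ℝ} (hz : 0 ≤ z) (hzb : z ≤ b) (hb : b ≤ 1) :
    z * Real.exp (-z) ≤ b * Real.exp (-b) := by
  have h := Real.add_one_le_exp (z - b)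
  have hb0 : (0:ℝ) ≤ b := le_trans hz hzb
  have h2 : 0 ≤ b * (z - b + 1) - z := by nlinarith
  have h4 : z ≤ b * Real.exp (z - b) := by nlinarith [mul_le_mul_of_nonneg_left h hb0]
  calc z * Real.exp (-z) ≤ (b * Real.exp (z-b)) * Real.exp (-z) :=
        mul_le_mul_of_nonneg_right h4 (Real.exp_pos _).le
    _ = b * Real.exp (-b) := by rw [mul_assoc, ← Real.exp_add]; ring_nf

noncomputable def Hfun (u : ℝ) : ℝ := WT (u * Real.exp (-u))

lemma hasDeriv_Hfun (s : ℝ) (h0 : 0 < s) (h1 : s < 1) :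
    HasDerivAt Hfun ((1 - s)/s * KT (s * Real.exp (-s))) s := by
  obtain ⟨a, b, ha0, has, hsb, hb1⟩ : ∃ a b : ℝ, 0 < a ∧ a < s ∧ s < b ∧ b < 1 :=
    ⟨s/2, (s+1)/2, by positivity, by linarith, by linarith, by linarith⟩
  set q := Real.exp 1 * (b * Real.exp (-b)) with hq
  have hb0 : (0:ℝ) ≤ b := by linarith
  have hq0 : 0 ≤ q := by
    rw [hq]; positivity
  have hq1 : q < 1 := by
    have := xe_lt b (by linarith)
    calc q = b * Real.exp (-b) * Real.exp 1 := by ring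
      _ < 1 := this
  have hu : Summable (fun k : ℕ => Real.exp 1 * q^k) :=
    (summable_geometric_of_lt_one hq0 hq1).mul_left _
  set g : ℕ → ℝ → ℝ := fun k z => cB k * (z * Real.exp (-z))^(k+1) with hgdef
  set g' : ℕ → ℝ → ℝ := fun k z =>
    ((k:ℝ)+1) * cB k * ((1 - z) * Real.exp (-z) * (z * Real.exp (-z))^k) with hg'def
  have hg : ∀ (k : ℕ) (z : ℝ), z ∈ Set.Ioo a b → HasDerivAt (g k) (g' k z) z := by
    intro k z _
    have he : HasDerivAt (fun z : ℝ => Real.exp (-z)) (Real.exp (-z) * (-1)) z :=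
      ((hasDerivAt_id z).neg).exp
    have hbase : HasDerivAt (fun z : ℝ => z * Real.exp (-z))
        (1 * Real.exp (-z) + z * (Real.exp (-z) * (-1))) z := (hasDerivAt_id z).mul he
    have hp := (hbase.fun_pow (k+1)).const_mul (cB k)
    refine hp.congr_deriv (Eq.symm ?_)
    simp only [hg'def]
    push_cast
    ring_nf
  have hg' : ∀ (k : ℕ) (z : ℝ), z ∈ Set.Ioo a b → ‖g' k z‖ ≤ Real.exp 1 * q^k := by
    intro k z hz
    obtain ⟨hz1, hz2⟩ := hz
    have hz0 : 0 < z := lt_trans ha0 hz1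
    have hzb : z * Real.exp (-z) ≤ b * Real.exp (-b) := ue_mono hz0.le hz2.le hb1.le
    have hze : 0 ≤ z * Real.exp (-z) := by positivity
    have h1z : 0 ≤ 1 - z ∧ 1 - z ≤ 1 := ⟨by linarith, by linarith⟩
    have hexpz : Real.exp (-z) ≤ 1 := by
      rw [Real.exp_le_one_iff]; linarith
    have hnn : 0 ≤ g' k z := by
      simp only [hg'def]
      apply mul_nonneg (mul_nonneg (by positivity) (cB_nonneg k))
      apply mul_nonneg (mul_nonneg h1z.1 (Real.exp_pos _).le) (pow_nonneg hze _)
    rw [Real.norm_eq_abs, abs_of_nonneg hnn]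
    simp only [hg'def]
    have step1 : (1 - z) * Real.exp (-z) * (z * Real.exp (-z))^k ≤ (b * Real.exp (-b))^k := by
      have hp : (z * Real.exp (-z))^k ≤ (b * Real.exp (-b))^k := pow_le_pow_left₀ hze hzb k
      have : (1 - z) * Real.exp (-z) ≤ 1 := by nlinarith [Real.exp_pos (-z)]
      nlinarith [pow_nonneg hze k, pow_nonneg (mul_nonneg (by linarith : (0:ℝ) ≤ b)
        (Real.exp_pos (-b)).le) k]
    calc ((k:ℝ)+1) * cB k * ((1 - z) * Real.exp (-z) * (z * Real.exp (-z))^k)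
        ≤ (Real.exp 1)^(k+1) * (b * Real.exp (-b))^k := by
          apply mul_le_mul
          · rw [mul_comm]; exact cB_mul_le k
          · exact step1
          · apply mul_nonneg (mul_nonneg h1z.1 (Real.exp_pos _).le) (pow_nonneg hze _)
          · positivity
      _ = Real.exp 1 * q^k := by
          rw [hq, mul_pow, pow_succ]; ring
  have hx0 : (0:ℝ) ≤ s * Real.exp (-s) := by positivity
  have hxe : s * Real.exp (-s) * Real.exp 1 < 1 := xe_lt s (by linarith)
  have hg0 : Summable (fun k : ℕ => g k s) := summable_WT _ hx0 hxe
  have hs : s ∈ Set.Ioo a b := ⟨has, hsb⟩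
  have hder := hasDerivAt_tsum_of_isPreconnected hu isOpen_Ioo
    (convex_Ioo a b).isPreconnected hg hg' hs hg0 hs
  have hH : Hfun = fun z => ∑' k, g k z := by
    funext z; rfl
  rw [hH]
  refine hder.congr_deriv (Eq.symm ?_)
  -- identify the sum of derivatives
  rw [KT, ← tsum_mul_left]
  apply tsum_congr
  intro k
  simp only [hg'def]
  rw [pow_succ]
  field_simp

lemma cB_zero : cB 0 = 1 := by simp [cB, Nat.factorial]

lemma KT_nonneg (x : ℝ) (hx0 : 0 ≤ x) : 0 ≤ KT x :=
  tsum_nonneg fun k => mul_nonneg (mul_nonneg (by positivity) (cB_nonneg k)) (pow_nonneg hx0 _)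

lemma WT_pos (x : ℝ) (hx0 : 0 < x) (hxe : x * Real.exp 1 < 1) : 0 < WT x := by
  refine Summable.tsum_pos (summable_WT x hx0.le hxe)
    (fun k => mul_nonneg (cB_nonneg k) (pow_nonneg hx0.le _)) 0 ?_
  rw [cB_zero]
  simpa using hx0

lemma WT_lt_one (x : ℝ) (hx0 : 0 ≤ x) (hxe : x * Real.exp 1 < 1) : WT x < 1 := by
  have h := KH x hx0 hxe
  have hK := KT_nonneg x hx0
  nlinarith

noncomputable def phi (u : ℝ) : ℝ := Real.log (Hfun u) - Hfun u - Real.log u + u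

lemma x_pos {u : ℝ} (h0 : 0 < u) : 0 < u * Real.exp (-u) := by positivity

lemma x_lt {u : ℝ} (hu : u ≠ 1) : u * Real.exp (-u) * Real.exp 1 < 1 := xe_lt u hu

lemma Hfun_pos (u : ℝ) (h0 : 0 < u) (h1 : u < 1) : 0 < Hfun u :=
  WT_pos _ (x_pos h0) (x_lt (by linarith))

lemma Hfun_lt_one (u : ℝ) (h0 : 0 < u) (h1 : u < 1) : Hfun u < 1 :=
  WT_lt_one _ (x_pos h0).le (x_lt (by linarith))

lemma phi_deriv (u : ℝ) (h0 : 0 < u) (h1 : u < 1) : HasDerivAt phi 0 u := by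
  have hH := hasDeriv_Hfun u h0 h1
  have hWpos := Hfun_pos u h0 h1
  have hlog := hH.log hWpos.ne'
  have hlogu := Real.hasDerivAt_log h0.ne'
  have hcomb := ((hlog.sub hH).sub hlogu).add (hasDerivAt_id u)
  have hphi : phi = fun y => Real.log (Hfun y) - Hfun y - Real.log y + y := rfl
  rw [hphi]
  refine hcomb.congr_deriv (Eq.symm ?_)
  set x := u * Real.exp (-u) with hx
  have hrel := KH x (x_pos h0).le (x_lt (show u ≠ 1 by linarith))
  have hWH : Hfun u = WT x := rfl
  rw [← hWH] at hrel
  set K := KT x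
  set W := Hfun u
  field_simp
  linear_combination (-(1-u)) * hrel

lemma phi_const (s₁ s₂ : ℝ) (h : 0 < s₁) (h12 : s₁ ≤ s₂) (h2 : s₂ < 1) : phi s₂ = phi s₁ := by
  have hc : ContinuousOn phi (Set.Icc s₁ s₂) := fun x hx =>
    ((phi_deriv x (lt_of_lt_of_le h hx.1) (lt_of_le_of_lt hx.2 h2)).continuousAt).continuousWithinAt
  have hd : ∀ x ∈ Set.Ico s₁ s₂, HasDerivWithinAt phi 0 (Set.Ici x) x := fun x hx =>
    (phi_deriv x (lt_of_lt_of_le h hx.1) (lt_trans hx.2 h2)).hasDerivWithinAt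
  exact constant_of_has_deriv_right_zero hc hd s₂ ⟨h12, le_refl _⟩

lemma logsub_lt (u v : ℝ) (hu : 0 < u) (huv : u < v) (hv : v ≤ 1) :
    Real.log u - u < Real.log v - v := by
  have hv0 : 0 < v := lt_trans hu huv
  have h := Real.log_lt_sub_one_of_pos (show (0:ℝ) < u/v by positivity)
    (by intro hh; rw [div_eq_one_iff_eq hv0.ne'] at hh; exact absurd hh huv.ne)
  have hlog : Real.log (u/v) = Real.log u - Real.log v := Real.log_div hu.ne' hv0.ne'
  rw [hlog] at h
  have h2 : u/v - 1 ≤ u - v := by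
    rw [div_sub_one hv0.ne', div_le_iff₀ hv0]
    nlinarith
  linarith

set_option maxHeartbeats 1000000 in
open Filter Topology in
lemma phi_lim : Filter.Tendsto phi (nhdsWithin 0 (Set.Ioi 0)) (nhds 0) := by
  set E := Real.exp 1 with hE
  have hE1 : 1 ≤ E := by rw [hE]; nlinarith [Real.add_one_le_exp (1:ℝ)]
  have hE0 : 0 < E := by linarith
  set δ : ℝ := 1/(2*E) with hδ
  have hδ0 : 0 < δ := by positivity
  have hδ1 : δ ≤ 1/2 := by
    rw [hδ, div_le_div_iff₀ (by positivity) (by norm_num)]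
    linarith
  have hmem : Set.Ioo (0:ℝ) δ ∈ nhdsWithin (0:ℝ) (Set.Ioi 0) :=
    Ioo_mem_nhdsGT_of_mem ⟨le_refl 0, hδ0⟩
  have hbnd : ∀ u ∈ Set.Ioo (0:ℝ) δ,
      Real.exp (-u) ≤ Hfun u / u ∧ Hfun u / u ≤ Real.exp (-u) + 2*E^2*u := by
    intro u hu
    obtain ⟨hu0, huδ⟩ := hu
    have hu1 : u < 1 := by linarith [hδ1]
    have hx0 : 0 < u * Real.exp (-u) := x_pos hu0
    have hxe : u * Real.exp (-u) * E < 1 := x_lt (by linarith)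
    set x := u * Real.exp (-u) with hx
    have hxu : x ≤ u := by
      rw [hx]
      nlinarith [Real.exp_le_one_iff.mpr (by linarith : -u ≤ 0), hu0]
    have hsum := summable_WT x hx0.le hxe
    have hHW : Hfun u = WT x := rfl
    have hEu : 0 < E*u := by positivity
    have hEu2 : E*u < 1/2 := by
      rw [hδ] at huδ
      calc E*u < E * (1/(2*E)) := mul_lt_mul_of_pos_left huδ hE0
        _ = 1/2 := by field_simp
    constructor
    · have hge : x ≤ WT x := by
        have h := Summable.le_tsum hsum 0 (fun j _ => mul_nonneg (cB_nonneg j) (pow_nonneg hx0.le _))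
        simpa [cB_zero, WT] using h
      rw [le_div_iff₀ hu0, hHW]
      calc Real.exp (-u) * u = x := by rw [hx]; ring
        _ ≤ WT x := hge
    · -- upper bound
      have hsum2 : Summable (fun k : ℕ => (E*u)^2 * (E*u)^k) :=
        (summable_geometric_of_lt_one hEu.le (by linarith)).mul_left _
      have hle : ∀ k : ℕ, cB (k+1) * x^(k+1+1) ≤ (E*u)^2 * (E*u)^k := by
        intro k
        have h3 : (1:ℝ) ≤ ((k+1:ℕ):ℝ)+1 := by
          have : (0:ℝ) ≤ ((k+1:ℕ):ℝ) := Nat.cast_nonneg _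
          linarith
        have h1 : cB (k+1) ≤ E^(k+2) := by
          have h2 := cB_mul_le (k+1)
          nlinarith [cB_nonneg (k+1)]
        have h5 : x^(k+2) ≤ u^(k+2) := pow_le_pow_left₀ hx0.le hxu _
        calc cB (k+1) * x^(k+1+1) ≤ E^(k+2) * u^(k+2) :=
              mul_le_mul h1 h5 (pow_nonneg hx0.le _) (by positivity)
          _ = (E*u)^2 * (E*u)^k := by rw [← mul_pow, show k+2 = 2+k by omega, pow_add]
      have hsum1 : Summable (fun k : ℕ => cB (k+1) * x^(k+1+1)) :=
        Summable.of_nonneg_of_le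
          (fun k => mul_nonneg (cB_nonneg _) (pow_nonneg hx0.le _)) hle hsum2
      have htail : ∑' k : ℕ, cB (k+1) * x^(k+1+1) ≤ 2*(E*u)^2 := by
        calc ∑' k : ℕ, cB (k+1) * x^(k+1+1) ≤ ∑' k : ℕ, (E*u)^2 * (E*u)^k :=
              Summable.tsum_le_tsum hle hsum1 hsum2
          _ = (E*u)^2 * (1 - E*u)⁻¹ := by
              rw [tsum_mul_left, tsum_geometric_of_lt_one hEu.le (by linarith)]
          _ ≤ (E*u)^2 * 2 := by
              have hhalf : (1:ℝ)/2 ≤ 1 - E*u := by linarith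
              have hinv : (1 - E*u)⁻¹ ≤ ((1:ℝ)/2)⁻¹ :=
                inv_anti₀ (by norm_num) hhalf
              have : ((1:ℝ)/2)⁻¹ = 2 := by norm_num
              nlinarith [sq_nonneg (E*u)]
          _ = 2*(E*u)^2 := by ring
      have hup : WT x ≤ x + 2*(E*u)^2 := by
        have hdecomp : WT x = cB 0 * x^(0+1) + ∑' k : ℕ, cB (k+1) * x^(k+1+1) :=
          Summable.tsum_eq_zero_add hsum
        rw [hdecomp, cB_zero]
        simpa using htail
      rw [div_le_iff₀ hu0, hHW]
      have hexpand : (Real.exp (-u) + 2*E^2*u) * u = x + 2*(E*u)^2 := by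
        rw [hx]; ring
      linarith [hup, hexpand]
  have hexp_t : Tendsto (fun u : ℝ => Real.exp (-u)) (nhdsWithin 0 (Set.Ioi 0)) (nhds 1) := by
    have h := (Real.continuous_exp.comp continuous_neg).tendsto (0:ℝ)
    simp only [Function.comp, neg_zero, Real.exp_zero] at h
    exact h.mono_left nhdsWithin_le_nhds
  have hlin_t : Tendsto (fun u : ℝ => 2*E^2*u) (nhdsWithin 0 (Set.Ioi 0)) (nhds 0) := by
    have hcont : Continuous (fun u : ℝ => 2*E^2*u) := continuous_const.mul continuous_id
    have h := hcont.tendsto (0:ℝ)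
    rw [mul_zero] at h
    exact h.mono_left nhdsWithin_le_nhds
  have hup_t : Tendsto (fun u : ℝ => Real.exp (-u) + 2*E^2*u)
      (nhdsWithin 0 (Set.Ioi 0)) (nhds 1) := by
    simpa using hexp_t.add hlin_t
  have hlow_ev : ∀ᶠ u in nhdsWithin (0:ℝ) (Set.Ioi 0), Real.exp (-u) ≤ Hfun u / u := by
    filter_upwards [hmem] with u hu
    exact (hbnd u hu).1
  have hup_ev : ∀ᶠ u in nhdsWithin (0:ℝ) (Set.Ioi 0), Hfun u / u ≤ Real.exp (-u) + 2*E^2*u := by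
    filter_upwards [hmem] with u hu
    exact (hbnd u hu).2
  have hρ : Tendsto (fun u => Hfun u / u) (nhdsWithin 0 (Set.Ioi 0)) (nhds 1) :=
    tendsto_of_tendsto_of_tendsto_of_le_of_le' hexp_t hup_t hlow_ev hup_ev
  have hid : Tendsto (fun u : ℝ => u) (nhdsWithin 0 (Set.Ioi 0)) (nhds 0) :=
    (continuous_id.tendsto (0:ℝ)).mono_left nhdsWithin_le_nhds
  have hH_t : Tendsto Hfun (nhdsWithin 0 (Set.Ioi 0)) (nhds 0) := by
    have hmul := hρ.mul hid
    rw [one_mul] at hmul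
    have hev : ∀ᶠ u in nhdsWithin (0:ℝ) (Set.Ioi 0), (Hfun u / u) * u = Hfun u := by
      filter_upwards [self_mem_nhdsWithin] with u hu
      have hne : u ≠ 0 := ne_of_gt hu
      field_simp
    exact hmul.congr' hev
  have hlog_t : Tendsto (fun u => Real.log (Hfun u / u)) (nhdsWithin 0 (Set.Ioi 0)) (nhds 0) := by
    have hcont := (Real.continuousAt_log (one_ne_zero)).tendsto
    have h := hcont.comp hρ
    simpa [Function.comp_def] using h
  have hfinal := (hlog_t.sub hH_t).add hid
  rw [show (0:ℝ) - 0 + 0 = 0 by ring] at hfinal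
  have hev2 : ∀ᶠ u in nhdsWithin (0:ℝ) (Set.Ioi 0),
      Real.log (Hfun u / u) - Hfun u + u = phi u := by
    filter_upwards [hmem] with u hu
    have hu0 := hu.1
    have hu1 : u < 1 := by have := hu.2; linarith [hδ1]
    have hpos := Hfun_pos u hu0 hu1
    show Real.log (Hfun u / u) - Hfun u + u = Real.log (Hfun u) - Hfun u - Real.log u + u
    rw [Real.log_div hpos.ne' (ne_of_gt hu0)]
    ring
  exact hfinal.congr' hev2

open Filter Topology in
lemma Hfun_eq (s : ℝ) (h0 : 0 < s) (h1 : s < 1) : Hfun s = s := by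
  have hphis : phi s = 0 := by
    have hconst : ∀ᶠ u in nhdsWithin (0:ℝ) (Set.Ioi 0), phi u = phi s := by
      filter_upwards [Ioo_mem_nhdsGT_of_mem (⟨le_refl (0:ℝ), h0⟩ : (0:ℝ) ∈ Set.Ico 0 s)]
        with u hu
      exact (phi_const u s hu.1 hu.2.le h1).symm
    have h2 : Tendsto (fun _ : ℝ => phi s) (nhdsWithin 0 (Set.Ioi 0)) (nhds 0) :=
      phi_lim.congr' hconst
    have h3 : Tendsto (fun _ : ℝ => phi s) (nhdsWithin (0:ℝ) (Set.Ioi 0)) (nhds (phi s)) :=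
      tendsto_const_nhds
    exact tendsto_nhds_unique h3 h2
  have hW0 := Hfun_pos s h0 h1
  have hW1 := Hfun_lt_one s h0 h1
  have heq : Real.log (Hfun s) - Hfun s = Real.log s - s := by
    have : phi s = Real.log (Hfun s) - Hfun s - Real.log s + s := rfl
    rw [this] at hphis
    linarith
  by_contra hne
  rcases lt_or_gt_of_ne hne with hlt | hgt
  · have := logsub_lt (Hfun s) s hW0 hlt h1.le
    linarith
  · have := logsub_lt s (Hfun s) h0 hgt hW1.le
    linarith


/-- Let `0 < t' < 1 < t` be such that `t − ln t = t' − ln t'`. Then `t·θ(t) = t'`;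
consequently `θ(t) = t'/t`. -/
theorem theta_via_conjugate (t t' : ℝ) (ht'0 : 0 < t') (ht'1 : t' < 1) (ht : 1 < t)
    (h : t - Real.log t = t' - Real.log t') :
    t * theta t = t' ∧ theta t = t' / t := by
  have ht0 : 0 < t := by linarith
  have hx : t * Real.exp (-t) = t' * Real.exp (-t') := by
    have h1 : Real.log t - t = Real.log t' - t' := by linarith
    calc t * Real.exp (-t) = Real.exp (Real.log t) * Real.exp (-t) := by
          rw [Real.exp_log ht0]
      _ = Real.exp (Real.log t - t) := by rw [← Real.exp_add]; ring_nf
      _ = Real.exp (Real.log t' - t') := by rw [h1]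
      _ = Real.exp (Real.log t') * Real.exp (-t') := by rw [← Real.exp_add]; ring_nf
      _ = t' * Real.exp (-t') := by rw [Real.exp_log ht'0]
  have hth : t * theta t = WT (t * Real.exp (-t)) := by
    rw [theta, ← tsum_mul_left, WT]
    apply tsum_congr
    intro k
    have hexp : Real.exp (-t) ^ (k+1) = Real.exp (-t * ((k+1:ℕ):ℝ)) := by
      rw [← Real.exp_nat_mul]
      congr 1
      push_cast
      ring
    rw [cB, mul_pow, ← hexp]
    field_simp
    ring
  have hmain : t * theta t = t' := by
    rw [hth, hx]
    exact Hfun_eq t' ht'0 ht'1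
  refine ⟨hmain, ?_⟩
  rw [eq_div_iff (by linarith : t ≠ 0)]
  linarith [hmain]
end
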